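/- arXiv:2207.01384 — 4 statements merged into one kernel-verified Lean document; each statement's English description precedes it below -/
import Mathlib

section
/- Every non-strict Nash equilibrium z (a Nash equilibrium that is not a strict Nash equilibrium) satisfies: (i) |S(z)| ≥ 2, and (ii) σ_i² = σ_j² for every i and j in S(z). -/
open Matrix Filter Topology Finset

namespace Stmt14

variable {n : ℕ}

def Q (P : Matrix (Fin n) (Fin n) ℝ) (z : Fin n → ℝ) : Matrix (Fin n) (Fin n) ℝ :=
  (1 - Matrix.diagonal z) * P + Matrix.diagonal z

lemma Q_apply (P : Matrix (Fin n) (Fin n) ℝ) (z : Fin n → ℝ) (i j : Fin n) :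
    Q P z i j = (1 - z i) * P i j + (if i = j then z i else 0) := by
  classical
  simp only [Q, Matrix.add_apply, Matrix.mul_apply, Matrix.sub_apply, Matrix.one_apply,
    Matrix.diagonal_apply, ite_mul, sub_mul, one_mul, zero_mul]
  rw [Finset.sum_ite_eq]
  simp [sub_mul]

lemma pow_nonneg_entries {A : Matrix (Fin n) (Fin n) ℝ} (hA : ∀ i j, 0 ≤ A i j) :
    ∀ t i j, 0 ≤ (A ^ t) i j := by
  intro t
  induction t with
  | zero => intro i j; simp [Matrix.one_apply]; positivity
  | succ t ih =>
    intro i j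
    rw [pow_succ, Matrix.mul_apply]
    exact Finset.sum_nonneg fun k _ => mul_nonneg (ih i k) (hA k j)

lemma pow_row_sum {A : Matrix (Fin n) (Fin n) ℝ} (hA : ∀ i, ∑ j, A i j = 1) :
    ∀ t i, ∑ j, (A ^ t) i j = 1 := by
  intro t
  induction t with
  | zero => intro i; simp [Matrix.one_apply]
  | succ t ih =>
    intro i
    simp only [pow_succ, Matrix.mul_apply]
    rw [Finset.sum_comm]
    calc ∑ k, ∑ j, (A ^ t) i k * A k j = ∑ k, (A ^ t) i k * ∑ j, A k j := by
          simp [Finset.mul_sum]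
      _ = 1 := by simp [hA, ih]

lemma Q_nonneg {P : Matrix (Fin n) (Fin n) ℝ} (hPnn : ∀ i j, 0 ≤ P i j)
    {z : Fin n → ℝ} (hz : ∀ i, z i ∈ Set.Icc (0 : ℝ) 1) (i j : Fin n) :
    0 ≤ Q P z i j := by
  rw [Q_apply]
  have h1 := (hz i).1; have h2 := (hz i).2
  have : 0 ≤ (1 - z i) * P i j := mul_nonneg (by linarith) (hPnn i j)
  split <;> linarith

lemma Q_row_sum {P : Matrix (Fin n) (Fin n) ℝ} (hProw : ∀ i, ∑ j, P i j = 1)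
    (z : Fin n → ℝ) (i : Fin n) : ∑ j, Q P z i j = 1 := by
  simp only [Q_apply]
  rw [Finset.sum_add_distrib]
  rw [← Finset.mul_sum, hProw, Finset.sum_ite_eq]
  simp

lemma Q_stub_row {P : Matrix (Fin n) (Fin n) ℝ} {z : Fin n → ℝ} {k : Fin n}
    (hk : z k = 1) (j : Fin n) : Q P z k j = if k = j then 1 else 0 := by
  rw [Q_apply, hk]; simp

lemma Q_pow_stub_row {P : Matrix (Fin n) (Fin n) ℝ} {z : Fin n → ℝ} {k : Fin n}
    (hk : z k = 1) (t : ℕ) (j : Fin n) : ((Q P z) ^ t) k j = if k = j then 1 else 0 := by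
  induction t with
  | zero => simp [Matrix.one_apply]
  | succ t ih =>
    rw [pow_succ', Matrix.mul_apply]
    calc ∑ l, Q P z k l * ((Q P z) ^ t) l j
        = ∑ l, (if k = l then ((Q P z) ^ t) l j else 0) := by
          apply Finset.sum_congr rfl; intro l _; rw [Q_stub_row hk]
          split <;> simp
      _ = _ := by rw [Finset.sum_ite_eq]; simp [ih]


section Hlem

variable {P : Matrix (Fin n) (Fin n) ℝ} {z : Fin n → ℝ} {Hz : Matrix (Fin n) (Fin n) ℝ}

lemma H_nonneg (hPnn : ∀ i j, 0 ≤ P i j) (hz : ∀ i, z i ∈ Set.Icc (0 : ℝ) 1)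
    (hconv : ∀ i j, Tendsto (fun t : ℕ => ((Q P z) ^ t) i j) atTop (𝓝 (Hz i j)))
    (i j : Fin n) : 0 ≤ Hz i j :=
  ge_of_tendsto' (hconv i j) fun t => pow_nonneg_entries (Q_nonneg hPnn hz) t i j

lemma H_row_sum (hProw : ∀ i, ∑ j, P i j = 1)
    (hconv : ∀ i j, Tendsto (fun t : ℕ => ((Q P z) ^ t) i j) atTop (𝓝 (Hz i j)))
    (i : Fin n) : ∑ j, Hz i j = 1 := by
  have h1 : Tendsto (fun t : ℕ => ∑ j, ((Q P z) ^ t) i j) atTop (𝓝 (∑ j, Hz i j)) :=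
    tendsto_finset_sum _ fun j _ => hconv i j
  have h2 : (fun t : ℕ => ∑ j, ((Q P z) ^ t) i j) = fun _ => (1 : ℝ) := by
    funext t; exact pow_row_sum (Q_row_sum hProw z) t i
  rw [h2] at h1
  exact tendsto_nhds_unique h1 tendsto_const_nhds

lemma H_stub_row {k : Fin n} (hk : z k = 1)
    (hconv : ∀ i j, Tendsto (fun t : ℕ => ((Q P z) ^ t) i j) atTop (𝓝 (Hz i j)))
    (j : Fin n) : Hz k j = if k = j then 1 else 0 := by
  have h1 := hconv k j
  have h2 : (fun t : ℕ => ((Q P z) ^ t) k j) = fun _ => if k = j then (1:ℝ) else 0 := by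
    funext t; exact Q_pow_stub_row hk t j
  rw [h2] at h1
  exact tendsto_nhds_unique h1 tendsto_const_nhds

lemma H_eq_QH
    (hconv : ∀ i j, Tendsto (fun t : ℕ => ((Q P z) ^ t) i j) atTop (𝓝 (Hz i j)))
    (i j : Fin n) : Hz i j = ∑ k, Q P z i k * Hz k j := by
  have h1 : Tendsto (fun t : ℕ => ((Q P z) ^ (t + 1)) i j) atTop (𝓝 (Hz i j)) :=
    (hconv i j).comp (tendsto_add_atTop_nat 1)
  have h2 : (fun t : ℕ => ((Q P z) ^ (t + 1)) i j)
      = fun t : ℕ => ∑ k, Q P z i k * ((Q P z) ^ t) k j := by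
    funext t; rw [pow_succ', Matrix.mul_apply]
  rw [h2] at h1
  have h3 : Tendsto (fun t : ℕ => ∑ k, Q P z i k * ((Q P z) ^ t) k j) atTop
      (𝓝 (∑ k, Q P z i k * Hz k j)) :=
    tendsto_finset_sum _ fun k _ => (hconv k j).const_mul _
  exact tendsto_nhds_unique h1 h3

lemma H_eq_HQ
    (hconv : ∀ i j, Tendsto (fun t : ℕ => ((Q P z) ^ t) i j) atTop (𝓝 (Hz i j)))
    (i j : Fin n) : Hz i j = ∑ k, Hz i k * Q P z k j := by
  have h1 : Tendsto (fun t : ℕ => ((Q P z) ^ (t + 1)) i j) atTop (𝓝 (Hz i j)) :=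
    (hconv i j).comp (tendsto_add_atTop_nat 1)
  have h2 : (fun t : ℕ => ((Q P z) ^ (t + 1)) i j)
      = fun t : ℕ => ∑ k, ((Q P z) ^ t) i k * Q P z k j := by
    funext t; rw [pow_succ, Matrix.mul_apply]
  rw [h2] at h1
  have h3 : Tendsto (fun t : ℕ => ∑ k, ((Q P z) ^ t) i k * Q P z k j) atTop
      (𝓝 (∑ k, Hz i k * Q P z k j)) :=
    tendsto_finset_sum _ fun k _ => Tendsto.mul_const _ (hconv i k)
  exact tendsto_nhds_unique h1 h3

end Hlem

lemma Q_reach {P : Matrix (Fin n) (Fin n) ℝ} (hPnn : ∀ i j, 0 ≤ P i j)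
    {z : Fin n → ℝ} (hz : ∀ i, z i ∈ Set.Icc (0 : ℝ) 1)
    {s0 : Fin n} (hs0 : z s0 = 1) :
    ∀ t k, 0 < (P ^ t) k s0 → ∃ s, z s = 1 ∧ 0 < ((Q P z) ^ t) k s := by
  intro t
  induction t with
  | zero =>
    intro k hk
    have : k = s0 := by
      by_contra hne
      simp [Matrix.one_apply, hne] at hk
    exact ⟨s0, hs0, by simp [this, Matrix.one_apply]⟩
  | succ t ih =>
    intro k hk
    by_cases hzk : z k = 1
    · exact ⟨k, hzk, by simp [Q_pow_stub_row hzk]⟩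
    · have hzk' : z k < 1 := lt_of_le_of_ne (hz k).2 hzk
      rw [pow_succ', Matrix.mul_apply] at hk
      obtain ⟨j, hj⟩ : ∃ j, 0 < P k j * (P ^ t) j s0 := by
        by_contra hc
        push_neg at hc
        have : ∑ j, P k j * (P ^ t) j s0 ≤ 0 := Finset.sum_nonpos fun j _ => hc j
        linarith
      have hPkj : 0 < P k j := by
        rcases (mul_pos_iff.mp hj) with ⟨h1, _⟩ | ⟨h1, h2⟩
        · exact h1
        · exact absurd (pow_nonneg_entries hPnn t j s0) (not_le.mpr h2)
      have hPt : 0 < (P ^ t) j s0 := by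
        have := pow_nonneg_entries hPnn t j s0
        nlinarith [hPnn k j]
      obtain ⟨s, hs, hQs⟩ := ih j hPt
      refine ⟨s, hs, ?_⟩
      rw [pow_succ', Matrix.mul_apply]
      have hterm : 0 < Q P z k j * ((Q P z) ^ t) j s := by
        apply mul_pos _ hQs
        rw [Q_apply]
        have : 0 < (1 - z k) * P k j := mul_pos (by linarith) hPkj
        split <;> [linarith [(hz k).1]; linarith]
      have hnn : ∀ l ∈ Finset.univ, (0:ℝ) ≤ Q P z k l * ((Q P z) ^ t) l s :=
        fun l _ => mul_nonneg (Q_nonneg hPnn hz k l) (pow_nonneg_entries (Q_nonneg hPnn hz) t l s)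
      calc (0:ℝ) < Q P z k j * ((Q P z) ^ t) j s := hterm
        _ ≤ _ := Finset.single_le_sum hnn (Finset.mem_univ j)


lemma absorb (hn : 2 ≤ n) {P : Matrix (Fin n) (Fin n) ℝ} (hPnn : ∀ i j, 0 ≤ P i j)
    (hProw : ∀ i, ∑ j, P i j = 1)
    (hPprim : ∃ m : ℕ, ∀ i j, 0 < (P ^ m) i j)
    {z : Fin n → ℝ} (hz : ∀ i, z i ∈ Set.Icc (0 : ℝ) 1)
    (hs : ∃ s, z s = 1) (i : Fin n) :
    Tendsto (fun t : ℕ => ∑ j ∈ Finset.univ.filter (fun j => z j ≠ 1), ((Q P z) ^ t) i j)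
      atTop (𝓝 0) := by
  classical
  haveI : Nonempty (Fin n) := ⟨⟨0, by omega⟩⟩
  obtain ⟨m, hm⟩ := hPprim
  obtain ⟨s0, hs0⟩ := hs
  have hm1 : 1 ≤ m := by
    by_contra hc
    have hm0 : m = 0 := by omega
    have h01 : (⟨0, by omega⟩ : Fin n) ≠ (⟨1, by omega⟩ : Fin n) := by
      simp [Fin.ext_iff]
    have := hm ⟨0, by omega⟩ ⟨1, by omega⟩
    rw [hm0] at this
    simp [Matrix.one_apply, h01] at this
  set N := Finset.univ.filter (fun j => z j ≠ 1) with hN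
  set f : ℕ → ℝ := fun t => ∑ j ∈ N, ((Q P z) ^ t) i j with hf
  have hQnn := Q_nonneg hPnn hz
  have hpnn : ∀ t k j, 0 ≤ ((Q P z) ^ t) k j := pow_nonneg_entries hQnn
  have f_nonneg : ∀ t, 0 ≤ f t := fun t =>
    Finset.sum_nonneg fun j _ => hpnn t i j
  have f_le_one : ∀ t, f t ≤ 1 := by
    intro t
    calc f t ≤ ∑ j, ((Q P z) ^ t) i j :=
          Finset.sum_le_sum_of_subset_of_nonneg (Finset.filter_subset _ _)
            (fun j _ _ => hpnn t i j)
      _ = 1 := pow_row_sum (Q_row_sum hProw z) t i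
  have stubzero : ∀ (v : ℕ) (k : Fin n), z k = 1 → ∑ j ∈ N, ((Q P z) ^ v) k j = 0 := by
    intro v k hk
    apply Finset.sum_eq_zero
    intro j hj
    have hj' : z j ≠ 1 := (Finset.mem_filter.mp hj).2
    rw [Q_pow_stub_row hk]
    have : k ≠ j := fun h => hj' (h ▸ hk)
    simp [this]
  have subrow_le_one : ∀ (v : ℕ) (k : Fin n), ∑ j ∈ N, ((Q P z) ^ v) k j ≤ 1 := by
    intro v k
    calc ∑ j ∈ N, ((Q P z) ^ v) k j ≤ ∑ j, ((Q P z) ^ v) k j :=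
          Finset.sum_le_sum_of_subset_of_nonneg (Finset.filter_subset _ _)
            (fun j _ _ => hpnn v k j)
      _ = 1 := pow_row_sum (Q_row_sum hProw z) v k
  set gQ : Fin n → ℝ := fun k => ∑ j ∈ N, ((Q P z) ^ m) k j with hgQ
  have gQ_nonneg : ∀ k, 0 ≤ gQ k := fun k =>
    Finset.sum_nonneg fun j _ => hpnn m k j
  have gQ_lt1 : ∀ k, gQ k < 1 := by
    intro k
    obtain ⟨s, hsz, hpos⟩ := Q_reach hPnn hz hs0 m k (hm k s0)
    have hsub : N ⊆ Finset.univ.erase s := by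
      intro j hj
      have hj' : z j ≠ 1 := (Finset.mem_filter.mp hj).2
      exact Finset.mem_erase.mpr ⟨fun h => hj' (h ▸ hsz), Finset.mem_univ j⟩
    calc gQ k ≤ ∑ j ∈ Finset.univ.erase s, ((Q P z) ^ m) k j :=
          Finset.sum_le_sum_of_subset_of_nonneg hsub (fun j _ _ => hpnn m k j)
      _ = (∑ j, ((Q P z) ^ m) k j) - ((Q P z) ^ m) k s :=
          Finset.sum_erase_eq_sub (Finset.mem_univ s)
      _ = 1 - ((Q P z) ^ m) k s := by rw [pow_row_sum (Q_row_sum hProw z) m k]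
      _ < 1 := by linarith
  set θ : ℝ := Finset.univ.sup' Finset.univ_nonempty gQ with hθ
  have θ_lt1 : θ < 1 := by
    rw [hθ, Finset.sup'_lt_iff]
    exact fun k _ => gQ_lt1 k
  have θ_nonneg : 0 ≤ θ :=
    le_trans (gQ_nonneg (Classical.arbitrary _))
      (Finset.le_sup' gQ (Finset.mem_univ _))
  have expand : ∀ (u v : ℕ),
      f (u + v) = ∑ k, ((Q P z) ^ u) i k * (∑ j ∈ N, ((Q P z) ^ v) k j) := by
    intro u v
    rw [hf]
    simp only [pow_add, Matrix.mul_apply]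
    rw [Finset.sum_comm]
    simp [Finset.mul_sum]
  have collapse : ∀ (a : Fin n → ℝ) (c : ℝ),
      ∑ k, a k * (if z k = 1 then 0 else c) = c * ∑ k ∈ N, a k := by
    intro a c
    rw [Finset.mul_sum, Finset.sum_filter]
    apply Finset.sum_congr rfl
    intro k _
    by_cases h : z k = 1 <;> simp [h, mul_comm]
  have key1 : ∀ t, f (t + 1) ≤ f t := by
    intro t
    rw [expand t 1]
    have : ∑ k, ((Q P z) ^ t) i k * (∑ j ∈ N, ((Q P z) ^ 1) k j)
        ≤ ∑ k, ((Q P z) ^ t) i k * (if z k = 1 then 0 else 1) := by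
      apply Finset.sum_le_sum
      intro k _
      apply mul_le_mul_of_nonneg_left _ (hpnn t i k)
      have h1 := stubzero 1 k
      have h2 := subrow_le_one 1 k
      rw [pow_one] at h1 h2
      by_cases h : z k = 1
      · simp [h, h1 h]
      · simp [h, h2]
    calc _ ≤ _ := this
      _ = 1 * ∑ k ∈ N, ((Q P z) ^ t) i k := collapse _ 1
      _ = f t := by rw [one_mul]
  have key2 : ∀ t, f (t + m) ≤ θ * f t := by
    intro t
    rw [expand t m]
    have : ∑ k, ((Q P z) ^ t) i k * (∑ j ∈ N, ((Q P z) ^ m) k j)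
        ≤ ∑ k, ((Q P z) ^ t) i k * (if z k = 1 then 0 else θ) := by
      apply Finset.sum_le_sum
      intro k _
      apply mul_le_mul_of_nonneg_left _ (hpnn t i k)
      by_cases h : z k = 1
      · simp [h, stubzero m k h]
      · simp only [h, if_false]
        exact Finset.le_sup' gQ (Finset.mem_univ k)
    calc _ ≤ _ := this
      _ = θ * ∑ k ∈ N, ((Q P z) ^ t) i k := collapse _ θ
      _ = θ * f t := rfl
  have key4 : ∀ r, f (m * r) ≤ θ ^ r := by
    intro r
    induction r with
    | zero => simpa using f_le_one 0
    | succ r ih =>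
      have : m * (r + 1) = m * r + m := by ring
      rw [this, pow_succ]
      calc f (m * r + m) ≤ θ * f (m * r) := key2 (m * r)
        _ ≤ θ * θ ^ r := mul_le_mul_of_nonneg_left ih θ_nonneg
        _ = θ ^ r * θ := mul_comm _ _
  have fanti : Antitone f := antitone_nat_of_succ_le key1
  rw [Metric.tendsto_atTop]
  intro ε hε
  obtain ⟨r, hr⟩ := exists_pow_lt_of_lt_one hε θ_lt1
  refine ⟨m * r, fun t ht => ?_⟩
  rw [Real.dist_eq, sub_zero, abs_of_nonneg (f_nonneg t)]
  calc f t ≤ f (m * r) := fanti ht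
    _ ≤ θ ^ r := key4 r
    _ < ε := hr

lemma H_col_zero (hn : 2 ≤ n) {P : Matrix (Fin n) (Fin n) ℝ} (hPnn : ∀ i j, 0 ≤ P i j)
    (hProw : ∀ i, ∑ j, P i j = 1)
    (hPprim : ∃ m : ℕ, ∀ i j, 0 < (P ^ m) i j)
    {z : Fin n → ℝ} (hz : ∀ i, z i ∈ Set.Icc (0 : ℝ) 1)
    (hs : ∃ s, z s = 1) {Hz : Matrix (Fin n) (Fin n) ℝ}
    (hconv : ∀ i j, Tendsto (fun t : ℕ => ((Q P z) ^ t) i j) atTop (𝓝 (Hz i j)))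
    (i j : Fin n) (hj : z j ≠ 1) : Hz i j = 0 := by
  have h0 : Tendsto (fun t : ℕ => ((Q P z) ^ t) i j) atTop (𝓝 0) := by
    apply squeeze_zero (fun t => pow_nonneg_entries (Q_nonneg hPnn hz) t i j)
      (fun t => ?_) (absorb hn hPnn hProw hPprim hz hs i)
    exact Finset.single_le_sum
      (fun l _ => pow_nonneg_entries (Q_nonneg hPnn hz) t i l)
      (Finset.mem_filter.mpr ⟨Finset.mem_univ j, hj⟩)
  exact tendsto_nhds_unique (hconv i j) h0


lemma H_harmonic_row {P : Matrix (Fin n) (Fin n) ℝ} {z : Fin n → ℝ}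
    (hz : ∀ i, z i ∈ Set.Icc (0 : ℝ) 1) {Hz : Matrix (Fin n) (Fin n) ℝ}
    (hconv : ∀ i j, Tendsto (fun t : ℕ => ((Q P z) ^ t) i j) atTop (𝓝 (Hz i j)))
    {i : Fin n} (hzi : z i ≠ 1) (j : Fin n) :
    Hz i j = ∑ k, P i k * Hz k j := by
  have hzi' : z i < 1 := lt_of_le_of_ne (hz i).2 hzi
  have h := H_eq_QH hconv i j
  have hsplit : ∑ k, Q P z i k * Hz k j
      = (1 - z i) * (∑ k, P i k * Hz k j) + z i * Hz i j := by
    simp only [Q_apply, add_mul, ite_mul, zero_mul]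
    rw [Finset.sum_add_distrib, Finset.sum_ite_eq, Finset.mul_sum]
    simp [mul_assoc]
  rw [hsplit] at h
  have hne : (1 : ℝ) - z i ≠ 0 := by linarith
  have key : (1 - z i) * Hz i j = (1 - z i) * (∑ k, P i k * Hz k j) := by linarith
  exact mul_left_cancel₀ hne key

lemma H_unique (hn : 2 ≤ n) {P : Matrix (Fin n) (Fin n) ℝ} (hPnn : ∀ i j, 0 ≤ P i j)
    (hProw : ∀ i, ∑ j, P i j = 1)
    (hPprim : ∃ m : ℕ, ∀ i j, 0 < (P ^ m) i j)
    {z z' : Fin n → ℝ} (hz : ∀ i, z i ∈ Set.Icc (0 : ℝ) 1)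
    (hz' : ∀ i, z' i ∈ Set.Icc (0 : ℝ) 1)
    (hsame : ∀ k, z k = 1 ↔ z' k = 1) (hs : ∃ s, z s = 1)
    {Hz Hz' : Matrix (Fin n) (Fin n) ℝ}
    (hconv : ∀ i j, Tendsto (fun t : ℕ => ((Q P z) ^ t) i j) atTop (𝓝 (Hz i j)))
    (hconv' : ∀ i j, Tendsto (fun t : ℕ => ((Q P z') ^ t) i j) atTop (𝓝 (Hz' i j)))
    (i j : Fin n) : Hz i j = Hz' i j := by
  classical
  set zS : Fin n → ℝ := fun k => if z k = 1 then 1 else 0 with hzS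
  have hzSb : ∀ i, zS i ∈ Set.Icc (0 : ℝ) 1 := by
    intro i; by_cases h : z i = 1 <;> simp [hzS, h]
  have hzSone : ∀ k, zS k = 1 ↔ z k = 1 := by
    intro k; by_cases h : z k = 1 <;> simp [hzS, h]
  have hsS : ∃ s, zS s = 1 := by
    obtain ⟨s, hs⟩ := hs; exact ⟨s, (hzSone s).mpr hs⟩
  set D : Matrix (Fin n) (Fin n) ℝ := fun a b => Hz a b - Hz' a b with hD
  set N := Finset.univ.filter (fun k => zS k ≠ 1) with hN
  -- bound on D
  have habs : ∀ a b, |D a b| ≤ 2 := by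
    intro a b
    have h1 : 0 ≤ Hz a b := H_nonneg hPnn hz hconv a b
    have h2 : 0 ≤ Hz' a b := H_nonneg hPnn hz' hconv' a b
    have h3 : Hz a b ≤ 1 := by
      have := H_row_sum hProw hconv a
      calc Hz a b ≤ ∑ k, Hz a k :=
        Finset.single_le_sum (fun k _ => H_nonneg hPnn hz hconv a k) (Finset.mem_univ b)
        _ = 1 := this
    have h4 : Hz' a b ≤ 1 := by
      have := H_row_sum hProw hconv' a
      calc Hz' a b ≤ ∑ k, Hz' a k :=
        Finset.single_le_sum (fun k _ => H_nonneg hPnn hz' hconv' a k) (Finset.mem_univ b)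
        _ = 1 := this
    rw [hD]; rw [abs_le]; constructor <;> simp <;> linarith
  have hstubD : ∀ a, z a = 1 → ∀ b, D a b = 0 := by
    intro a ha b
    rw [hD]
    simp only
    rw [H_stub_row ha hconv b, H_stub_row ((hsame a).mp ha) hconv' b, sub_self]
  have hharmD : ∀ a, z a ≠ 1 → ∀ b, D a b = ∑ k, P a k * D k b := by
    intro a ha b
    have h1 := H_harmonic_row hz hconv ha b
    have h2 := H_harmonic_row hz' hconv' (fun h => ha ((hsame a).mpr h)) b
    rw [hD]
    simp only
    rw [h1, h2, ← Finset.sum_sub_distrib]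
    apply Finset.sum_congr rfl
    intro k _
    ring
  -- Q for zS has row = P on non-stubborn
  have hQS : ∀ a, z a ≠ 1 → ∀ k, Q P zS a k = P a k := by
    intro a ha k
    rw [Q_apply]
    have : zS a = 0 := by simp [hzS, ha]
    rw [this]
    simp
  have claimA : ∀ t a b, |D a b| ≤ (∑ k ∈ N, ((Q P zS) ^ t) a k) * 2 := by
    intro t
    induction t with
    | zero =>
      intro a b
      by_cases ha : z a = 1
      · rw [hstubD a ha b]
        simp only [abs_zero]
        apply mul_nonneg _ (by norm_num)
        exact Finset.sum_nonneg fun k _ => pow_nonneg_entries (Q_nonneg hPnn hzSb) 0 a k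
      · have haN : a ∈ N := Finset.mem_filter.mpr ⟨Finset.mem_univ a, fun h => ha ((hzSone a).mp h)⟩
        have : (∑ k ∈ N, ((Q P zS) ^ 0) a k) = 1 := by
          rw [pow_zero]
          rw [Finset.sum_eq_single_of_mem a haN]
          · simp [Matrix.one_apply]
          · intro k _ hk; simp [Matrix.one_apply, (Ne.symm hk)]
        rw [this, one_mul]
        exact habs a b
    | succ t ih =>
      intro a b
      by_cases ha : z a = 1
      · rw [hstubD a ha b]
        simp only [abs_zero]
        apply mul_nonneg _ (by norm_num)
        exact Finset.sum_nonneg fun k _ => pow_nonneg_entries (Q_nonneg hPnn hzSb) _ a k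
      · rw [hharmD a ha b]
        calc |∑ k, P a k * D k b| ≤ ∑ k, |P a k * D k b| := Finset.abs_sum_le_sum_abs _ _
          _ = ∑ k, P a k * |D k b| := by
              apply Finset.sum_congr rfl; intro k _
              rw [abs_mul, abs_of_nonneg (hPnn a k)]
          _ ≤ ∑ k, P a k * ((∑ k' ∈ N, ((Q P zS) ^ t) k k') * 2) := by
              apply Finset.sum_le_sum; intro k _
              exact mul_le_mul_of_nonneg_left (ih k b) (hPnn a k)
          _ = ∑ k, ∑ k' ∈ N, P a k * ((Q P zS) ^ t) k k' * 2 := by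
              apply Finset.sum_congr rfl; intro k _
              rw [Finset.sum_mul, Finset.mul_sum]
              apply Finset.sum_congr rfl; intro k' _; ring
          _ = ∑ k' ∈ N, ∑ k, P a k * ((Q P zS) ^ t) k k' * 2 := Finset.sum_comm
          _ = ∑ k' ∈ N, (∑ k, P a k * ((Q P zS) ^ t) k k') * 2 := by
              apply Finset.sum_congr rfl; intro k' _; rw [Finset.sum_mul]
          _ = (∑ k' ∈ N, ((Q P zS) ^ (t+1)) a k') * 2 := by
              rw [Finset.sum_mul]
              apply Finset.sum_congr rfl; intro k' _
              congr 1
              rw [pow_succ', Matrix.mul_apply]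
              apply Finset.sum_congr rfl; intro k _
              rw [hQS a ha k]
  have hzero : |D i j| ≤ 0 := by
    have htend : Tendsto (fun t : ℕ => (∑ k ∈ N, ((Q P zS) ^ t) i k) * 2) atTop (𝓝 0) := by
      have := (absorb hn hPnn hProw hPprim hzSb hsS i).mul_const 2
      simpa using this
    exact ge_of_tendsto' htend fun t => claimA t i j
  have := abs_nonneg (D i j)
  have hD0 : D i j = 0 := abs_eq_zero.mp (le_antisymm hzero this)
  have : Hz i j - Hz' i j = 0 := hD0
  linarith


lemma H_rank_one (hn : 2 ≤ n) {P : Matrix (Fin n) (Fin n) ℝ} (hPnn : ∀ i j, 0 ≤ P i j)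
    (hProw : ∀ i, ∑ j, P i j = 1)
    (hPprim : ∃ m : ℕ, ∀ i j, 0 < (P ^ m) i j)
    {π : Fin n → ℝ} (hπpos : ∀ i, 0 < π i)
    (hπinv : ∀ j, ∑ i, π i * P i j = π j)
    {z : Fin n → ℝ} (hz : ∀ i, z i ∈ Set.Icc (0 : ℝ) 1) (hns : ∀ i, z i ≠ 1)
    {Hz : Matrix (Fin n) (Fin n) ℝ}
    (hconv : ∀ i j, Tendsto (fun t : ℕ => ((Q P z) ^ t) i j) atTop (𝓝 (Hz i j)))
    (i j : Fin n) :
    Hz i j = (π j / (1 - z j)) / (∑ k, π k / (1 - z k)) := by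
  classical
  haveI : Nonempty (Fin n) := ⟨⟨0, by omega⟩⟩
  obtain ⟨m, hm⟩ := hPprim
  have hzlt : ∀ i, z i < 1 := fun i => lt_of_le_of_ne (hz i).2 (hns i)
  have hharm : ∀ a b, Hz a b = ∑ k, P a k * Hz k b :=
    fun a b => H_harmonic_row hz hconv (hns a) b
  have hiter : ∀ t a b, Hz a b = ∑ k, (P ^ t) a k * Hz k b := by
    intro t
    induction t with
    | zero => intro a b; simp [Matrix.one_apply]
    | succ t ih =>
      intro a b
      rw [hharm a b]
      calc ∑ k, P a k * Hz k b = ∑ k, P a k * ∑ l, (P ^ t) k l * Hz l b :=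
            Finset.sum_congr rfl fun k _ => by rw [← ih k b]
        _ = ∑ k, ∑ l, P a k * ((P ^ t) k l * Hz l b) :=
            Finset.sum_congr rfl fun k _ => Finset.mul_sum _ _ _
        _ = ∑ l, ∑ k, P a k * ((P ^ t) k l * Hz l b) := Finset.sum_comm
        _ = ∑ l, (P ^ (t+1)) a l * Hz l b := by
            apply Finset.sum_congr rfl; intro l _
            rw [pow_succ', Matrix.mul_apply, Finset.sum_mul]
            apply Finset.sum_congr rfl; intro k _; ring
  -- columns of Hz are constant
  have hconst : ∀ (b a a' : Fin n), Hz a b = Hz a' b := by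
    intro b
    obtain ⟨a0, _, hmax⟩ := Finset.exists_max_image Finset.univ (fun c => Hz c b)
      Finset.univ_nonempty
    have hALL : ∀ c, Hz c b = Hz a0 b := by
      intro c
      have h0 : ∑ k, (P ^ m) a0 k * (Hz a0 b - Hz k b) = 0 := by
        have e1 : ∑ k, (P ^ m) a0 k * (Hz a0 b - Hz k b)
            = (∑ k, (P ^ m) a0 k) * Hz a0 b - ∑ k, (P ^ m) a0 k * Hz k b := by
          rw [Finset.sum_mul, ← Finset.sum_sub_distrib]
          apply Finset.sum_congr rfl; intro k _; ring
        rw [e1, pow_row_sum hProw m a0, ← hiter m a0 b]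
        ring
      have hnn : ∀ k ∈ Finset.univ, 0 ≤ (P ^ m) a0 k * (Hz a0 b - Hz k b) :=
        fun k _ => mul_nonneg (le_of_lt (hm a0 k))
          (sub_nonneg.mpr (hmax k (Finset.mem_univ k)))
      have := (Finset.sum_eq_zero_iff_of_nonneg hnn).mp h0 c (Finset.mem_univ c)
      have hpos := hm a0 c
      have : Hz a0 b - Hz c b = 0 := by
        rcases mul_eq_zero.mp this with h | h
        · exact absurd h (ne_of_gt hpos)
        · exact h
      linarith
    intro a a'
    rw [hALL a, hALL a']
  set i0 : Fin n := Classical.arbitrary _ with hi0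
  set w : Fin n → ℝ := fun b => Hz i0 b with hwdef
  have hw_nonneg : ∀ b, 0 ≤ w b := fun b => H_nonneg hPnn hz hconv i0 b
  have hw_sum : ∑ b, w b = 1 := H_row_sum hProw hconv i0
  set u : Fin n → ℝ := fun k => (1 - z k) * w k with hudef
  have hinv : ∀ b, ∑ k, u k * P k b = u b := by
    intro b
    have h := H_eq_HQ hconv i0 b
    have e : ∑ k, Hz i0 k * Q P z k b
        = (∑ k, u k * P k b) + w b * z b := by
      simp only [Q_apply, mul_add]
      rw [Finset.sum_add_distrib]
      congr 1
      · apply Finset.sum_congr rfl; intro k _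
        simp only [hudef, hwdef]; ring
      · calc ∑ k, Hz i0 k * (if k = b then z k else 0)
            = ∑ k, (if k = b then Hz i0 k * z k else 0) := by
              apply Finset.sum_congr rfl; intro k _
              split <;> simp
          _ = Hz i0 b * z b := by rw [Finset.sum_ite_eq']; simp
    rw [e] at h
    have h2 : w b = (∑ k, u k * P k b) + w b * z b := h
    have h3 : ∑ k, u k * P k b = (1 - z b) * w b := by linarith
    rw [h3]
  have giter : ∀ (v : Fin n → ℝ), (∀ b, ∑ k, v k * P k b = v b) →
      ∀ (t : ℕ) (b : Fin n), ∑ k, v k * (P ^ t) k b = v b := by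
    intro v hv t
    induction t with
    | zero =>
      intro b
      calc ∑ k, v k * (P ^ 0) k b = ∑ k, (if k = b then v k else 0) := by
            apply Finset.sum_congr rfl; intro k _
            by_cases h : k = b <;> simp [Matrix.one_apply, h]
        _ = v b := by rw [Finset.sum_ite_eq']; simp
    | succ t ih =>
      intro b
      calc ∑ k, v k * (P ^ (t+1)) k b
          = ∑ k, ∑ l, v k * ((P ^ t) k l * P l b) := by
            apply Finset.sum_congr rfl; intro k _
            rw [pow_succ, Matrix.mul_apply, Finset.mul_sum]
        _ = ∑ l, ∑ k, v k * ((P ^ t) k l * P l b) := Finset.sum_comm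
        _ = ∑ l, (∑ k, v k * (P ^ t) k l) * P l b := by
            apply Finset.sum_congr rfl; intro l _
            rw [Finset.sum_mul]
            apply Finset.sum_congr rfl; intro k _; ring
        _ = ∑ l, v l * P l b := by
            apply Finset.sum_congr rfl; intro l _; rw [ih l]
        _ = v b := hv b
  have hu_nonneg : ∀ k, 0 ≤ u k := fun k =>
    mul_nonneg (by linarith [hzlt k]) (hw_nonneg k)
  have hu_ex : ∃ k, 0 < u k := by
    by_contra hc
    push_neg at hc
    have hall : ∀ k, u k = 0 := fun k => le_antisymm (hc k) (hu_nonneg k)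
    have : ∀ k, w k = 0 := by
      intro k
      have := hall k
      rw [hudef] at this
      have h1 : (0:ℝ) < 1 - z k := by linarith [hzlt k]
      rcases mul_eq_zero.mp this with h | h
      · linarith
      · exact h
    rw [Finset.sum_congr rfl (fun k _ => this k)] at hw_sum
    simp at hw_sum
  have hu_pos : ∀ b, 0 < u b := by
    intro b
    obtain ⟨k0, hk0⟩ := hu_ex
    have := giter u hinv m b
    have hterm : 0 < u k0 * (P ^ m) k0 b := mul_pos hk0 (hm k0 b)
    have hnn : ∀ k ∈ Finset.univ, (0:ℝ) ≤ u k * (P ^ m) k b :=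
      fun k _ => mul_nonneg (hu_nonneg k) (le_of_lt (hm k b))
    calc (0:ℝ) < u k0 * (P ^ m) k0 b := hterm
      _ ≤ ∑ k, u k * (P ^ m) k b := Finset.single_le_sum hnn (Finset.mem_univ k0)
      _ = u b := this
  obtain ⟨j0, _, hj0⟩ := Finset.exists_min_image Finset.univ (fun k => u k / π k)
    Finset.univ_nonempty
  set lam : ℝ := u j0 / π j0 with hlamdef
  have hlam_pos : 0 < lam := div_pos (hu_pos j0) (hπpos j0)
  set v : Fin n → ℝ := fun k => u k - lam * π k with hvdef
  have hv_nonneg : ∀ k, 0 ≤ v k := by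
    intro k
    have h1 : lam ≤ u k / π k := hj0 k (Finset.mem_univ k)
    have h2 : lam * π k ≤ u k := (le_div_iff₀ (hπpos k)).mp h1
    rw [hvdef]; simp; linarith
  have hv_inv : ∀ b, ∑ k, v k * P k b = v b := by
    intro b
    have e : ∑ k, v k * P k b = ∑ k, u k * P k b - lam * ∑ k, π k * P k b := by
      rw [Finset.mul_sum, ← Finset.sum_sub_distrib]
      apply Finset.sum_congr rfl; intro k _
      rw [hvdef]; ring
    rw [e, hinv b, hπinv b, hvdef]
  have hv_j0 : v j0 = 0 := by
    show u j0 - lam * π j0 = 0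
    rw [hlamdef, div_mul_cancel₀ _ (ne_of_gt (hπpos j0)), sub_self]
  have hv_zero : ∀ k, v k = 0 := by
    intro k
    have h0 : ∑ l, v l * (P ^ m) l j0 = 0 := by rw [giter v hv_inv m j0, hv_j0]
    have hnn : ∀ l ∈ Finset.univ, (0:ℝ) ≤ v l * (P ^ m) l j0 :=
      fun l _ => mul_nonneg (hv_nonneg l) (le_of_lt (hm l j0))
    have := (Finset.sum_eq_zero_iff_of_nonneg hnn).mp h0 k (Finset.mem_univ k)
    rcases mul_eq_zero.mp this with h | h
    · exact h
    · exact absurd h (ne_of_gt (hm k j0))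
  have hu_eq : ∀ k, u k = lam * π k := by
    intro k
    have := hv_zero k
    rw [hvdef] at this
    simp at this
    linarith
  have hw_eq : ∀ k, w k = lam * (π k / (1 - z k)) := by
    intro k
    have h1 : (0:ℝ) < 1 - z k := by linarith [hzlt k]
    have h2 : (1 - z k) * w k = lam * π k := hu_eq k
    have h3 : w k = lam * π k / (1 - z k) := by
      rw [eq_div_iff (ne_of_gt h1)]
      linarith [h2]
    rw [h3, mul_div_assoc]
  set B : ℝ := ∑ k, π k / (1 - z k) with hBdef
  have hB_pos : 0 < B := by
    rw [hBdef]
    apply Finset.sum_pos _ Finset.univ_nonempty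
    intro k _
    exact div_pos (hπpos k) (by linarith [hzlt k])
  have hlamB : lam * B = 1 := by
    have hsum : ∑ k, w k = ∑ k, lam * (π k / (1 - z k)) :=
      Finset.sum_congr rfl fun k _ => hw_eq k
    rw [hw_sum] at hsum
    rw [hBdef, Finset.mul_sum, ← hsum]
  have : Hz i j = w j := hconst j i i0
  rw [this, hw_eq j]
  rw [eq_div_iff (ne_of_gt hB_pos)]
  linear_combination (π j / (1 - z j)) * hlamB


lemma path_of_pow_pos {A : Matrix (Fin n) (Fin n) ℝ} (hnn : ∀ i j, 0 ≤ A i j) :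
    ∀ (t : ℕ) (a b : Fin n), 0 < (A ^ t) a b →
      ∃ v : ℕ → Fin n, v 0 = a ∧ v t = b ∧ ∀ u < t, 0 < A (v u) (v (u + 1)) := by
  intro t
  induction t with
  | zero =>
    intro a b h
    have hab : a = b := by
      by_contra hne
      simp [Matrix.one_apply, hne] at h
    exact ⟨fun _ => a, rfl, hab ▸ rfl, fun u hu => absurd hu (Nat.not_lt_zero u)⟩
  | succ t ih =>
    intro a b h
    rw [pow_succ, Matrix.mul_apply] at h
    obtain ⟨l, hl⟩ : ∃ l, 0 < (A ^ t) a l * A l b := by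
      by_contra hc
      push_neg at hc
      have : ∑ l, (A ^ t) a l * A l b ≤ 0 := Finset.sum_nonpos fun l _ => hc l
      linarith
    have h1 : 0 < (A ^ t) a l := by
      rcases mul_pos_iff.mp hl with ⟨ha, _⟩ | ⟨_, hb⟩
      · exact ha
      · exact absurd (hnn l b) (not_le.mpr hb)
    have h2 : 0 < A l b := by
      have := pow_nonneg_entries hnn t a l
      nlinarith
    obtain ⟨v, hv0, hvt, hve⟩ := ih a l h1
    refine ⟨fun u => if u ≤ t then v u else b, by simp [hv0], by simp, ?_⟩
    intro u hu
    rcases Nat.lt_or_ge u t with h3 | h3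
    · have e1 : u ≤ t := le_of_lt h3
      have e2 : u + 1 ≤ t := h3
      simp only [e1, e2, if_true]
      exact hve u h3
    · have e0 : u = t := by omega
      have e1 : u ≤ t := by omega
      have e2 : ¬ (u + 1 ≤ t) := by omega
      simp only [e1, e2, if_true, if_false]
      rw [e0, hvt]
      exact h2

lemma exists_big (πi σ A C : ℝ) (hπ : 0 < πi) (hσ : 0 < σ) (hA : 0 < A) (hC : 0 < C) :
    ∃ b, πi ≤ b ∧ (C + b ^ 2 * σ) / (A + b) ^ 2 < σ := by
  refine ⟨πi + (C + 1) / (2 * A * σ), le_add_of_nonneg_right (by positivity), ?_⟩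
  set D := (C + 1) / (2 * A * σ) with hD
  have hDpos : 0 < D := by positivity
  have hdc : D * (2 * A * σ) = C + 1 := div_mul_cancel₀ _ (by positivity)
  rw [div_lt_iff₀ (by positivity)]
  nlinarith [hdc, mul_pos hA hσ, mul_pos (mul_pos hA hσ) hπ, sq_nonneg A,
    mul_pos hσ (mul_pos hA hA)]

lemma reparam (πi b : ℝ) (hπ : 0 < πi) (hb : πi ≤ b) :
    0 ≤ 1 - πi / b ∧ 1 - πi / b < 1 ∧ πi / (1 - (1 - πi / b)) = b := by
  have hbpos : 0 < b := lt_of_lt_of_le hπ hb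
  have h1 : πi / b ≤ 1 := (div_le_one hbpos).mpr hb
  have h2 : 0 < πi / b := div_pos hπ hbpos
  refine ⟨by linarith, by linarith, ?_⟩
  have e : 1 - (1 - πi / b) = πi / b := by ring
  rw [e, div_div_eq_mul_div, mul_comm, mul_div_assoc, div_self (ne_of_gt hπ), mul_one]

end Stmt14

set_option maxHeartbeats 2000000 in
open Stmt14 in
/-- Every non-strict Nash equilibrium `z` (a Nash equilibrium that is
not a strict Nash equilibrium) satisfies (i) `|S(z)| ≥ 2` and (ii) `σ_i² = σ_j²`
for every `i, j ∈ S(z) = {i : z_i = 1}`. -/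
theorem stmt_14 (n : ℕ) (hn : 2 ≤ n)
    (P : Matrix (Fin n) (Fin n) ℝ)
    (hPnn : ∀ i j, 0 ≤ P i j)
    (hProw : ∀ i, ∑ j, P i j = 1)
    (hPdiag : ∀ i, P i i = 0)
    (hPprim : ∃ m : ℕ, ∀ i j, 0 < (P ^ m) i j)
    (π : Fin n → ℝ)
    (hπpos : ∀ i, 0 < π i)
    (hπsum : ∑ i, π i = 1)
    (hπinv : ∀ j, ∑ i, π i * P i j = π j)
    (σ2 : Fin n → ℝ) (hσ : ∀ i, 0 < σ2 i)
    (H : (Fin n → ℝ) → Matrix (Fin n) (Fin n) ℝ)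
    (hH : ∀ z : Fin n → ℝ, (∀ i, z i ∈ Set.Icc (0 : ℝ) 1) →
      ∀ i j, Tendsto
        (fun t : ℕ => (((1 - Matrix.diagonal z) * P + Matrix.diagonal z) ^ t) i j)
        atTop (𝓝 (H z i j)))
    (z : Fin n → ℝ) (hz : ∀ i, z i ∈ Set.Icc (0 : ℝ) 1)
    (hNE : ∀ i : Fin n, ∀ t ∈ Set.Icc (0 : ℝ) 1,
      ∑ j, (H z i j) ^ 2 * σ2 j ≤
        ∑ j, (H (Function.update z i t) i j) ^ 2 * σ2 j)
    (hnotstrict : ¬ ∀ i : Fin n, ∀ t ∈ Set.Icc (0 : ℝ) 1, t ≠ z i →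
      ∑ j, (H z i j) ^ 2 * σ2 j <
        ∑ j, (H (Function.update z i t) i j) ^ 2 * σ2 j) :
    2 ≤ (Finset.univ.filter fun i => z i = 1).card ∧
    (∀ i j, z i = 1 → z j = 1 → σ2 i = σ2 j) := by
  classical
  haveI : Nonempty (Fin n) := ⟨⟨0, by omega⟩⟩
  haveI : Nontrivial (Fin n) := ⟨⟨0, by omega⟩, ⟨1, by omega⟩, by simp [Fin.ext_iff]⟩
  have hconv : ∀ z' : Fin n → ℝ, (∀ i, z' i ∈ Set.Icc (0:ℝ) 1) →
      ∀ i j, Tendsto (fun t : ℕ => ((Stmt14.Q P z') ^ t) i j) atTop (𝓝 (H z' i j)) := hH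
  push_neg at hnotstrict
  obtain ⟨i0, t0, ht0m, ht0ne, hge0⟩ := hnotstrict
  have hupd : ∀ (i : Fin n) (t : ℝ), 0 ≤ t → t ≤ 1 →
      ∀ k, Function.update z i t k ∈ Set.Icc (0:ℝ) 1 := by
    intro i t h0 h1 k
    rcases eq_or_ne k i with h | h
    · subst h; rw [Function.update_self]; exact ⟨h0, h1⟩
    · rw [Function.update_of_ne h]; exact hz k
  have stubcost : ∀ (y' : Fin n → ℝ), (∀ i, y' i ∈ Set.Icc (0:ℝ) 1) →
      ∀ (a : Fin n), y' a = 1 → ∑ j, (H y' a j) ^ 2 * σ2 j = σ2 a := by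
    intro y' hy' a ha
    have hrow := H_stub_row ha (hconv y' hy')
    calc ∑ j, (H y' a j) ^ 2 * σ2 j = ∑ j, (if a = j then σ2 j else 0) := by
          apply Finset.sum_congr rfl; intro j _
          rw [hrow j]
          split <;> norm_num
      _ = σ2 a := by rw [Finset.sum_ite_eq]; simp
  have cost_eq : ∀ (i : Fin n), (∀ j, j ≠ i → z j ≠ 1) → ∀ t : ℝ, 0 ≤ t → t < 1 →
      ∑ j, (H (Function.update z i t) i j) ^ 2 * σ2 j =
        ((∑ k ∈ Finset.univ.erase i, (π k / (1 - z k)) ^ 2 * σ2 k)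
            + (π i / (1 - t)) ^ 2 * σ2 i) /
        ((∑ k ∈ Finset.univ.erase i, π k / (1 - z k)) + π i / (1 - t)) ^ 2 := by
    intro i hoth t h0 h1
    set y := Function.update z i t with hy
    have hyb : ∀ k, y k ∈ Set.Icc (0:ℝ) 1 := hupd i t h0 (le_of_lt h1)
    have hyns : ∀ k, y k ≠ 1 := by
      intro k
      rcases eq_or_ne k i with h | h
      · subst h; rw [hy, Function.update_self]; exact ne_of_lt h1
      · rw [hy, Function.update_of_ne h]; exact hoth k h
    have hw := H_rank_one hn hPnn hProw hPprim hπpos hπinv hyb hyns (hconv y hyb)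
    have hsplitB : ∑ k, π k / (1 - y k)
        = (∑ k ∈ Finset.univ.erase i, π k / (1 - z k)) + π i / (1 - t) := by
      rw [← Finset.sum_erase_add _ _ (Finset.mem_univ i)]
      congr 1
      · apply Finset.sum_congr rfl; intro k hk
        rw [hy, Function.update_of_ne (Finset.mem_erase.mp hk).1]
      · rw [hy, Function.update_self]
    have hsplitC : ∑ k, (π k / (1 - y k)) ^ 2 * σ2 k
        = (∑ k ∈ Finset.univ.erase i, (π k / (1 - z k)) ^ 2 * σ2 k)
            + (π i / (1 - t)) ^ 2 * σ2 i := by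
      rw [← Finset.sum_erase_add _ _ (Finset.mem_univ i)]
      congr 1
      · apply Finset.sum_congr rfl; intro k hk
        rw [hy, Function.update_of_ne (Finset.mem_erase.mp hk).1]
      · rw [hy, Function.update_self]
    calc ∑ j, (H y i j) ^ 2 * σ2 j
        = ∑ j, ((π j / (1 - y j)) ^ 2 * σ2 j) / (∑ k, π k / (1 - y k)) ^ 2 := by
          apply Finset.sum_congr rfl; intro j _
          rw [hw i j, div_pow]
          ring
      _ = (∑ j, (π j / (1 - y j)) ^ 2 * σ2 j) / (∑ k, π k / (1 - y k)) ^ 2 :=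
          (Finset.sum_div _ _ _).symm
      _ = _ := by rw [hsplitC, hsplitB]
  have hAC : ∀ i : Fin n, (∀ j, j ≠ i → z j ≠ 1) →
      0 < (∑ k ∈ Finset.univ.erase i, π k / (1 - z k)) ∧
      0 < (∑ k ∈ Finset.univ.erase i, (π k / (1 - z k)) ^ 2 * σ2 k) := by
    intro i hoth
    obtain ⟨j', hj'⟩ := exists_ne i
    have hmem : j' ∈ Finset.univ.erase i := Finset.mem_erase.mpr ⟨hj', Finset.mem_univ _⟩
    have hterm : ∀ k ∈ Finset.univ.erase i, 0 < π k / (1 - z k) := by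
      intro k hk
      have hkne := (Finset.mem_erase.mp hk).1
      have : z k < 1 := lt_of_le_of_ne (hz k).2 (hoth k hkne)
      exact div_pos (hπpos k) (by linarith)
    refine ⟨Finset.sum_pos hterm ⟨j', hmem⟩, Finset.sum_pos ?_ ⟨j', hmem⟩⟩
    intro k hk
    exact mul_pos (pow_pos (hterm k hk) 2) (hσ k)
  -- PART 1 : no stubborn agent is impossible
  have part1 : ¬ (∀ i, z i ≠ 1) := by
    intro hS0
    have hzlt : ∀ k, z k < 1 := fun k => lt_of_le_of_ne (hz k).2 (hS0 k)
    set A := ∑ k ∈ Finset.univ.erase i0, π k / (1 - z k) with hA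
    set C := ∑ k ∈ Finset.univ.erase i0, (π k / (1 - z k)) ^ 2 * σ2 k with hC
    set b1 := π i0 / (1 - z i0) with hb1
    set G := ∑ j, (H z i0 j) ^ 2 * σ2 j with hG
    obtain ⟨hApos0, hCpos0⟩ := hAC i0 (fun j _ => hS0 j)
    have hApos : 0 < A := by rw [hA]; exact hApos0
    have hCpos : 0 < C := by rw [hC]; exact hCpos0
    have hvz : G = (C + b1 ^ 2 * σ2 i0) / (A + b1) ^ 2 := by
      rw [hG, hA, hC, hb1]
      have := cost_eq i0 (fun j _ => hS0 j) (z i0) (hz i0).1 (hzlt i0)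
      rw [Function.update_eq_self] at this
      exact this
    have hb1ge : π i0 ≤ b1 := by
      rw [hb1, le_div_iff₀ (by linarith [hzlt i0] : (0:ℝ) < 1 - z i0)]
      nlinarith [(hz i0).1, hπpos i0]
    have hNEb : ∀ b, π i0 ≤ b → G ≤ (C + b ^ 2 * σ2 i0) / (A + b) ^ 2 := by
      intro b hb
      rw [hG, hA, hC]
      obtain ⟨h0t, ht1, hbt⟩ := reparam (π i0) b (hπpos i0) hb
      have hne := hNE i0 (1 - π i0 / b) ⟨h0t, le_of_lt ht1⟩
      rw [cost_eq i0 (fun j _ => hS0 j) _ h0t ht1, hbt] at hne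
      exact hne
    have hGlt : G < σ2 i0 := by
      obtain ⟨b, hble, hblt⟩ := exists_big (π i0) (σ2 i0) A C (hπpos i0) (hσ i0) hApos hCpos
      exact lt_of_le_of_lt (hNEb b hble) hblt
    clear_value A C b1 G
    rcases eq_or_lt_of_le ht0m.2 with ht1 | ht1
    · -- t0 = 1 : deviation cost is σ2 i0
      have hy1 : Function.update z i0 t0 i0 = 1 := by rw [ht1, Function.update_self]
      have hc1 := stubcost (Function.update z i0 t0)
        (hupd i0 t0 ht0m.1 ht0m.2) i0 hy1
      rw [hc1] at hge0
      linarith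
    · -- t0 < 1
      set b2 := π i0 / (1 - t0) with hb2
      have hb2ge : π i0 ≤ b2 := by
        rw [hb2, le_div_iff₀ (by linarith : (0:ℝ) < 1 - t0)]
        nlinarith [ht0m.1, hπpos i0]
      have hvt0 : ∑ j, (H (Function.update z i0 t0) i0 j) ^ 2 * σ2 j
          = (C + b2 ^ 2 * σ2 i0) / (A + b2) ^ 2 := by
        rw [hC, hA, hb2]
        exact cost_eq i0 (fun j _ => hS0 j) t0 ht0m.1 ht1
      clear_value b2
      have hle := hNE i0 t0 ht0m
      rw [hvt0] at hle hge0
      rw [← hG] at hle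
      have hGb2 : G = (C + b2 ^ 2 * σ2 i0) / (A + b2) ^ 2 := le_antisymm hle hge0
      have hb1pos : 0 < b1 := lt_of_lt_of_le (hπpos i0) hb1ge
      have hb2pos : 0 < b2 := lt_of_lt_of_le (hπpos i0) hb2ge
      have hne12 : b1 ≠ b2 := by
        intro hcon
        apply ht0ne
        rw [hb1, hb2] at hcon
        have h1 : (1:ℝ) - z i0 ≠ 0 := by have := hzlt i0; intro h; linarith [sub_eq_zero.mp h]
        have h2 : (1:ℝ) - t0 ≠ 0 := by intro h; nlinarith [sub_eq_zero.mp h]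
        rw [div_eq_div_iff h1 h2] at hcon
        have h3 : (1:ℝ) - t0 = 1 - z i0 := mul_left_cancel₀ (ne_of_gt (hπpos i0)) hcon
        linarith
      have e1 : G * (A + b1) ^ 2 = C + b1 ^ 2 * σ2 i0 := by
        rw [hvz, div_mul_cancel₀]
        exact pow_ne_zero 2 (by positivity)
      have e2 : G * (A + b2) ^ 2 = C + b2 ^ 2 * σ2 i0 := by
        rw [hGb2, div_mul_cancel₀]
        exact pow_ne_zero 2 (by positivity)
      have e3 : G * (A + (b1 + b2) / 2) ^ 2 ≤ C + ((b1 + b2) / 2) ^ 2 * σ2 i0 := by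
        have hle2 := hNEb ((b1 + b2) / 2) (by linarith)
        rw [le_div_iff₀ (by positivity)] at hle2
        linarith
      have hd : 0 < (b1 - b2) ^ 2 :=
        lt_of_le_of_ne (sq_nonneg _) (Ne.symm (pow_ne_zero 2 (sub_ne_zero.mpr hne12)))
      have hkey : 0 < (σ2 i0 - G) * (b1 - b2) ^ 2 := mul_pos (by linarith) hd
      nlinarith [e1, e2, e3, hkey]
  -- PART 2 : exactly one stubborn agent is impossible
  have part2 : ¬ (∃ k, z k = 1 ∧ ∀ j, j ≠ k → z j ≠ 1) := by
    rintro ⟨k, hk, hoth⟩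
    obtain ⟨hApos, hCpos⟩ := hAC k hoth
    obtain ⟨b, hble, hblt⟩ := exists_big (π k) (σ2 k)
      (∑ j ∈ Finset.univ.erase k, π j / (1 - z j))
      (∑ j ∈ Finset.univ.erase k, (π j / (1 - z j)) ^ 2 * σ2 j)
      (hπpos k) (hσ k) hApos hCpos
    obtain ⟨h0t, ht1, hbt⟩ := reparam (π k) b (hπpos k) hble
    have hne := hNE k (1 - π k / b) ⟨h0t, le_of_lt ht1⟩
    rw [cost_eq k hoth _ h0t ht1, hbt] at hne
    rw [stubcost z hz k hk] at hne
    linarith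
  -- conclude cardinality
  have hSne0 : ∃ i, z i = 1 := by
    by_contra h
    push_neg at h
    exact part1 h
  have hcard : 2 ≤ (Finset.univ.filter fun i => z i = 1).card := by
    by_contra h
    push_neg at h
    interval_cases hcc : (Finset.univ.filter fun i => z i = 1).card
    · obtain ⟨s, hs⟩ := hSne0
      have : s ∈ Finset.univ.filter fun i => z i = 1 :=
        Finset.mem_filter.mpr ⟨Finset.mem_univ s, hs⟩
      rw [Finset.card_eq_zero.mp hcc] at this
      simp at this
    · obtain ⟨k, hkk⟩ := Finset.card_eq_one.mp hcc
      apply part2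
      refine ⟨k, ?_, ?_⟩
      · have : k ∈ Finset.univ.filter fun i => z i = 1 := by rw [hkk]; simp
        exact (Finset.mem_filter.mp this).2
      · intro j hj hzj
        have : j ∈ Finset.univ.filter fun i => z i = 1 :=
          Finset.mem_filter.mpr ⟨Finset.mem_univ j, hzj⟩
        rw [hkk] at this
        simp at this
        exact hj this
  refine ⟨hcard, ?_⟩
  -- PART 3 : all stubborn agents have the same variance
  have hSnonempty : (Finset.univ.filter fun i => z i = 1).Nonempty := by
    obtain ⟨s, hs⟩ := hSne0
    exact ⟨s, Finset.mem_filter.mpr ⟨Finset.mem_univ s, hs⟩⟩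
  obtain ⟨imax, himaxS, hmaxall⟩ :=
    Finset.exists_max_image (Finset.univ.filter fun i => z i = 1) σ2 hSnonempty
  have himax : z imax = 1 := (Finset.mem_filter.mp himaxS).2
  have hmaxall' : ∀ l, z l = 1 → σ2 l ≤ σ2 imax := fun l hl =>
    hmaxall l (Finset.mem_filter.mpr ⟨Finset.mem_univ l, hl⟩)
  -- segment positivity
  have hseg : ∀ (a b : Fin n), z a = 1 → z b = 1 → b ≠ a → ∀ (L : ℕ) (v : ℕ → Fin n),
      v 0 = a → v L = b → (∀ u, 0 < u → u < L → z (v u) ≠ 1) →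
      (∀ u, u < L → 0 < P (v u) (v (u+1))) →
      0 < H (Function.update z a 0) a b := by
    intro a b ha hb hba L v hv0 hvL hint hedge
    set y := Function.update z a 0 with hy
    have hyb : ∀ k, y k ∈ Set.Icc (0:ℝ) 1 := hupd a 0 le_rfl zero_le_one
    have hyab : y b = 1 := by rw [hy, Function.update_of_ne hba]; exact hb
    have hqnn := Q_nonneg hPnn hyb
    have hpnn := pow_nonneg_entries hqnn
    have hstep : ∀ u, u ≤ L → 0 < ((Q P y) ^ u) a (v u) := by
      intro u
      induction u with
      | zero =>
        intro _
        rw [hv0]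
        simp [Matrix.one_apply]
      | succ u ih =>
        intro hu
        have hprev := ih (Nat.le_of_succ_le hu)
        have hyvu : y (v u) < 1 := by
          rcases eq_or_ne (v u) a with h | h
          · rw [h, hy, Function.update_self]; norm_num
          · rw [hy, Function.update_of_ne h]
            rcases Nat.eq_zero_or_pos u with h0 | h0
            · rw [h0, hv0] at h; exact absurd rfl h
            · exact lt_of_le_of_ne (hz (v u)).2 (hint u h0 (Nat.lt_of_succ_le hu))
        have hQ : 0 < Q P y (v u) (v (u+1)) := by
          rw [Q_apply]
          have hP := hedge u (Nat.lt_of_succ_le hu)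
          have h1 : 0 < (1 - y (v u)) * P (v u) (v (u+1)) := mul_pos (by linarith) hP
          have h2 : (0:ℝ) ≤ if v u = v (u+1) then y (v u) else 0 := by
            split
            · exact (hyb _).1
            · exact le_rfl
          linarith
        calc (0:ℝ) < ((Q P y) ^ u) a (v u) * Q P y (v u) (v (u+1)) := mul_pos hprev hQ
          _ ≤ ∑ l, ((Q P y) ^ u) a l * Q P y l (v (u+1)) :=
              Finset.single_le_sum (fun l _ => mul_nonneg (hpnn u a l) (hqnn l _))
                (Finset.mem_univ (v u))
          _ = ((Q P y) ^ (u+1)) a (v (u+1)) := by rw [pow_succ, Matrix.mul_apply]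
    have hL := hstep L le_rfl
    rw [hvL] at hL
    have hmono : ∀ t : ℕ, ((Q P y) ^ L) a b ≤ ((Q P y) ^ (t + L)) a b := by
      intro t
      induction t with
      | zero => simp
      | succ t ih =>
        have heq : t + 1 + L = (t + L) + 1 := by omega
        rw [heq, pow_succ, Matrix.mul_apply]
        have hQbb : Q P y b b = 1 := by rw [Q_stub_row hyab b]; simp
        calc ((Q P y) ^ L) a b ≤ ((Q P y) ^ (t + L)) a b := ih
          _ = ((Q P y) ^ (t + L)) a b * Q P y b b := by rw [hQbb, mul_one]
          _ ≤ ∑ l, ((Q P y) ^ (t + L)) a l * Q P y l b :=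
              Finset.single_le_sum (fun l _ => mul_nonneg (hpnn _ a l) (hqnn l b))
                (Finset.mem_univ b)
    have hlim : Tendsto (fun t : ℕ => ((Q P y) ^ (t + L)) a b) atTop (𝓝 (H y a b)) :=
      (hconv y hyb a b).comp (tendsto_add_atTop_nat L)
    exact lt_of_lt_of_le hL (ge_of_tendsto' hlim hmono)
  -- claim A
  have claimA : ∀ i, z i = 1 → σ2 i = σ2 imax →
      ∃ j0, j0 ≠ i ∧ z j0 = 1 ∧ σ2 j0 = σ2 imax ∧
        H (Function.update z i 0) i j0 = 1 ∧
        (∀ b, b ≠ j0 → H (Function.update z i 0) i b = 0) := by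
    intro i hi hiM
    set y := Function.update z i 0 with hy
    have hyb : ∀ k, y k ∈ Set.Icc (0:ℝ) 1 := hupd i 0 le_rfl zero_le_one
    have hys : ∃ s, y s = 1 := by
      obtain ⟨a, haS, b, hbS, hab⟩ := Finset.one_lt_card.mp (lt_of_lt_of_le one_lt_two hcard)
      have haz : z a = 1 := (Finset.mem_filter.mp haS).2
      have hbz : z b = 1 := (Finset.mem_filter.mp hbS).2
      rcases eq_or_ne a i with h | h
      · refine ⟨b, ?_⟩
        rw [hy, Function.update_of_ne (by rw [← h]; exact hab.symm)]
        exact hbz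
      · exact ⟨a, by rw [hy, Function.update_of_ne h]; exact haz⟩
    have hcv := hconv y hyb
    have hnn : ∀ b, 0 ≤ H y i b := fun b => H_nonneg hPnn hyb hcv i b
    have hsum1 : ∑ b, H y i b = 1 := H_row_sum hProw hcv i
    have hvan : ∀ b, y b ≠ 1 → H y i b = 0 := fun b hb =>
      H_col_zero hn hPnn hProw hPprim hyb hys hcv i b hb
    have hble1 : ∀ b, H y i b ≤ 1 := by
      intro b
      calc H y i b ≤ ∑ c, H y i c :=
            Finset.single_le_sum (fun c _ => hnn c) (Finset.mem_univ b)
        _ = 1 := hsum1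
    have hstub_of_ne : ∀ b, H y i b ≠ 0 → (b ≠ i ∧ z b = 1) := by
      intro b hb
      have hyb1 : y b = 1 := by
        by_contra h
        exact hb (hvan b h)
      have hbi : b ≠ i := by
        intro h
        rw [h, hy, Function.update_self] at hyb1
        norm_num at hyb1
      rw [hy, Function.update_of_ne hbi] at hyb1
      exact ⟨hbi, hyb1⟩
    have hne : σ2 i ≤ ∑ b, (H y i b) ^ 2 * σ2 b := by
      rw [hy]
      have h := hNE i 0 ⟨le_rfl, zero_le_one⟩
      rw [stubcost z hz i hi] at h
      exact h
    have hXleq : ∑ b, (H y i b) ^ 2 * σ2 b ≤ (∑ b, (H y i b) ^ 2) * σ2 imax := by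
      rw [Finset.sum_mul]
      apply Finset.sum_le_sum
      intro b _
      rcases eq_or_ne (H y i b) 0 with h | h
      · rw [h]; norm_num
      · exact mul_le_mul_of_nonneg_left (hmaxall' b (hstub_of_ne b h).2) (sq_nonneg _)
    have hsq_le : ∑ b, (H y i b) ^ 2 ≤ 1 := by
      calc ∑ b, (H y i b) ^ 2 ≤ ∑ b, H y i b := by
            apply Finset.sum_le_sum
            intro b _
            nlinarith [hnn b, hble1 b]
        _ = 1 := hsum1
    have hMpos : 0 < σ2 imax := hσ imax
    have h1 : σ2 imax ≤ (∑ b, (H y i b) ^ 2) * σ2 imax :=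
      calc σ2 imax = σ2 i := hiM.symm
        _ ≤ ∑ b, (H y i b) ^ 2 * σ2 b := hne
        _ ≤ _ := hXleq
    have hS2ge : 1 ≤ ∑ b, (H y i b) ^ 2 :=
      le_of_mul_le_mul_right (by linarith [h1]) hMpos
    have hS2one : ∑ b, (H y i b) ^ 2 = 1 := le_antisymm hsq_le hS2ge
    have hXeq : ∑ b, (H y i b) ^ 2 * σ2 b = σ2 imax := by
      have h2 := hXleq
      rw [hS2one, one_mul] at h2
      have h3 : σ2 imax ≤ ∑ b, (H y i b) ^ 2 * σ2 b :=
        le_trans (le_of_eq hiM.symm) hne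
      linarith
    have hzero_sum : ∑ b, (H y i b - (H y i b) ^ 2) = 0 := by
      rw [Finset.sum_sub_distrib, hsum1, hS2one]
      ring
    have h01 : ∀ b, (H y i b) ^ 2 = H y i b := by
      have hterm : ∀ b ∈ Finset.univ, (0:ℝ) ≤ H y i b - (H y i b) ^ 2 := by
        intro b _
        nlinarith [hnn b, hble1 b]
      have hall := (Finset.sum_eq_zero_iff_of_nonneg hterm).mp hzero_sum
      intro b
      have := hall b (Finset.mem_univ b)
      linarith
    obtain ⟨j0, hj0ne⟩ : ∃ j0, H y i j0 ≠ 0 := by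
      by_contra hc
      push_neg at hc
      rw [Finset.sum_congr rfl (fun b _ => hc b)] at hsum1
      simp at hsum1
    have hj0one : H y i j0 = 1 := by
      have hq : H y i j0 * (H y i j0 - 1) = 0 := by linear_combination h01 j0
      rcases mul_eq_zero.mp hq with h | h
      · exact absurd h hj0ne
      · linarith
    have hrest : ∀ b, b ≠ j0 → H y i b = 0 := by
      intro b hb
      have hsplit : ∑ c ∈ Finset.univ.erase j0, H y i c = 0 := by
        have he := Finset.sum_erase_add Finset.univ (fun c => H y i c) (Finset.mem_univ j0)
        rw [hsum1] at he
        rw [hj0one] at he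
        linarith
      exact (Finset.sum_eq_zero_iff_of_nonneg (fun c _ => hnn c)).mp hsplit b
        (Finset.mem_erase.mpr ⟨hb, Finset.mem_univ b⟩)
    have hj0stub := hstub_of_ne j0 hj0ne
    have hj0M : σ2 j0 = σ2 imax := by
      have hX : ∑ b, (H y i b) ^ 2 * σ2 b = σ2 j0 := by
        rw [← Finset.sum_erase_add _ _ (Finset.mem_univ j0)]
        have hz0 : ∑ b ∈ Finset.univ.erase j0, (H y i b) ^ 2 * σ2 b = 0 :=
          Finset.sum_eq_zero fun b hb => by
            rw [hrest b (Finset.mem_erase.mp hb).1]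
            ring
        rw [hz0, hj0one]
        ring
      rw [hX] at hXeq
      exact hXeq
    exact ⟨j0, hj0stub.1, hj0stub.2, hj0M, hj0one, hrest⟩
  -- path argument
  have pathT : ∀ (L : ℕ) (v : ℕ → Fin n), z (v 0) = 1 → σ2 (v 0) = σ2 imax →
      (∀ u, u < L → 0 < P (v u) (v (u+1))) →
      ∀ r, r ≤ L → z (v r) = 1 → σ2 (v r) = σ2 imax := by
    intro L v hv0 hv0M hedge r
    induction r using Nat.strong_induction_on with
    | _ r ih =>
      intro hrL hvr
      rcases Nat.eq_zero_or_pos r with h0 | h0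
      · rw [h0]; exact hv0M
      · set R := (Finset.range r).filter (fun u => z (v u) = 1) with hR
        have hRne : R.Nonempty := ⟨0, Finset.mem_filter.mpr ⟨Finset.mem_range.mpr h0, hv0⟩⟩
        set r' := R.max' hRne with hr'
        have hr'mem := R.max'_mem hRne
        have hr'lt : r' < r := Finset.mem_range.mp (Finset.mem_filter.mp hr'mem).1
        have hr'stub : z (v r') = 1 := (Finset.mem_filter.mp hr'mem).2
        have hr'M : σ2 (v r') = σ2 imax :=
          ih r' hr'lt (le_trans (le_of_lt hr'lt) hrL) hr'stub
        have hint : ∀ u, r' < u → u < r → z (v u) ≠ 1 := by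
          intro u hu1 hu2 hu3
          have hmem : u ∈ R := Finset.mem_filter.mpr ⟨Finset.mem_range.mpr hu2, hu3⟩
          have := Finset.le_max' R u hmem
          omega
        rcases eq_or_ne (v r) (v r') with heq | hvne
        · rw [heq]; exact hr'M
        · obtain ⟨j0, hj0ne, hj0stub, hj0M, hj0one, hrest⟩ := claimA (v r') hr'stub hr'M
          have hpos := hseg (v r') (v r) hr'stub hvr hvne (r - r') (fun u => v (r' + u))
            (by simp)
            (by show v (r' + (r - r')) = v r
                rw [show r' + (r - r') = r by omega])
            (fun u hu1 hu2 => hint (r' + u) (by omega) (by omega))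
            (fun u hu => hedge (r' + u) (by omega))
          rcases eq_or_ne (v r) j0 with hj | hj
          · rw [hj]; exact hj0M
          · rw [hrest (v r) hj] at hpos
            exact absurd hpos (lt_irrefl 0)
  have hallM : ∀ j, z j = 1 → σ2 j = σ2 imax := by
    intro j hj
    obtain ⟨m, hm⟩ := hPprim
    obtain ⟨v, hv0, hvm, hve⟩ := path_of_pow_pos hPnn m imax j (hm imax j)
    have := pathT m v (by rw [hv0]; exact himax) (by rw [hv0]) hve m le_rfl
      (by rw [hvm]; exact hj)
    rw [hvm] at this
    exact this
  intro i j hi hj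
  rw [hallM i hi, hallM j hj]
end

section
/- Every non-strict Nash equilibrium z (a Nash equilibrium that is not a strict Nash equilibrium) is such that the restricted graph G_P[S(z)] is a directed ring, i.e., every node in S(z) has exactly one out-neighbor and exactly one in-neighbor in G_P[S(z)], and G_P[S(z)] is strongly connected. -/
open Matrix Filter Topology Finset

/-- For `i ≠ j` in `S`, there is a link from `i` to `j` in the restricted graph
`G_P[S]` if and only if there exists a walk in `G_P` (links `(u,v)` with `P u v > 0`)
from `i` to `j` none of whose intermediate nodes lies in `S`. -/
def restrictedEdge {n : ℕ} (P : Matrix (Fin n) (Fin n) ℝ) (S : Set (Fin n))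
    (i j : Fin n) : Prop :=
  i ∈ S ∧ j ∈ S ∧ i ≠ j ∧
    ∃ (l : ℕ) (γ : ℕ → Fin n), γ 0 = i ∧ γ (l + 1) = j ∧
      (∀ s, s ≤ l → 0 < P (γ s) (γ (s + 1))) ∧
      (∀ s, 1 ≤ s → s ≤ l → γ s ∉ S)

variable {n : ℕ}

lemma powEntryNonneg (M : Matrix (Fin n) (Fin n) ℝ) (hnn : ∀ i j, 0 ≤ M i j) :
    ∀ (m : ℕ) (i j : Fin n), 0 ≤ (M ^ m) i j := by
  intro m
  induction m with
  | zero =>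
    intro i j
    simp [Matrix.one_apply]
    split <;> norm_num
  | succ m ih =>
    intro i j
    rw [pow_succ, Matrix.mul_apply]
    exact Finset.sum_nonneg fun k _ => mul_nonneg (ih i k) (hnn k j)

lemma powRowSum (M : Matrix (Fin n) (Fin n) ℝ) (hrow : ∀ i, ∑ j, M i j = 1) :
    ∀ (m : ℕ) (i : Fin n), ∑ j, (M ^ m) i j = 1 := by
  intro m
  induction m with
  | zero => intro i; simp [Matrix.one_apply]
  | succ m ih =>
    intro i
    have h : ∀ j, (M ^ (m+1)) i j = ∑ k, (M ^ m) i k * M k j := by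
      intro j; rw [pow_succ, Matrix.mul_apply]
    simp only [h]
    rw [Finset.sum_comm]
    calc ∑ k, ∑ j, (M ^ m) i k * M k j = ∑ k, (M ^ m) i k * ∑ j, M k j := by
          simp [Finset.mul_sum]
      _ = 1 := by simp [hrow, ih i]

lemma sumPosExists {f : Fin n → ℝ} (hnn : ∀ k, 0 ≤ f k) (h : 0 < ∑ k, f k) :
    ∃ k, 0 < f k := by
  by_contra hc
  push_neg at hc
  have : ∑ k, f k ≤ 0 := Finset.sum_nonpos fun k _ => hc k
  linarith

lemma existsPathOfPowPos (M : Matrix (Fin n) (Fin n) ℝ) (hnn : ∀ i j, 0 ≤ M i j) :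
    ∀ (m : ℕ) (i j : Fin n), 0 < (M ^ m) i j →
      ∃ γ : ℕ → Fin n, γ 0 = i ∧ γ m = j ∧ ∀ s, s < m → 0 < M (γ s) (γ (s + 1)) := by
  intro m
  induction m with
  | zero =>
    intro i j h
    have hij : i = j := by
      by_contra hij
      simp [Matrix.one_apply, hij] at h
    exact ⟨fun _ => i, rfl, by simp [hij], by omega⟩
  | succ m ih =>
    intro i j h
    rw [pow_succ, Matrix.mul_apply] at h
    obtain ⟨k, hk⟩ := sumPosExists
      (fun k => mul_nonneg (powEntryNonneg M hnn m i k) (hnn k j)) h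
    have h1 : 0 < (M ^ m) i k := by
      rcases lt_or_eq_of_le (powEntryNonneg M hnn m i k) with h' | h'
      · exact h'
      · exfalso; rw [← h'] at hk; simp at hk
    have h2 : 0 < M k j := by
      rcases lt_or_eq_of_le (hnn k j) with h' | h'
      · exact h'
      · exfalso; rw [← h'] at hk; simp at hk
    obtain ⟨γ, hγ0, hγm, hγs⟩ := ih i k h1
    refine ⟨fun s => if s ≤ m then γ s else j, by simpa using hγ0, by simp, ?_⟩
    intro s hs
    rcases Nat.lt_or_ge s m with hsm | hsm
    · have : s + 1 ≤ m := hsm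
      simpa [Nat.le_of_lt hsm, this] using hγs s hsm
    · have hsm' : s = m := by omega
      subst hsm'
      simpa [hγm, Nat.lt_irrefl] using h2

lemma powEntryGePath (M : Matrix (Fin n) (Fin n) ℝ) (hnn : ∀ i j, 0 ≤ M i j)
    (γ : ℕ → Fin n) :
    ∀ l : ℕ, (∏ s ∈ Finset.range (l + 1), M (γ s) (γ (s + 1))) ≤ (M ^ (l + 1)) (γ 0) (γ (l + 1)) := by
  intro l
  induction l with
  | zero => simp
  | succ l ih =>
    rw [Finset.prod_range_succ]
    have h1 : (M ^ (l + 1 + 1)) (γ 0) (γ (l + 2)) =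
        ∑ k, (M ^ (l + 1)) (γ 0) k * M k (γ (l + 2)) := by
      rw [pow_succ, Matrix.mul_apply]
    rw [h1]
    have h2 : (M ^ (l+1)) (γ 0) (γ (l+1)) * M (γ (l+1)) (γ (l+2)) ≤
        ∑ k, (M ^ (l + 1)) (γ 0) k * M k (γ (l + 2)) := by
      apply Finset.single_le_sum
        (f := fun k => (M ^ (l + 1)) (γ 0) k * M k (γ (l + 2)))
        (fun k _ => mul_nonneg (powEntryNonneg M hnn _ _ _) (hnn _ _))
        (Finset.mem_univ _)
    calc (∏ s ∈ Finset.range (l + 1), M (γ s) (γ (s + 1))) * M (γ (l+1)) (γ (l+2))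
        ≤ (M ^ (l+1)) (γ 0) (γ (l+1)) * M (γ (l+1)) (γ (l+2)) := by
          apply mul_le_mul_of_nonneg_right ih (hnn _ _)
      _ ≤ _ := h2

/-- the self-confidence-modified matrix -/
def Qmat (P : Matrix (Fin n) (Fin n) ℝ) (z : Fin n → ℝ) : Matrix (Fin n) (Fin n) ℝ :=
  (1 - Matrix.diagonal z) * P + Matrix.diagonal z

lemma Qmat_apply (P : Matrix (Fin n) (Fin n) ℝ) (z : Fin n → ℝ) (i j : Fin n) :
    Qmat P z i j = (1 - z i) * P i j + if i = j then z i else 0 := by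
  simp [Qmat, Matrix.add_apply, Matrix.mul_apply, Matrix.sub_apply, Matrix.diagonal_apply,
    Matrix.one_apply, sub_mul, ite_mul, Finset.sum_ite_eq, Finset.sum_sub_distrib]

lemma Qmat_nonneg (P : Matrix (Fin n) (Fin n) ℝ) (hPnn : ∀ i j, 0 ≤ P i j)
    (z : Fin n → ℝ) (hz : ∀ i, z i ∈ Set.Icc (0:ℝ) 1) (i j : Fin n) :
    0 ≤ Qmat P z i j := by
  rw [Qmat_apply]
  have h1 := (hz i).1
  have h2 := (hz i).2
  have : 0 ≤ (1 - z i) * P i j := mul_nonneg (by linarith) (hPnn i j)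
  split <;> linarith

lemma Qmat_rowsum (P : Matrix (Fin n) (Fin n) ℝ) (hProw : ∀ i, ∑ j, P i j = 1)
    (z : Fin n → ℝ) (i : Fin n) : ∑ j, Qmat P z i j = 1 := by
  simp only [Qmat_apply]
  rw [Finset.sum_add_distrib, ← Finset.mul_sum, hProw, Finset.sum_ite_eq]
  simp

lemma Qmat_pow_stubborn (P : Matrix (Fin n) (Fin n) ℝ) (z : Fin n → ℝ) {i : Fin n}
    (hi : z i = 1) : ∀ (m : ℕ) (j : Fin n), (Qmat P z ^ m) i j = if i = j then 1 else 0 := by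
  have hrow : ∀ j, Qmat P z i j = if i = j then 1 else 0 := by
    intro j
    rw [Qmat_apply, hi]
    simp
  intro m
  induction m with
  | zero => intro j; simp [Matrix.one_apply]
  | succ m ih =>
    intro j
    rw [pow_succ', Matrix.mul_apply]
    simp only [hrow, ite_mul, one_mul, zero_mul]
    rw [Finset.sum_ite_eq]
    simp [ih j]

/-- Maximum principle: a function vanishing on a nonempty set `T` and
`P`-harmonic off `T` vanishes identically (for primitive `P`). -/
lemma maxPrinciple (P : Matrix (Fin n) (Fin n) ℝ) (hPnn : ∀ i j, 0 ≤ P i j)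
    (hProw : ∀ i, ∑ j, P i j = 1) (hPprim : ∃ m : ℕ, ∀ i j, 0 < (P ^ m) i j)
    (T : Set (Fin n)) (hT : ∃ s, s ∈ T) (d : Fin n → ℝ)
    (hb : ∀ s ∈ T, d s = 0) (he : ∀ u, u ∉ T → d u = ∑ v, P u v * d v) :
    ∀ u, d u = 0 := by
  obtain ⟨s, hs⟩ := hT
  obtain ⟨u₀, -, hmax⟩ := Finset.exists_max_image Finset.univ (fun u => |d u|)
    ⟨s, Finset.mem_univ s⟩
  by_cases hmx : |d u₀| ≤ 0
  · intro u
    have h1 := hmax u (Finset.mem_univ u)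
    have h2 : (0:ℝ) ≤ |d u| := abs_nonneg _
    have : |d u| = 0 := le_antisymm (le_trans h1 hmx) h2
    exact abs_eq_zero.mp this
  push_neg at hmx
  exfalso
  set mx := |d u₀| with hmxdef
  -- propagation step
  have step : ∀ u, |d u| = mx → u ∉ T ∧ ∀ v, 0 < P u v → |d v| = mx := by
    intro u hu
    have huT : u ∉ T := by
      intro huT
      rw [hb u huT] at hu
      simp at hu
      rw [← hu] at hmx
      exact lt_irrefl 0 hmx
    refine ⟨huT, ?_⟩
    have h1 : |d u| ≤ ∑ v, P u v * |d v| := by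
      rw [he u huT]
      calc |∑ v, P u v * d v| ≤ ∑ v, |P u v * d v| := Finset.abs_sum_le_sum_abs _ _
        _ = ∑ v, P u v * |d v| := by
            apply Finset.sum_congr rfl
            intro v _
            rw [abs_mul, abs_of_nonneg (hPnn u v)]
    have h2 : ∑ v, P u v * (mx - |d v|) = 0 := by
      have hexp : ∑ v, P u v * (mx - |d v|) = mx - ∑ v, P u v * |d v| := by
        simp only [mul_sub]
        rw [Finset.sum_sub_distrib, ← Finset.sum_mul, hProw]
        ring
      rw [hexp]
      have h3 : ∑ v, P u v * |d v| ≤ mx := by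
        calc ∑ v, P u v * |d v| ≤ ∑ v, P u v * mx := by
              apply Finset.sum_le_sum
              intro v _
              exact mul_le_mul_of_nonneg_left (hmax v (Finset.mem_univ v)) (hPnn u v)
          _ = mx := by rw [← Finset.sum_mul, hProw, one_mul]
      have h4 : mx ≤ ∑ v, P u v * |d v| := hu ▸ h1
      linarith
    intro v hv
    have := (Finset.sum_eq_zero_iff_of_nonneg (fun v _ =>
      mul_nonneg (hPnn u v) (by
        have := hmax v (Finset.mem_univ v); simp only [sub_nonneg]; linarith))).mp h2 v
      (Finset.mem_univ v)
    have := this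
    have hz : P u v * (mx - |d v|) = 0 := this
    rcases mul_eq_zero.mp hz with h | h
    · exact absurd h (ne_of_gt hv)
    · linarith [sub_eq_zero.mp h]
  obtain ⟨m, hm⟩ := hPprim
  obtain ⟨γ, hγ0, hγm, hγs⟩ := existsPathOfPowPos P hPnn m u₀ s (hm u₀ s)
  have claim : ∀ k, k ≤ m → |d (γ k)| = mx := by
    intro k
    induction k with
    | zero => intro _; rw [hγ0]
    | succ k ih =>
      intro hk
      have hk' : k ≤ m := by omega
      have hkm : k < m := by omega
      exact (step (γ k) (ih hk')).2 (γ (k+1)) (hγs k hkm)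
  have := claim m le_rfl
  rw [hγm, hb s hs] at this
  simp at this
  rw [← this] at hmx
  exact lt_irrefl 0 hmx

section limitLemmas

variable {P : Matrix (Fin n) (Fin n) ℝ} {z : Fin n → ℝ} {K : Matrix (Fin n) (Fin n) ℝ}

lemma Hlim_nonneg (hPnn : ∀ i j, 0 ≤ P i j) (hz : ∀ i, z i ∈ Set.Icc (0:ℝ) 1)
    (hK : ∀ i j, Tendsto (fun t : ℕ => ((Qmat P z) ^ t) i j) atTop (𝓝 (K i j)))
    (i j : Fin n) : 0 ≤ K i j :=
  ge_of_tendsto' (hK i j) fun m => powEntryNonneg _ (Qmat_nonneg P hPnn z hz) m i j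

lemma Hlim_rowsum (hProw : ∀ i, ∑ j, P i j = 1)
    (hK : ∀ i j, Tendsto (fun t : ℕ => ((Qmat P z) ^ t) i j) atTop (𝓝 (K i j)))
    (i : Fin n) : ∑ j, K i j = 1 := by
  have h1 : Tendsto (fun m : ℕ => ∑ j, ((Qmat P z) ^ m) i j) atTop (𝓝 (∑ j, K i j)) :=
    tendsto_finset_sum _ fun j _ => hK i j
  have h2 : (fun m : ℕ => ∑ j, ((Qmat P z) ^ m) i j) = fun _ => (1:ℝ) := by
    funext m
    exact powRowSum _ (Qmat_rowsum P hProw z) m i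
  rw [h2] at h1
  exact tendsto_nhds_unique h1 tendsto_const_nhds

lemma Hlim_stubborn
    (hK : ∀ i j, Tendsto (fun t : ℕ => ((Qmat P z) ^ t) i j) atTop (𝓝 (K i j)))
    {i : Fin n} (hi : z i = 1) (j : Fin n) : K i j = if i = j then 1 else 0 := by
  have h1 := hK i j
  have h2 : (fun m : ℕ => ((Qmat P z) ^ m) i j) = fun _ => if i = j then (1:ℝ) else 0 := by
    funext m
    exact Qmat_pow_stubborn P z hi m j
  rw [h2] at h1
  exact tendsto_nhds_unique h1 tendsto_const_nhds

lemma Hlim_left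
    (hK : ∀ i j, Tendsto (fun t : ℕ => ((Qmat P z) ^ t) i j) atTop (𝓝 (K i j)))
    (i j : Fin n) : ∑ k, Qmat P z i k * K k j = K i j := by
  have h1 : Tendsto (fun m : ℕ => ((Qmat P z) ^ (m + 1)) i j) atTop (𝓝 (K i j)) :=
    (tendsto_add_atTop_iff_nat 1).mpr (hK i j)
  have h2 : (fun m : ℕ => ((Qmat P z) ^ (m + 1)) i j) =
      fun m => ∑ k, Qmat P z i k * ((Qmat P z) ^ m) k j := by
    funext m
    rw [pow_succ', Matrix.mul_apply]
  rw [h2] at h1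
  have h3 : Tendsto (fun m : ℕ => ∑ k, Qmat P z i k * ((Qmat P z) ^ m) k j) atTop
      (𝓝 (∑ k, Qmat P z i k * K k j)) :=
    tendsto_finset_sum _ fun k _ => (hK k j).const_mul _
  exact tendsto_nhds_unique h3 h1

lemma Hlim_right
    (hK : ∀ i j, Tendsto (fun t : ℕ => ((Qmat P z) ^ t) i j) atTop (𝓝 (K i j)))
    (i j : Fin n) : ∑ k, K i k * Qmat P z k j = K i j := by
  have h1 : Tendsto (fun m : ℕ => ((Qmat P z) ^ (m + 1)) i j) atTop (𝓝 (K i j)) :=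
    (tendsto_add_atTop_iff_nat 1).mpr (hK i j)
  have h2 : (fun m : ℕ => ((Qmat P z) ^ (m + 1)) i j) =
      fun m => ∑ k, ((Qmat P z) ^ m) i k * Qmat P z k j := by
    funext m
    rw [pow_succ, Matrix.mul_apply]
  rw [h2] at h1
  have h3 : Tendsto (fun m : ℕ => ∑ k, ((Qmat P z) ^ m) i k * Qmat P z k j) atTop
      (𝓝 (∑ k, K i k * Qmat P z k j)) :=
    tendsto_finset_sum _ fun k _ => (hK i k).mul_const _
  exact tendsto_nhds_unique h3 h1

lemma Hlim_harmonic
    (hK : ∀ i j, Tendsto (fun t : ℕ => ((Qmat P z) ^ t) i j) atTop (𝓝 (K i j)))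
    {i : Fin n} (hi : z i < 1) (j : Fin n) : K i j = ∑ k, P i k * K k j := by
  have h1 := Hlim_left hK i j
  have h2 : ∑ k, Qmat P z i k * K k j
      = (1 - z i) * ∑ k, P i k * K k j + z i * K i j := by
    simp only [Qmat_apply, add_mul, ite_mul, zero_mul]
    rw [Finset.sum_add_distrib, Finset.sum_ite_eq]
    simp [Finset.mul_sum, mul_assoc]
  rw [h2] at h1
  have h3 : (1 - z i) * ∑ k, P i k * K k j = (1 - z i) * K i j := by linarith
  have h4 : (1 - z i) ≠ 0 := by linarith
  rw [mul_eq_mul_left_iff] at h3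
  rcases h3 with h | h
  · exact h.symm
  · exact absurd (by linarith : z i = 1) (ne_of_lt hi)

end limitLemmas

section pathLemmas

variable {P : Matrix (Fin n) (Fin n) ℝ} {z : Fin n → ℝ} {K : Matrix (Fin n) (Fin n) ℝ}

lemma Qmat_entry_ge (hPnn : ∀ i j, 0 ≤ P i j) (hz : ∀ i, z i ∈ Set.Icc (0:ℝ) 1)
    (u v : Fin n) : (1 - z u) * P u v ≤ Qmat P z u v := by
  rw [Qmat_apply]
  have h0 := (hz u).1
  split <;> linarith

lemma Hlim_pos_of_path (hPnn : ∀ i j, 0 ≤ P i j) (hz : ∀ i, z i ∈ Set.Icc (0:ℝ) 1)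
    (hK : ∀ i j, Tendsto (fun t : ℕ => ((Qmat P z) ^ t) i j) atTop (𝓝 (K i j)))
    {i j : Fin n} (hj : z j = 1) (l : ℕ) (γ : ℕ → Fin n)
    (hγ0 : γ 0 = i) (hγl : γ (l + 1) = j)
    (hsteps : ∀ s, s ≤ l → 0 < P (γ s) (γ (s + 1)))
    (hfree : ∀ s, s ≤ l → z (γ s) < 1) :
    0 < K i j := by
  set Q := Qmat P z with hQ
  set c := ∏ s ∈ Finset.range (l + 1), Q (γ s) (γ (s + 1)) with hc
  have hcpos : 0 < c := by
    apply Finset.prod_pos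
    intro s hs
    rw [Finset.mem_range] at hs
    have hs' : s ≤ l := by omega
    calc (0:ℝ) < (1 - z (γ s)) * P (γ s) (γ (s+1)) :=
          mul_pos (by linarith [hfree s hs']) (hsteps s hs')
      _ ≤ Q (γ s) (γ (s+1)) := Qmat_entry_ge hPnn hz _ _
  have hQjj : Q j j = 1 := by
    rw [hQ, Qmat_apply, hj]; simp
  have hbase : c ≤ (Q ^ (l + 1)) i j := by
    have := powEntryGePath Q (Qmat_nonneg P hPnn z hz) γ l
    rwa [hγ0, hγl] at this
  have hmono : ∀ m, l + 1 ≤ m → c ≤ (Q ^ m) i j := by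
    intro m hm
    obtain ⟨d, rfl⟩ := Nat.exists_eq_add_of_le hm
    induction d with
    | zero => exact hbase
    | succ d ih =>
      have h1 : (Q ^ (l + 1 + (d + 1))) i j = ∑ k, (Q ^ (l + 1 + d)) i k * Q k j := by
        rw [show l + 1 + (d + 1) = (l + 1 + d) + 1 by omega, pow_succ, Matrix.mul_apply]
      rw [h1]
      have h2 : (Q ^ (l+1+d)) i j * Q j j ≤ ∑ k, (Q ^ (l + 1 + d)) i k * Q k j :=
        Finset.single_le_sum (f := fun k => (Q ^ (l + 1 + d)) i k * Q k j)
          (fun k _ => mul_nonneg (powEntryNonneg Q (Qmat_nonneg P hPnn z hz) _ _ _)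
            (Qmat_nonneg P hPnn z hz _ _)) (Finset.mem_univ j)
      have h3 := ih (by omega)
      rw [hQjj] at h2
      calc c ≤ (Q ^ (l+1+d)) i j := h3
        _ = (Q ^ (l+1+d)) i j * 1 := by ring
        _ ≤ _ := by rw [mul_one] at h2 ⊢; exact h2
  have : c ≤ K i j := by
    apply ge_of_tendsto (hK i j)
    filter_upwards [eventually_atTop.mpr ⟨l + 1, fun m hm => hmono m hm⟩] with m hm
    exact hm
  linarith

lemma pathOfQPowPos (hPnn : ∀ i j, 0 ≤ P i j) (hz : ∀ i, z i ∈ Set.Icc (0:ℝ) 1) :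
    ∀ (m : ℕ) (u j : Fin n), z j = 1 → 0 < ((Qmat P z) ^ m) u j →
      u = j ∨ ∃ (l : ℕ) (γ : ℕ → Fin n), γ 0 = u ∧ γ (l + 1) = j ∧
        (∀ s, s ≤ l → 0 < P (γ s) (γ (s + 1))) ∧
        (∀ s, 1 ≤ s → s ≤ l → z (γ s) < 1) := by
  intro m
  induction m with
  | zero =>
    intro u j _ h
    left
    by_contra huj
    simp [Matrix.one_apply, huj] at h
  | succ m ih =>
    intro u j hj h
    rw [pow_succ', Matrix.mul_apply] at h
    obtain ⟨k, hk⟩ := sumPosExists (fun k => mul_nonneg (Qmat_nonneg P hPnn z hz u k)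
      (powEntryNonneg _ (Qmat_nonneg P hPnn z hz) m k j)) h
    have hk1 : 0 < Qmat P z u k := by
      rcases lt_or_eq_of_le (Qmat_nonneg P hPnn z hz u k) with h' | h'
      · exact h'
      · exfalso; rw [← h'] at hk; simp at hk
    have hk2 : 0 < ((Qmat P z) ^ m) k j := by
      rcases lt_or_eq_of_le (powEntryNonneg _ (Qmat_nonneg P hPnn z hz) m k j) with h' | h'
      · exact h'
      · exfalso; rw [← h'] at hk; simp at hk
    by_cases hku : k = u
    · subst hku; exact ih k j hj hk2
    · -- strict step from u to k
      have hQuk : Qmat P z u k = (1 - z u) * P u k := by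
        rw [Qmat_apply]
        simp [Ne.symm hku]
      rw [hQuk] at hk1
      have hzu : z u < 1 := by
        by_contra hzu
        push_neg at hzu
        have h1 := (hz u).2
        have : z u = 1 := le_antisymm h1 hzu
        rw [this] at hk1; simp at hk1
      have hPuk : 0 < P u k := by
        rcases lt_or_eq_of_le (hPnn u k) with h' | h'
        · exact h'
        · exfalso; rw [← h'] at hk1; simp at hk1
      by_cases hkj : k = j
      · subst hkj
        right
        refine ⟨0, fun s => if s = 0 then u else k, by simp, by simp, ?_, by omega⟩
        intro s hs
        have : s = 0 := by omega
        subst this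
        simpa using hPuk
      · have hzk : z k < 1 := by
          rcases lt_or_eq_of_le (hz k).2 with h' | h'
          · exact h'
          · exfalso
            rw [Qmat_pow_stubborn P z h' m j] at hk2
            simp [hkj] at hk2
        rcases ih k j hj hk2 with h' | ⟨l, γ, hγ0, hγl, hsteps, hfree⟩
        · exact absurd h' hkj
        · right
          refine ⟨l + 1, fun s => if s = 0 then u else γ (s - 1), by simp, ?_, ?_, ?_⟩
          · simp [hγl]
          · intro s hs
            rcases Nat.eq_zero_or_pos s with rfl | hs1
            · simpa [hγ0] using hPuk
            · obtain ⟨t, rfl⟩ := Nat.exists_eq_add_of_le hs1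
              have h1 : 1 + t ≠ 0 := by omega
              have h2 : 1 + t + 1 ≠ 0 := by omega
              simp only [h1, h2, if_false]
              have h3 : 1 + t - 1 = t := by omega
              have h4 : 1 + t + 1 - 1 = t + 1 := by omega
              rw [h3, h4]
              exact hsteps t (by omega)
          · intro s hs1 hs2
            obtain ⟨t, rfl⟩ := Nat.exists_eq_add_of_le hs1
            have h1 : 1 + t ≠ 0 := by omega
            simp only [h1, if_false]
            have h3 : 1 + t - 1 = t := by omega
            rw [h3]
            rcases Nat.eq_zero_or_pos t with rfl | ht
            · rwa [hγ0]
            · exact hfree t ht (by omega)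

lemma truncateLastVisit (γ : ℕ → Fin n) (l : ℕ) (i j : Fin n)
    (hγ0 : γ 0 = i) (hγl : γ (l + 1) = j)
    (hsteps : ∀ s, s ≤ l → 0 < P (γ s) (γ (s + 1)))
    (hfree : ∀ s, 1 ≤ s → s ≤ l → z (γ s) < 1) :
    ∃ (l' : ℕ) (δ : ℕ → Fin n), δ 0 = i ∧ δ (l' + 1) = j ∧
      (∀ s, s ≤ l' → 0 < P (δ s) (δ (s + 1))) ∧
      (∀ s, 1 ≤ s → s ≤ l' → z (δ s) < 1 ∧ δ s ≠ i) := by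
  classical
  set r := Nat.findGreatest (fun s => γ s = i) l with hr
  have hrl : r ≤ l := Nat.findGreatest_le l
  have hγr : γ r = i := by
    have := Nat.findGreatest_spec (P := fun s => γ s = i) (Nat.zero_le l) hγ0
    rwa [← hr] at this
  refine ⟨l - r, fun s => γ (r + s), by simpa using hγr, ?_, ?_, ?_⟩
  · have h : r + (l - r + 1) = l + 1 := by omega
    show γ (r + (l - r + 1)) = j
    rw [h, hγl]
  · intro s hs
    have h1 : r + s ≤ l := by omega
    have h2 : r + (s + 1) = (r + s) + 1 := by omega
    show 0 < P (γ (r + s)) (γ (r + (s + 1)))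
    rw [h2]
    exact hsteps (r + s) h1
  · intro s hs1 hs2
    have h1 : r + s ≤ l := by omega
    constructor
    · exact hfree (r + s) (by omega) h1
    · have := Nat.findGreatest_is_greatest (P := fun s => γ s = i) (n := l) (k := r + s)
        (by rw [← hr]; omega) h1
      exact this

def restrictedEdge' {n : ℕ} (P : Matrix (Fin n) (Fin n) ℝ) (S : Set (Fin n))
    (i j : Fin n) : Prop :=
  i ∈ S ∧ j ∈ S ∧ i ≠ j ∧
    ∃ (l : ℕ) (γ : ℕ → Fin n), γ 0 = i ∧ γ (l + 1) = j ∧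
      (∀ s, s ≤ l → 0 < P (γ s) (γ (s + 1))) ∧
      (∀ s, 1 ≤ s → s ≤ l → γ s ∉ S)

lemma transGenOfPath (P : Matrix (Fin n) (Fin n) ℝ) (S : Set (Fin n)) :
    ∀ m : ℕ, ∀ a b : Fin n, ∀ γ : ℕ → Fin n, a ∈ S → b ∈ S → a ≠ b →
      γ 0 = a → γ m = b → (∀ s, s < m → 0 < P (γ s) (γ (s + 1))) →
      Relation.TransGen (restrictedEdge' P S) a b := by
  intro m
  induction m using Nat.strong_induction_on with
  | _ m ih =>
    intro a b γ ha hb hab hγ0 hγm hsteps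
    classical
    have hm : 1 ≤ m := by
      rcases Nat.eq_zero_or_pos m with rfl | h
      · exact absurd (hγ0 ▸ hγm ▸ rfl) hab
      · exact h
    have hex : ∃ s, 1 ≤ s ∧ s ≤ m ∧ γ s ∈ S := ⟨m, hm, le_rfl, hγm ▸ hb⟩
    set s₁ := Nat.find hex with hs₁def
    obtain ⟨hs11, hs1m, hcS⟩ := Nat.find_spec hex
    have hmin : ∀ t, 1 ≤ t → t < s₁ → γ t ∉ S := by
      intro t h1 h2 hS
      exact Nat.find_min hex h2 ⟨h1, by omega, hS⟩
    set c := γ s₁ with hcdef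
    by_cases hca : c = a
    · refine ih (m - s₁) (by omega) a b (fun s => γ (s₁ + s)) ha hb hab ?_ ?_ ?_
      · show γ (s₁ + 0) = a
        rw [Nat.add_zero, ← hcdef, hca]
      · show γ (s₁ + (m - s₁)) = b
        rw [show s₁ + (m - s₁) = m by omega, hγm]
      · intro s hs
        show 0 < P (γ (s₁ + s)) (γ (s₁ + (s + 1)))
        rw [show s₁ + (s + 1) = (s₁ + s) + 1 by omega]
        exact hsteps (s₁ + s) (by omega)
    · have hedge : restrictedEdge' P S a c := by
        refine ⟨ha, hcS, fun h => hca h.symm, s₁ - 1, γ, hγ0, ?_, ?_, ?_⟩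
        · rw [show s₁ - 1 + 1 = s₁ by omega]
        · intro s hs
          exact hsteps s (by omega)
        · intro s h1 h2
          exact hmin s h1 (by omega)
      by_cases hcb : c = b
      · exact Relation.TransGen.single (hcb ▸ hedge)
      · have htail : Relation.TransGen (restrictedEdge' P S) c b := by
          refine ih (m - s₁) (by omega) c b (fun s => γ (s₁ + s)) hcS hb hcb rfl ?_ ?_
          · show γ (s₁ + (m - s₁)) = b
            rw [show s₁ + (m - s₁) = m by omega, hγm]
          · intro s hs
            show 0 < P (γ (s₁ + s)) (γ (s₁ + (s + 1)))
            rw [show s₁ + (s + 1) = (s₁ + s) + 1 by omega]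
            exact hsteps (s₁ + s) (by omega)
        exact Relation.TransGen.head hedge htail

lemma existsHitVector (P : Matrix (Fin n) (Fin n) ℝ) (hPnn : ∀ i j, 0 ≤ P i j)
    (hProw : ∀ i, ∑ j, P i j = 1) (hPprim : ∃ m : ℕ, ∀ i j, 0 < (P ^ m) i j)
    (i : Fin n) :
    ∃ w : Fin n → ℝ, w i = 0 ∧ ∀ k, k ≠ i → w k = 1 + ∑ j, P k j * w j := by
  classical
  set B : Matrix (Fin n) (Fin n) ℝ := fun k j =>
    if k = i then (if j = i then 1 else 0) else ((if k = j then (1:ℝ) else 0) - P k j)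
    with hB
  have hmv : ∀ (w : Fin n → ℝ) (k : Fin n),
      B.mulVec w k = if k = i then w i else w k - ∑ j, P k j * w j := by
    intro w k
    rw [Matrix.mulVec, dotProduct]
    by_cases hk : k = i
    · simp only [hB, hk, if_true]
      simp [ite_mul]
    · simp only [hB, hk, if_false]
      simp only [sub_mul, ite_mul, one_mul, zero_mul]
      rw [Finset.sum_sub_distrib, Finset.sum_ite_eq]
      simp
  have hker : ∀ w : Fin n → ℝ, B.mulVec w = 0 → w = 0 := by
    intro w hw
    have h1 : w i = 0 := by
      have := congrFun hw i
      rwa [hmv, if_pos rfl] at this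
    have h2 : ∀ k, k ∉ ({i} : Set (Fin n)) → w k = ∑ j, P k j * w j := by
      intro k hk
      have hk' : k ≠ i := hk
      have := congrFun hw k
      rw [hmv, if_neg hk'] at this
      have : w k - ∑ j, P k j * w j = 0 := this
      linarith
    have := maxPrinciple P hPnn hProw hPprim ({i} : Set (Fin n)) ⟨i, rfl⟩ w
      (by intro s hs; rw [Set.mem_singleton_iff] at hs; rw [hs]; exact h1) h2
    funext k
    exact this k
  have hinj : Function.Injective (Matrix.mulVecLin B) := by
    intro w w' h
    have : B.mulVec (w - w') = 0 := by
      rw [Matrix.mulVec_sub]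
      simp only [Matrix.mulVecLin_apply] at h
      rw [h]
      simp
    have := hker _ this
    exact sub_eq_zero.mp this
  have hsurj : Function.Surjective (Matrix.mulVecLin B) :=
    (LinearMap.injective_iff_surjective).mp hinj
  obtain ⟨w, hw⟩ := hsurj (fun k => if k = i then 0 else 1)
  refine ⟨w, ?_, ?_⟩
  · have := congrFun hw i
    rw [Matrix.mulVecLin_apply] at this
    rw [hmv] at this
    simpa using this
  · intro k hk
    have := congrFun hw k
    rw [Matrix.mulVecLin_apply] at this
    rw [hmv, if_neg hk] at this
    rw [if_neg hk] at this
    linarith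

lemma updateBox {z : Fin n → ℝ} (hz : ∀ i, z i ∈ Set.Icc (0:ℝ) 1) (i : Fin n)
    {t : ℝ} (ht : t ∈ Set.Icc (0:ℝ) 1) :
    ∀ u, Function.update z i t u ∈ Set.Icc (0:ℝ) 1 := by
  intro u
  rw [Function.update_apply]
  split
  · exact ht
  · exact hz u

lemma devFacts (P : Matrix (Fin n) (Fin n) ℝ) (hPnn : ∀ i j, 0 ≤ P i j)
    (hProw : ∀ i, ∑ j, P i j = 1) (hPprim : ∃ m : ℕ, ∀ i j, 0 < (P ^ m) i j)
    (z : Fin n → ℝ) (hz : ∀ i, z i ∈ Set.Icc (0:ℝ) 1)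
    {i j₂ : Fin n} (hi : z i = 1) (hj₂ : z j₂ = 1) (hne : j₂ ≠ i)
    (K : Matrix (Fin n) (Fin n) ℝ)
    (hK : ∀ a b, Tendsto (fun t : ℕ => ((Qmat P (Function.update z i 0)) ^ t) a b)
      atTop (𝓝 (K a b))) :
    (∀ j, 0 ≤ K i j) ∧ (∑ j, K i j = 1) ∧
    (∀ j, ¬(z j = 1 ∧ j ≠ i) → K i j = 0) ∧
    (∀ j, restrictedEdge' P {u | z u = 1} i j → 0 < K i j) ∧
    (∀ j, 0 < K i j → restrictedEdge' P {u | z u = 1} i j) := by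
  classical
  set z' := Function.update z i 0 with hz'def
  have hz' : ∀ u, z' u ∈ Set.Icc (0:ℝ) 1 :=
    updateBox hz i ⟨le_rfl, zero_le_one⟩
  have hz'i : z' i = 0 := Function.update_self i 0 z
  have hz'ne : ∀ u, u ≠ i → z' u = z u := fun u hu => Function.update_of_ne hu 0 z
  have hsupp : ∀ j, ¬(z j = 1 ∧ j ≠ i) → K i j = 0 := by
    intro j hj
    set T : Set (Fin n) := {u | z u = 1 ∧ u ≠ i} with hT
    have hjT : j ∉ T := hj
    have hTne : ∃ s, s ∈ T := ⟨j₂, hj₂, hne⟩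
    have hcol := maxPrinciple P hPnn hProw hPprim T hTne (fun u => K u j) ?_ ?_
    · exact hcol i
    · intro s hs
      have hs' : z' s = 1 := by rw [hz'ne s hs.2]; exact hs.1
      show K s j = 0
      rw [Hlim_stubborn hK hs' j]
      have : s ≠ j := fun h => hjT (h ▸ hs)
      simp [this]
    · intro u hu
      have hu1 : z' u < 1 := by
        by_cases h : u = i
        · rw [h, hz'i]; norm_num
        · rw [hz'ne u h]
          rcases lt_or_eq_of_le (hz u).2 with h' | h'
          · exact h'
          · exact absurd ⟨h', h⟩ hu
      show K u j = ∑ v, P u v * K v j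
      exact Hlim_harmonic hK hu1 j
  refine ⟨fun j => Hlim_nonneg hPnn hz' hK i j, Hlim_rowsum hProw hK i, hsupp, ?_, ?_⟩
  · -- edge implies positive
    rintro j ⟨hiS, hjS, hij, l, γ, h0, hl, hsteps, hint⟩
    have hj' : z' j = 1 := by
      rw [hz'ne j (Ne.symm hij)]; exact hjS
    apply Hlim_pos_of_path hPnn hz' hK hj' l γ h0 hl hsteps
    intro s hs
    show z' (γ s) < 1
    by_cases h : γ s = i
    · rw [h, hz'i]; norm_num
    · rw [hz'ne _ h]
      rcases Nat.eq_zero_or_pos s with rfl | hs1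
      · exact absurd h0 h
      · have hninS := hint s hs1 hs
        rcases lt_or_eq_of_le (hz (γ s)).2 with h' | h'
        · exact h'
        · exact absurd h' hninS
  · -- positive implies edge
    intro j hpos
    have hjT : z j = 1 ∧ j ≠ i := by
      by_contra h
      rw [hsupp j h] at hpos
      exact lt_irrefl 0 hpos
    have hex : ∃ m, 0 < ((Qmat P z') ^ m) i j := by
      by_contra h
      push_neg at h
      have hzz : ∀ m, ((Qmat P z') ^ m) i j = 0 := fun m =>
        le_antisymm (h m) (powEntryNonneg _ (Qmat_nonneg P hPnn z' hz') m i j)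
      have h1 := hK i j
      have h2 : (fun m : ℕ => ((Qmat P z') ^ m) i j) = fun _ => (0:ℝ) := funext hzz
      rw [h2] at h1
      have := tendsto_nhds_unique h1 tendsto_const_nhds
      rw [this] at hpos
      exact lt_irrefl 0 hpos
    obtain ⟨m, hm⟩ := hex
    have hj' : z' j = 1 := by rw [hz'ne j hjT.2]; exact hjT.1
    rcases pathOfQPowPos hPnn hz' m i j hj' hm with h | ⟨l, γ, h0, hl, hsteps, hint⟩
    · exact absurd h.symm hjT.2
    · obtain ⟨l', δ, hδ0, hδl, hδsteps, hδint⟩ :=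
        truncateLastVisit (z := z') γ l i j h0 hl hsteps hint
      refine ⟨hi, hjT.1, Ne.symm hjT.2, l', δ, hδ0, hδl, hδsteps, ?_⟩
      intro s hs1 hs2
      obtain ⟨hlt, hni⟩ := hδint s hs1 hs2
      rw [hz'ne _ hni] at hlt
      exact ne_of_lt hlt

lemma stubbornCostEq (P : Matrix (Fin n) (Fin n) ℝ)
    (σ2 : Fin n → ℝ) {z : Fin n → ℝ} {K : Matrix (Fin n) (Fin n) ℝ}
    (hK : ∀ a b, Tendsto (fun t : ℕ => ((Qmat P z) ^ t) a b) atTop (𝓝 (K a b)))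
    {i : Fin n} (hi : z i = 1) :
    ∑ j, (K i j) ^ 2 * σ2 j = σ2 i := by
  have hst : ∀ j, K i j = if i = j then 1 else 0 := Hlim_stubborn hK hi
  have h1 : ∀ j, (K i j) ^ 2 * σ2 j = if i = j then σ2 j else 0 := by
    intro j
    rw [hst j]
    split <;> ring
  rw [Finset.sum_congr rfl (fun j _ => h1 j), Finset.sum_ite_eq]
  simp

lemma singletonNoNE (hn : 2 ≤ n) (P : Matrix (Fin n) (Fin n) ℝ)
    (hPnn : ∀ i j, 0 ≤ P i j) (hProw : ∀ i, ∑ j, P i j = 1)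
    (hPdiag : ∀ i, P i i = 0) (hPprim : ∃ m : ℕ, ∀ i j, 0 < (P ^ m) i j)
    (σ2 : Fin n → ℝ) (hσ : ∀ i, 0 < σ2 i)
    (H : (Fin n → ℝ) → Matrix (Fin n) (Fin n) ℝ)
    (hH : ∀ z : Fin n → ℝ, (∀ i, z i ∈ Set.Icc (0:ℝ) 1) →
      ∀ a b, Tendsto (fun t : ℕ => ((Qmat P z) ^ t) a b) atTop (𝓝 (H z a b)))
    (z : Fin n → ℝ) (hz : ∀ i, z i ∈ Set.Icc (0:ℝ) 1)
    {i : Fin n} (hi : z i = 1) (honly : ∀ k, k ≠ i → z k < 1)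
    (hNE : ∀ t ∈ Set.Icc (0 : ℝ) 1,
      ∑ j, (H z i j) ^ 2 * σ2 j ≤ ∑ j, (H (Function.update z i t) i j) ^ 2 * σ2 j) :
    False := by
  classical
  set Stot := ∑ j, σ2 j with hStot
  have hStotpos : 0 < Stot := Finset.sum_pos (fun j _ => hσ j) ⟨i, Finset.mem_univ i⟩
  have hσle : ∀ k, σ2 k ≤ Stot :=
    fun k => Finset.single_le_sum (fun j _ => le_of_lt (hσ j)) (Finset.mem_univ k)
  -- cost at z
  have hczi : ∑ j, (H z i j) ^ 2 * σ2 j = σ2 i := stubbornCostEq P σ2 (hH z hz) hi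
  -- hitting vector
  obtain ⟨w, hwi, hwk⟩ := existsHitVector P hPnn hProw hPprim i
  set Kw := ∑ j, P i j * w j with hKw
  -- a second agent
  have h1n : 1 < n := hn
  have hex2 : ∃ k : Fin n, k ≠ i := by
    by_cases h : i = ⟨0, by omega⟩
    · exact ⟨⟨1, by omega⟩, by rw [h]; intro hc; simp [Fin.ext_iff] at hc⟩
    · exact ⟨⟨0, by omega⟩, fun hc => h (hc ▸ rfl)⟩
  obtain ⟨k₀, hk₀⟩ := hex2
  set Sc := Finset.univ.erase i with hSc
  have hScne : Sc.Nonempty := ⟨k₀, Finset.mem_erase.mpr ⟨hk₀, Finset.mem_univ _⟩⟩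
  have hmemSc : ∀ k, k ≠ i → k ∈ Sc := fun k hk => Finset.mem_erase.mpr ⟨hk, Finset.mem_univ _⟩
  have hScni : ∀ k ∈ Sc, k ≠ i := fun k hk => (Finset.mem_erase.mp hk).1
  set ε0 := Sc.inf' hScne (fun k => 1 - z k) with hε0
  have hε0pos : 0 < ε0 := by
    rw [hε0, Finset.lt_inf'_iff]
    intro k hk
    have := honly k (hScni k hk)
    linarith
  have hε0le : ∀ k ∈ Sc, ε0 ≤ 1 - z k := fun k hk => Finset.inf'_le _ hk
  -- choice of t
  set x := σ2 i / (σ2 i + Stot) with hx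
  have hden : 0 < σ2 i + Stot := by linarith [hσ i]
  have hxpos : 0 < x := div_pos (hσ i) hden
  have hxeq : x * (σ2 i + Stot) = σ2 i := by
    rw [hx]; field_simp
  set D := |Kw| / ε0 + 1 with hD
  have hKwnn : 0 ≤ |Kw| / ε0 := div_nonneg (abs_nonneg _) (le_of_lt hε0pos)
  have hDpos : 0 < D := by rw [hD]; linarith
  set m0 := min (x / D) 1 with hm0
  have hm0pos : 0 < m0 := lt_min (div_pos hxpos hDpos) one_pos
  have hm0le1 : m0 ≤ 1 := min_le_right _ _
  set t := 1 - m0 with ht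
  have ht01 : t ∈ Set.Icc (0:ℝ) 1 := ⟨by rw [ht]; linarith, by rw [ht]; linarith⟩
  have htlt : t < 1 := by rw [ht]; linarith
  -- the deviated profile
  set z' := Function.update z i t with hz'def
  have hz' : ∀ u, z' u ∈ Set.Icc (0:ℝ) 1 := updateBox hz i ht01
  have hz'i : z' i = t := Function.update_self i t z
  have hz'ne : ∀ u, u ≠ i → z' u = z u := fun u hu => Function.update_of_ne hu t z
  have hK := hH z' hz'
  set μ : Fin n → ℝ := fun j => H z' i j with hμ
  have hμnn : ∀ j, 0 ≤ μ j := fun j => Hlim_nonneg hPnn hz' hK i j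
  have hμsum : ∑ j, μ j = 1 := Hlim_rowsum hProw hK i
  have hinv : ∀ jj, ∑ k, μ k * Qmat P z' k jj = μ jj := fun jj => Hlim_right hK i jj
  -- mass off i
  set a := ∑ k ∈ Sc, μ k with ha
  have hμia : μ i + a = 1 := by
    rw [ha, hSc]
    rw [Finset.add_sum_erase _ μ (Finset.mem_univ i)]
    exact hμsum
  have ha0 : 0 ≤ a := Finset.sum_nonneg fun k _ => hμnn k
  have hμile : μ i ≤ 1 := by linarith
  have hμk_le_a : ∀ k ∈ Sc, μ k ≤ a :=
    fun k hk => Finset.single_le_sum (fun j _ => hμnn j) hk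
  -- a is positive
  have hapos : 0 < a := by
    rcases lt_or_eq_of_le ha0 with h | h
    · exact h
    · exfalso
      have hall0 : ∀ k ∈ Sc, μ k = 0 :=
        (Finset.sum_eq_zero_iff_of_nonneg (fun k _ => hμnn k)).mp h.symm
      have hμi1 : μ i = 1 := by linarith
      obtain ⟨js, hjs⟩ := sumPosExists (hPnn i) (by rw [hProw i]; norm_num)
      have hjsne : js ≠ i := by
        intro hc
        rw [hc, hPdiag i] at hjs
        exact lt_irrefl 0 hjs
      have h1 : μ i * Qmat P z' i js ≤ ∑ k, μ k * Qmat P z' k js :=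
        Finset.single_le_sum (f := fun k => μ k * Qmat P z' k js)
          (fun k _ => mul_nonneg (hμnn k) (Qmat_nonneg P hPnn z' hz' k js))
          (Finset.mem_univ i)
      rw [hinv js, hall0 js (hmemSc js hjsne)] at h1
      have h2 : Qmat P z' i js = (1 - t) * P i js := by
        rw [Qmat_apply, if_neg (show ¬ i = js from fun h => hjsne h.symm), add_zero, hz'i]
      rw [hμi1, one_mul, h2] at h1
      nlinarith
  -- the key identity
  have hQw : ∀ k, ∑ jj, Qmat P z' k jj * w jj
      = (1 - z' k) * (∑ jj, P k jj * w jj) + z' k * w k := by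
    intro k
    simp only [Qmat_apply, add_mul, ite_mul, zero_mul]
    rw [Finset.sum_add_distrib, Finset.sum_ite_eq]
    simp [Finset.mul_sum, mul_assoc]
  have hswap1 : ∀ jj, μ jj * w jj = ∑ k, μ k * Qmat P z' k jj * w jj := by
    intro jj
    rw [← hinv jj, Finset.sum_mul]
  have hswap : ∑ jj, μ jj * w jj = ∑ k, μ k * ∑ jj, Qmat P z' k jj * w jj := by
    rw [Finset.sum_congr rfl fun jj _ => hswap1 jj, Finset.sum_comm]
    apply Finset.sum_congr rfl
    intro k _
    rw [Finset.mul_sum]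
    apply Finset.sum_congr rfl
    intro jj _
    ring
  have hterm : ∀ k ∈ Sc, μ k * ∑ jj, Qmat P z' k jj * w jj
      = μ k * w k - μ k * (1 - z k) := by
    intro k hk
    have hkne := hScni k hk
    rw [hQw k, hz'ne k hkne, hwk k hkne]
    ring
  have htermi : μ i * ∑ jj, Qmat P z' i jj * w jj = μ i * ((1 - t) * Kw) := by
    rw [hQw i, hz'i, hwi, hKw]
    ring
  have hsplit : ∀ g : Fin n → ℝ, ∑ k, g k = g i + ∑ k ∈ Sc, g k := by
    intro g
    rw [hSc, Finset.add_sum_erase _ g (Finset.mem_univ i)]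
  have hident : ∑ k ∈ Sc, μ k * (1 - z k) = μ i * ((1 - t) * Kw) := by
    have e1 : ∑ jj, μ jj * w jj = ∑ k ∈ Sc, μ k * w k := by
      rw [hsplit (fun jj => μ jj * w jj), hwi]
      ring_nf
    have e2 : ∑ k, μ k * ∑ jj, Qmat P z' k jj * w jj
        = μ i * ((1 - t) * Kw) + (∑ k ∈ Sc, μ k * w k - ∑ k ∈ Sc, μ k * (1 - z k)) := by
      rw [hsplit (fun k => μ k * ∑ jj, Qmat P z' k jj * w jj), htermi,
        Finset.sum_congr rfl hterm, Finset.sum_sub_distrib]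
    rw [e1, e2] at hswap
    linarith
  -- bound a
  have habound : ε0 * a ≤ m0 * |Kw| := by
    have h1 : ε0 * a ≤ ∑ k ∈ Sc, μ k * (1 - z k) := by
      rw [ha, Finset.mul_sum]
      apply Finset.sum_le_sum
      intro k hk
      calc ε0 * μ k ≤ (1 - z k) * μ k :=
            mul_le_mul_of_nonneg_right (hε0le k hk) (hμnn k)
        _ = μ k * (1 - z k) := by ring
    have h2 : μ i * ((1 - t) * Kw) ≤ m0 * |Kw| := by
      have hm : (1 - t) = m0 := by rw [ht]; ring
      rw [hm]
      calc μ i * (m0 * Kw) ≤ μ i * (m0 * |Kw|) := by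
            apply mul_le_mul_of_nonneg_left _ (hμnn i)
            exact mul_le_mul_of_nonneg_left (le_abs_self Kw) (le_of_lt hm0pos)
        _ ≤ 1 * (m0 * |Kw|) := by
            apply mul_le_mul_of_nonneg_right hμile
            exact mul_nonneg (le_of_lt hm0pos) (abs_nonneg _)
        _ = m0 * |Kw| := by ring
    linarith [hident]
  have hax : a < x := by
    have h1 : a ≤ m0 * (|Kw| / ε0) := by
      rw [div_eq_mul_inv, ← mul_assoc]
      rw [← mul_le_mul_iff_of_pos_right hε0pos]
      calc a * ε0 = ε0 * a := by ring
        _ ≤ m0 * |Kw| := habound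
        _ = m0 * |Kw| * ε0⁻¹ * ε0 := by
            field_simp
    have h2 : m0 * (|Kw| / ε0) ≤ (x / D) * (|Kw| / ε0) :=
      mul_le_mul_of_nonneg_right (min_le_left _ _) hKwnn
    have h3 : (x / D) * (|Kw| / ε0) < (x / D) * D := by
      apply mul_lt_mul_of_pos_left _ (div_pos hxpos hDpos)
      rw [hD]; linarith
    have h4 : (x / D) * D = x := by field_simp
    linarith
  -- cost bound
  have hμieq : μ i = 1 - a := by linarith
  have hcost : ∑ j, μ j ^ 2 * σ2 j < σ2 i := by
    have h1 : ∑ j, μ j ^ 2 * σ2 j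
        = μ i ^ 2 * σ2 i + ∑ k ∈ Sc, μ k ^ 2 * σ2 k :=
      hsplit (fun j => μ j ^ 2 * σ2 j)
    have h2 : ∑ k ∈ Sc, μ k ^ 2 * σ2 k ≤ ∑ k ∈ Sc, (a * μ k) * Stot := by
      apply Finset.sum_le_sum
      intro k hk
      have hk1 : μ k ^ 2 ≤ a * μ k := by
        rw [pow_two]
        exact mul_le_mul_of_nonneg_right (hμk_le_a k hk) (hμnn k)
      apply mul_le_mul hk1 (hσle k) (le_of_lt (hσ k))
      exact mul_nonneg (le_of_lt hapos) (hμnn k)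
    have h3 : ∑ k ∈ Sc, (a * μ k) * Stot = a ^ 2 * Stot := by
      rw [← Finset.sum_mul, ← Finset.mul_sum, ← ha]
      ring
    have hkey : a * (σ2 i + Stot) < σ2 i := by
      calc a * (σ2 i + Stot) < x * (σ2 i + Stot) :=
            mul_lt_mul_of_pos_right hax hden
        _ = σ2 i := hxeq
    have h4 : ∑ k ∈ Sc, μ k ^ 2 * σ2 k ≤ a * a * Stot := by
      have := le_trans h2 (le_of_eq h3)
      calc ∑ k ∈ Sc, μ k ^ 2 * σ2 k ≤ a ^ 2 * Stot := this
        _ = a * a * Stot := by ring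
    have h5 : a * a * σ2 i + a * a * Stot < a * σ2 i := by
      have h5a : a * (a * (σ2 i + Stot)) < a * σ2 i :=
        mul_lt_mul_of_pos_left hkey hapos
      have h5b : a * (a * (σ2 i + Stot)) = a * a * σ2 i + a * a * Stot := by ring
      linarith
    have hpos2 : 0 < a * σ2 i := mul_pos hapos (hσ i)
    have hexp : (1 - a) ^ 2 * σ2 i = σ2 i - 2 * (a * σ2 i) + a * a * σ2 i := by ring
    rw [h1, hμieq, hexp]
    linarith
  -- contradiction with Nash
  have hne := hNE t ht01
  rw [hczi, ← hz'def] at hne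
  simp only [hμ] at hcost
  linarith

/-- Every non-strict Nash equilibrium `z` is such that the restricted
graph `G_P[S(z)]` is a directed ring: every node of `S(z) = {i : z_i = 1}` has
exactly one out-neighbor and exactly one in-neighbor in `G_P[S(z)]`, and
`G_P[S(z)]` is strongly connected. -/
theorem stmt_15 (n : ℕ) (hn : 2 ≤ n)
    (P : Matrix (Fin n) (Fin n) ℝ)
    (hPnn : ∀ i j, 0 ≤ P i j)
    (hProw : ∀ i, ∑ j, P i j = 1)
    (hPdiag : ∀ i, P i i = 0)
    (hPprim : ∃ m : ℕ, ∀ i j, 0 < (P ^ m) i j)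
    (π : Fin n → ℝ)
    (hπpos : ∀ i, 0 < π i)
    (hπsum : ∑ i, π i = 1)
    (hπinv : ∀ j, ∑ i, π i * P i j = π j)
    (σ2 : Fin n → ℝ) (hσ : ∀ i, 0 < σ2 i)
    (H : (Fin n → ℝ) → Matrix (Fin n) (Fin n) ℝ)
    (hH : ∀ z : Fin n → ℝ, (∀ i, z i ∈ Set.Icc (0 : ℝ) 1) →
      ∀ i j, Tendsto
        (fun t : ℕ => (((1 - Matrix.diagonal z) * P + Matrix.diagonal z) ^ t) i j)
        atTop (𝓝 (H z i j)))
    (z : Fin n → ℝ) (hz : ∀ i, z i ∈ Set.Icc (0 : ℝ) 1)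
    (hNE : ∀ i : Fin n, ∀ t ∈ Set.Icc (0 : ℝ) 1,
      ∑ j, (H z i j) ^ 2 * σ2 j ≤
        ∑ j, (H (Function.update z i t) i j) ^ 2 * σ2 j)
    (hnotstrict : ¬ ∀ i : Fin n, ∀ t ∈ Set.Icc (0 : ℝ) 1, t ≠ z i →
      ∑ j, (H z i j) ^ 2 * σ2 j <
        ∑ j, (H (Function.update z i t) i j) ^ 2 * σ2 j) :
    (∀ i, z i = 1 → ∃! j, restrictedEdge P {i | z i = 1} i j) ∧
    (∀ j, z j = 1 → ∃! i, restrictedEdge P {i | z i = 1} i j) ∧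
    (∀ i j, z i = 1 → z j = 1 → i ≠ j →
      Relation.TransGen (restrictedEdge P {i | z i = 1}) i j) := by
  
  classical
  set S : Set (Fin n) := {i | z i = 1} with hS
  have hHQ : ∀ z' : Fin n → ℝ, (∀ i, z' i ∈ Set.Icc (0 : ℝ) 1) →
      ∀ i j, Tendsto (fun t : ℕ => ((Qmat P z') ^ t) i j) atTop (𝓝 (H z' i j)) := hH
  -- strong connectivity is unconditional
  have hconn : ∀ i j, z i = 1 → z j = 1 → i ≠ j →
      Relation.TransGen (restrictedEdge P S) i j := by
    intro i j hi hj hij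
    obtain ⟨m, hm⟩ := hPprim
    obtain ⟨γ, h0, hm', hsteps⟩ := existsPathOfPowPos P hPnn m i j (hm i j)
    have ht := transGenOfPath P S m i j γ hi hj hij h0 hm' hsteps
    exact ht
  by_cases hS0 : ∀ i : Fin n, z i ≠ 1
  · exact ⟨fun i hi => absurd hi (hS0 i), fun j hj => absurd hj (hS0 j),
      fun i j hi _ _ => absurd hi (hS0 i)⟩
  push_neg at hS0
  obtain ⟨i₀, hi₀⟩ := hS0
  by_cases hS2 : ∃ j₂, z j₂ = 1 ∧ j₂ ≠ i₀
  swap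
  · -- singleton stubborn set: contradiction
    exfalso
    push_neg at hS2
    have honly : ∀ k, k ≠ i₀ → z k < 1 := by
      intro k hk
      rcases lt_or_eq_of_le (hz k).2 with h | h
      · exact h
      · exact absurd (hS2 k h) (by simpa using hk)
    exact singletonNoNE hn P hPnn hProw hPdiag hPprim σ2 hσ H hHQ z hz hi₀ honly
      (fun t ht => hNE i₀ t ht)
  obtain ⟨j₂', hj₂', hj₂'ne⟩ := hS2
  have htwo : ∀ i, ∃ k, z k = 1 ∧ k ≠ i := by
    intro i
    by_cases h : i = i₀
    · exact ⟨j₂', hj₂', h ▸ hj₂'ne⟩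
    · exact ⟨i₀, hi₀, fun hc => h hc.symm⟩
  -- deviation facts for each stubborn agent
  have hdev : ∀ i, z i = 1 →
      (∀ j, 0 ≤ H (Function.update z i 0) i j) ∧
      (∑ j, H (Function.update z i 0) i j = 1) ∧
      (∀ j, ¬(z j = 1 ∧ j ≠ i) → H (Function.update z i 0) i j = 0) ∧
      (∀ j, restrictedEdge' P S i j → 0 < H (Function.update z i 0) i j) ∧
      (∀ j, 0 < H (Function.update z i 0) i j → restrictedEdge' P S i j) := by
    intro i hi
    obtain ⟨k, hk1, hk2⟩ := htwo i
    exact devFacts P hPnn hProw hPprim z hz hi hk1 hk2 (H (Function.update z i 0))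
      (hHQ (Function.update z i 0) (updateBox hz i ⟨le_rfl, zero_le_one⟩))
  have hNEi : ∀ i, z i = 1 → σ2 i ≤ ∑ j, (H (Function.update z i 0) i j) ^ 2 * σ2 j := by
    intro i hi
    have h1 := hNE i 0 ⟨le_rfl, zero_le_one⟩
    rwa [stubbornCostEq P σ2 (hHQ z hz) hi] at h1
  -- the maximal variance among stubborn agents
  set Sf : Finset (Fin n) := Finset.univ.filter (fun u => z u = 1) with hSf
  have hSfmem : ∀ u, u ∈ Sf ↔ z u = 1 := by
    intro u; simp [hSf]
  have hSfne : Sf.Nonempty := ⟨i₀, (hSfmem i₀).mpr hi₀⟩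
  obtain ⟨imax, himax, hMmax'⟩ := Finset.exists_max_image Sf σ2 hSfne
  set M := σ2 imax with hM
  have hMmax : ∀ u, z u = 1 → σ2 u ≤ M := fun u hu => hMmax' u ((hSfmem u).mpr hu)
  have hMpos : 0 < M := hσ imax
  -- point-mass claim
  have claimA : ∀ i, z i = 1 → σ2 i = M →
      ∃ j₀, restrictedEdge P S i j₀ ∧ z j₀ = 1 ∧ σ2 j₀ = M ∧
        (∀ j', restrictedEdge P S i j' → j' = j₀) := by
    intro i hi hσi
    obtain ⟨hbnn, hbsum, hbsupp, hbpos, hbedge⟩ := hdev i hi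
    have hble1 : ∀ j, H (Function.update z i 0) i j ≤ 1 := by
      intro j
      have := Finset.single_le_sum (fun k _ => hbnn k) (Finset.mem_univ j)
      rwa [hbsum] at this
    have e1 : M ≤ ∑ j, (H (Function.update z i 0) i j) ^ 2 * σ2 j := hσi ▸ hNEi i hi
    have e2 : ∑ j, (H (Function.update z i 0) i j) ^ 2 * σ2 j
        ≤ M * ∑ j, (H (Function.update z i 0) i j) ^ 2 := by
      rw [Finset.mul_sum]
      apply Finset.sum_le_sum
      intro j _
      by_cases hbj : H (Function.update z i 0) i j = 0
      · rw [hbj]; simp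
      · have hj1 : z j = 1 ∧ j ≠ i := by
          by_contra h
          exact hbj (hbsupp j h)
        calc (H (Function.update z i 0) i j) ^ 2 * σ2 j
            ≤ (H (Function.update z i 0) i j) ^ 2 * M :=
              mul_le_mul_of_nonneg_left (hMmax j hj1.1) (sq_nonneg _)
          _ = M * (H (Function.update z i 0) i j) ^ 2 := by ring
    have e3 : ∑ j, (H (Function.update z i 0) i j) ^ 2 ≤ 1 := by
      rw [← hbsum]
      apply Finset.sum_le_sum
      intro j _
      calc (H (Function.update z i 0) i j) ^ 2
          = H (Function.update z i 0) i j * H (Function.update z i 0) i j := by ring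
        _ ≤ 1 * H (Function.update z i 0) i j :=
            mul_le_mul_of_nonneg_right (hble1 j) (hbnn j)
        _ = H (Function.update z i 0) i j := by ring
    have hsq1 : ∑ j, (H (Function.update z i 0) i j) ^ 2 = 1 := by
      have h1 : M * 1 ≤ M * ∑ j, (H (Function.update z i 0) i j) ^ 2 := by
        rw [mul_one]
        exact le_trans e1 e2
      have h2 : 1 ≤ ∑ j, (H (Function.update z i 0) i j) ^ 2 :=
        le_of_mul_le_mul_left h1 hMpos
      linarith
    have hb01 : ∀ j, H (Function.update z i 0) i j = 0 ∨ H (Function.update z i 0) i j = 1 := by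
      have hzero : ∑ j, (H (Function.update z i 0) i j
          - (H (Function.update z i 0) i j) ^ 2) = 0 := by
        rw [Finset.sum_sub_distrib, hbsum, hsq1]
        ring
      have hterms := (Finset.sum_eq_zero_iff_of_nonneg (fun j _ => by
        have h1 := hbnn j
        have h2 := hble1 j
        nlinarith)).mp hzero
      intro j
      have := hterms j (Finset.mem_univ j)
      have h1 := hbnn j
      have h2 : H (Function.update z i 0) i j * (1 - H (Function.update z i 0) i j) = 0 := by
        nlinarith [this]
      rcases mul_eq_zero.mp h2 with h | h
      · exact Or.inl h
      · exact Or.inr (by linarith)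
    obtain ⟨j₀, hj₀pos⟩ := sumPosExists hbnn (by rw [hbsum]; norm_num)
    have hj₀1 : H (Function.update z i 0) i j₀ = 1 := by
      rcases hb01 j₀ with h | h
      · exact absurd h (ne_of_gt hj₀pos)
      · exact h
    have huniq : ∀ j', 0 < H (Function.update z i 0) i j' → j' = j₀ := by
      intro j' hj'
      by_contra hne
      have hj'1 : H (Function.update z i 0) i j' = 1 := by
        rcases hb01 j' with h | h
        · exact absurd h (ne_of_gt hj')
        · exact h
      have hpair : ({j₀, j'} : Finset (Fin n)).sum (fun j => H (Function.update z i 0) i j)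
          = 2 := by
        rw [Finset.sum_pair (fun h => hne h.symm)]
        rw [hj₀1, hj'1]; norm_num
      have hle : ({j₀, j'} : Finset (Fin n)).sum (fun j => H (Function.update z i 0) i j)
          ≤ ∑ j, H (Function.update z i 0) i j :=
        Finset.sum_le_sum_of_subset_of_nonneg (Finset.subset_univ _)
          (fun j _ _ => hbnn j)
      rw [hpair, hbsum] at hle
      norm_num at hle
    have hj₀S : z j₀ = 1 ∧ j₀ ≠ i := by
      by_contra h
      rw [hbsupp j₀ h] at hj₀pos
      exact lt_irrefl 0 hj₀pos
    have hedgej₀ : restrictedEdge P S i j₀ := hbedge j₀ (by rw [hj₀1]; norm_num)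
    have hσj₀ : σ2 j₀ = M := by
      have hsum : ∑ j, (H (Function.update z i 0) i j) ^ 2 * σ2 j = σ2 j₀ := by
        rw [Finset.sum_eq_single j₀]
        · rw [hj₀1]; ring
        · intro j _ hj
          have : H (Function.update z i 0) i j = 0 := by
            rcases hb01 j with h | h
            · exact h
            · exact absurd (huniq j (by rw [h]; norm_num)) hj
          rw [this]; ring
        · intro h; exact absurd (Finset.mem_univ j₀) h
      have h1 : M ≤ σ2 j₀ := hsum ▸ e1
      exact le_antisymm (hMmax j₀ hj₀S.1) h1
    exact ⟨j₀, hedgej₀, hj₀S.1, hσj₀, fun j' hj' => huniq j' (hbpos j' hj')⟩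
  -- all stubborn agents attain the maximum
  have hAll : ∀ i, z i = 1 → σ2 i = M := by
    intro i hi
    by_cases h : i = imax
    · rw [h, hM]
    · have himz : z imax = 1 := (hSfmem imax).mp himax
      have htg := hconn imax i himz hi (fun hc => h hc.symm)
      have hgen : ∀ b, Relation.TransGen (restrictedEdge P S) imax b →
          z b = 1 ∧ σ2 b = M := by
        intro b htgb
        induction htgb with
        | single h1 =>
          obtain ⟨j₀, _, hz0, hσ0, hu⟩ := claimA imax himz hM.symm
          have he := hu _ h1
          rw [he]
          exact ⟨hz0, hσ0⟩
        | tail hpath hlast ih =>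
          obtain ⟨hzc, hσc⟩ := ih
          obtain ⟨j₀, _, hz0, hσ0, hu⟩ := claimA _ hzc hσc
          have he := hu _ hlast
          rw [he]
          exact ⟨hz0, hσ0⟩
      exact (hgen i htg).2
  -- existence of in-neighbors
  have hexin : ∀ jj, z jj = 1 → ∃ a, restrictedEdge P S a jj := by
    intro jj hjj
    obtain ⟨k, hk1, hk2⟩ := htwo jj
    have htg := hconn k jj hk1 hjj hk2
    cases htg with
    | single h1 => exact ⟨k, h1⟩
    | tail _ hlast => exact ⟨_, hlast⟩
  -- packaged out-neighbor data
  have hout : ∀ a ∈ Sf, ∃ j₀, restrictedEdge P S a j₀ ∧ z j₀ = 1 ∧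
      (∀ j', restrictedEdge P S a j' → j' = j₀) := by
    intro a ha
    have haz := (hSfmem a).mp ha
    obtain ⟨j₀, he, hz0, _, hu⟩ := claimA a haz (hAll a haz)
    exact ⟨j₀, he, hz0, hu⟩
  refine ⟨?_, ?_, hconn⟩
  · -- unique out-neighbors
    intro i hi
    obtain ⟨j₀, he, _, _, hu⟩ := claimA i hi (hAll i hi)
    exact ⟨j₀, he, fun j' hj' => hu j' hj'⟩
  · -- unique in-neighbors
    intro j hj
    set f : (a : Fin n) → a ∈ Sf → Fin n := fun a ha => (hout a ha).choose with hf
    have hf1 : ∀ a ha, restrictedEdge P S a (f a ha) := fun a ha => (hout a ha).choose_spec.1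
    have hf2 : ∀ a (ha : a ∈ Sf), f a ha ∈ Sf :=
      fun a ha => (hSfmem _).mpr (hout a ha).choose_spec.2.1
    have hf3 : ∀ a (ha : a ∈ Sf), ∀ j', restrictedEdge P S a j' → j' = f a ha :=
      fun a ha => (hout a ha).choose_spec.2.2
    have hsurj : ∀ b ∈ Sf, ∃ a, ∃ ha : a ∈ Sf, f a ha = b := by
      intro b hb
      obtain ⟨a, hab⟩ := hexin b ((hSfmem b).mp hb)
      have haS : z a = 1 := hab.1
      have ha : a ∈ Sf := (hSfmem a).mpr haS
      exact ⟨a, ha, (hf3 a ha b hab).symm⟩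
    have hinj := Finset.inj_on_of_surj_on_of_card_le f hf2 hsurj le_rfl
    obtain ⟨a, hab⟩ := hexin j hj
    have haS : z a = 1 := hab.1
    have ha : a ∈ Sf := (hSfmem a).mpr haS
    refine ⟨a, hab, ?_⟩
    intro a' hab'
    have ha'S : z a' = 1 := hab'.1
    have ha' : a' ∈ Sf := (hSfmem a').mpr ha'S
    have e1 : f a ha = j := (hf3 a ha j hab).symm
    have e2 : f a' ha' = j := (hf3 a' ha' j hab').symm
    exact hinj ha' ha (e2.trans e1.symm)
end pathLemmas
end

section
/- If σ_i² ≠ σ_j² for every pair of distinct agents i ≠ j, then the set of Nash equilibria equals Z*: z ∈ [0,1]^n is a Nash equilibrium if and only if there exists α with 0 < α ≤ α_* = 1/max_i(π_i σ_i²) such that z_i = 1 − α π_i σ_i² for every i. -/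
open Matrix Filter Topology Finset

/-- geometric decay helper -/
lemma aux_geom_decay (f : ℕ → ℝ) (hf0 : ∀ t, 0 ≤ f t) (hanti : ∀ t, f (t+1) ≤ f t)
    (r : ℝ) (hr0 : 0 ≤ r) (hr1 : r < 1) (N : ℕ) (hN : 1 ≤ N)
    (hdec : ∀ t, f (t + N) ≤ r * f t) :
    Tendsto f atTop (𝓝 0) := by
  have hantile : ∀ s t, s ≤ t → f t ≤ f s := by
    intro s t hst
    induction t with
    | zero => simp_all
    | succ t ih =>
      rcases Nat.lt_or_ge s (t+1) with h | h
      · exact le_trans (hanti t) (ih (by omega))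
      · have : s = t+1 := by omega
        simp [this]
  have hk : ∀ k, f (N * k) ≤ r ^ k * f 0 := by
    intro k
    induction k with
    | zero => simp
    | succ k ih =>
      have : N * (k+1) = N * k + N := by ring
      rw [this]
      calc f (N * k + N) ≤ r * f (N * k) := hdec _
        _ ≤ r * (r ^ k * f 0) := by nlinarith [hf0 (N*k)]
        _ = r ^ (k+1) * f 0 := by ring
  have hbound : ∀ t, f t ≤ r ^ (t / N) * f 0 := by
    intro t
    exact le_trans (hantile _ _ (Nat.mul_div_le t N |>.trans_eq (by ring_nf))) (hk _)
  have hdiv : Tendsto (fun t : ℕ => t / N) atTop atTop := by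
    apply tendsto_atTop_atTop.2
    intro K
    exact ⟨K * N, fun t ht => (Nat.le_div_iff_mul_le (by omega)).2 ht⟩
  have h2 : Tendsto (fun t : ℕ => r ^ (t / N) * f 0) atTop (𝓝 0) := by
    have := (tendsto_pow_atTop_nhds_zero_of_lt_one hr0 hr1).comp hdiv
    simpa using this.mul_const (f 0)
  exact squeeze_zero hf0 hbound h2

lemma aux_pow_nonneg {n : ℕ} (Q : Matrix (Fin n) (Fin n) ℝ) (hQ0 : ∀ i j, 0 ≤ Q i j) :
    ∀ t i j, 0 ≤ (Q ^ t) i j := by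
  intro t
  induction t with
  | zero => intro i j; by_cases h : i = j <;> simp [Matrix.one_apply, h]
  | succ t ih =>
    intro i j
    rw [pow_succ' , Matrix.mul_apply]
    exact Finset.sum_nonneg fun k _ => mul_nonneg (hQ0 i k) (ih k j)

lemma aux_pow_rowsum {n : ℕ} (Q : Matrix (Fin n) (Fin n) ℝ) (hQ1 : ∀ i, ∑ j, Q i j = 1) :
    ∀ t i, ∑ j, (Q ^ t) i j = 1 := by
  intro t
  induction t with
  | zero => intro i; simp [Matrix.one_apply]
  | succ t ih =>
    intro i
    simp only [pow_succ', Matrix.mul_apply]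
    rw [Finset.sum_comm]
    calc ∑ k, ∑ j, Q i k * (Q ^ t) k j = ∑ k, Q i k * ∑ j, (Q ^ t) k j := by
          simp [Finset.mul_sum]
      _ = 1 := by simp [ih, hQ1 i]

lemma aux_conv {n : ℕ} (hn : 2 ≤ n) (Q : Matrix (Fin n) (Fin n) ℝ)
    (hQ0 : ∀ i j, 0 ≤ Q i j) (hQ1 : ∀ i, ∑ j, Q i j = 1)
    (m : ℕ) (hm : 1 ≤ m) (hpos : ∀ i j, 0 < (Q ^ m) i j)
    (p : Fin n → ℝ) (hp0 : ∀ j, 0 ≤ p j) (hp1 : ∑ j, p j = 1)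
    (hpinv : ∀ j, ∑ i, p i * Q i j = p j) :
    ∀ i j, Tendsto (fun t : ℕ => (Q ^ t) i j) atTop (𝓝 (p j)) := by
  have hne : (Finset.univ : Finset (Fin n)).Nonempty :=
    ⟨⟨0, by omega⟩, Finset.mem_univ _⟩
  intro i j
  set x : ℕ → Fin n → ℝ := fun t k => (Q ^ t) k j with hx
  have hstepm : ∀ s t k, x (t + s) k = ∑ l, (Q ^ s) k l * x t l := by
    intro s t k
    show (Q ^ (t + s)) k j = _
    rw [add_comm, pow_add, Matrix.mul_apply]
  set M : ℕ → ℝ := fun t => Finset.univ.sup' hne (x t) with hM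
  set L : ℕ → ℝ := fun t => Finset.univ.inf' hne (x t) with hL
  have hxM : ∀ t k, x t k ≤ M t := fun t k => Finset.le_sup' _ (Finset.mem_univ k)
  have hxL : ∀ t k, L t ≤ x t k := fun t k => Finset.inf'_le _ (Finset.mem_univ k)
  have hLM : ∀ t, L t ≤ M t := fun t => le_trans (hxL t i) (hxM t i)
  -- step bounds for arbitrary power with stochastic matrix
  have hup : ∀ s t k, (∀ a b, 0 ≤ (Q^s) a b) → (∀ a, ∑ b, (Q^s) a b = 1) →
      x (t + s) k ≤ M t := by
    intro s t k h0 h1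
    rw [hstepm]
    calc ∑ l, (Q ^ s) k l * x t l ≤ ∑ l, (Q ^ s) k l * M t :=
          Finset.sum_le_sum fun l _ => mul_le_mul_of_nonneg_left (hxM t l) (h0 k l)
      _ = M t := by rw [← Finset.sum_mul, h1 k, one_mul]
  have hlo : ∀ s t k, (∀ a b, 0 ≤ (Q^s) a b) → (∀ a, ∑ b, (Q^s) a b = 1) →
      L t ≤ x (t + s) k := by
    intro s t k h0 h1
    rw [hstepm]
    calc L t = ∑ l, (Q ^ s) k l * L t := by rw [← Finset.sum_mul, h1 k, one_mul]
      _ ≤ ∑ l, (Q ^ s) k l * x t l :=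
          Finset.sum_le_sum fun l _ => mul_le_mul_of_nonneg_left (hxL t l) (h0 k l)
  have hMant : ∀ t, M (t+1) ≤ M t := by
    intro t
    apply Finset.sup'_le
    intro k _
    exact hup 1 t k (by simpa using hQ0) (by simpa using hQ1)
  have hLmon : ∀ t, L t ≤ L (t+1) := by
    intro t
    apply Finset.le_inf'
    intro k _
    exact hlo 1 t k (by simpa using hQ0) (by simpa using hQ1)
  -- contraction
  set ε : ℝ := Finset.univ.inf' hne (fun a => Finset.univ.inf' hne (fun b => (Q^m) a b)) with hε
  have hεle : ∀ a b, ε ≤ (Q^m) a b := by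
    intro a b
    exact le_trans (Finset.inf'_le _ (Finset.mem_univ a)) (Finset.inf'_le _ (Finset.mem_univ b))
  have hεpos : 0 < ε := by
    obtain ⟨a, _, ha⟩ := Finset.exists_mem_eq_inf' hne (fun a => Finset.univ.inf' hne (fun b => (Q^m) a b))
    obtain ⟨b, _, hb⟩ := Finset.exists_mem_eq_inf' hne (fun b => (Q^m) a b)
    rw [hε, ha, hb]; exact hpos a b
  have hε2 : 2 * ε ≤ 1 := by
    have j0 : Fin n := ⟨0, by omega⟩
    have j1 : Fin n := ⟨1, by omega⟩
    have hne' : (⟨0, by omega⟩ : Fin n) ≠ ⟨1, by omega⟩ := by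
      intro h; simpa using congrArg Fin.val h
    have hsub : ({⟨0, by omega⟩, ⟨1, by omega⟩} : Finset (Fin n)) ⊆ Finset.univ :=
      Finset.subset_univ _
    have := Finset.sum_le_sum_of_subset_of_nonneg hsub
      (fun k _ _ => aux_pow_nonneg Q hQ0 m i k)
    rw [Finset.sum_pair hne', aux_pow_rowsum Q hQ1 m i] at this
    have h1 := hεle i ⟨0, by omega⟩
    have h2 := hεle i ⟨1, by omega⟩
    linarith
  -- M (t+m) ≤ M t - ε * (M t - L t)
  have hMcon : ∀ t k, x (t+m) k ≤ M t - ε * (M t - L t) := by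
    intro t k
    obtain ⟨l0, _, hl0⟩ := Finset.exists_mem_eq_inf' hne (x t)
    have key : ∑ l, (Q^m) k l * (M t - x t l) ≥ ε * (M t - L t) := by
      have hterm : ∀ l ∈ Finset.univ, 0 ≤ (Q^m) k l * (M t - x t l) :=
        fun l _ => mul_nonneg (aux_pow_nonneg Q hQ0 m k l) (by linarith [hxM t l])
      have := Finset.single_le_sum hterm (Finset.mem_univ l0)
      have h2 : ε * (M t - L t) ≤ (Q^m) k l0 * (M t - x t l0) := by
        have hxl : x t l0 = L t := hl0.symm
        rw [hxl]
        exact mul_le_mul (hεle k l0) le_rfl (by linarith [hLM t]) (le_of_lt (hpos k l0))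
      linarith [Finset.single_le_sum hterm (Finset.mem_univ l0)]
    have hexp : x (t+m) k = M t - ∑ l, (Q^m) k l * (M t - x t l) := by
      rw [hstepm]
      have : ∑ l, (Q^m) k l * (M t - x t l)
          = (∑ l, (Q^m) k l) * M t - ∑ l, (Q^m) k l * x t l := by
        rw [Finset.sum_mul, ← Finset.sum_sub_distrib]
        congr 1; ext l; ring
      rw [this, aux_pow_rowsum Q hQ1 m k]; ring
    rw [hexp]; linarith
  have hLcon : ∀ t k, L t + ε * (M t - L t) ≤ x (t+m) k := by
    intro t k
    obtain ⟨l0, _, hl0⟩ := Finset.exists_mem_eq_sup' hne (x t)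
    have key : ∑ l, (Q^m) k l * (x t l - L t) ≥ ε * (M t - L t) := by
      have hterm : ∀ l ∈ Finset.univ, 0 ≤ (Q^m) k l * (x t l - L t) :=
        fun l _ => mul_nonneg (aux_pow_nonneg Q hQ0 m k l) (by linarith [hxL t l])
      have h2 : ε * (M t - L t) ≤ (Q^m) k l0 * (x t l0 - L t) := by
        have hxl : x t l0 = M t := hl0.symm
        rw [hxl]
        exact mul_le_mul (hεle k l0) le_rfl (by linarith [hLM t]) (le_of_lt (hpos k l0))
      linarith [Finset.single_le_sum hterm (Finset.mem_univ l0)]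
    have hexp : x (t+m) k = L t + ∑ l, (Q^m) k l * (x t l - L t) := by
      rw [hstepm]
      have : ∑ l, (Q^m) k l * (x t l - L t)
          = ∑ l, (Q^m) k l * x t l - (∑ l, (Q^m) k l) * L t := by
        rw [Finset.sum_mul, ← Finset.sum_sub_distrib]
        congr 1; ext l; ring
      rw [this, aux_pow_rowsum Q hQ1 m k]; ring
    rw [hexp]; linarith
  set osc : ℕ → ℝ := fun t => M t - L t with hosc
  have hosc0 : ∀ t, 0 ≤ osc t := fun t => by simp [hosc]; linarith [hLM t]
  have hoscanti : ∀ t, osc (t+1) ≤ osc t := by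
    intro t; simp only [hosc]; linarith [hMant t, hLmon t]
  have hoscdec : ∀ t, osc (t + m) ≤ (1 - 2*ε) * osc t := by
    intro t
    have h1 : M (t+m) ≤ M t - ε * (M t - L t) := Finset.sup'_le _ _ fun k _ => hMcon t k
    have h2 : L t + ε * (M t - L t) ≤ L (t+m) := Finset.le_inf' _ _ fun k _ => hLcon t k
    simp only [hosc]; linarith
  have hosctend : Tendsto osc atTop (𝓝 0) :=
    aux_geom_decay osc hosc0 hoscanti (1 - 2*ε) (by linarith) (by linarith) m hm hoscdec
  -- p j is trapped
  have htrap : ∀ t, ∑ k, p k * x t k = p j := by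
    intro t
    induction t with
    | zero =>
      simp only [hx, pow_zero]
      rw [Finset.sum_eq_single j]
      · simp [Matrix.one_apply]
      · intro k _ hk; simp [Matrix.one_apply, hk]
      · simp
    | succ t ih =>
      have : ∀ k, x (t+1) k = ∑ l, Q k l * x t l := by
        intro k
        have := hstepm 1 t k
        simpa using this
      calc ∑ k, p k * x (t+1) k = ∑ k, p k * ∑ l, Q k l * x t l := by simp [this]
        _ = ∑ l, (∑ k, p k * Q k l) * x t l := by
            simp only [Finset.mul_sum, Finset.sum_mul, mul_assoc]
            rw [Finset.sum_comm]
        _ = ∑ l, p l * x t l := by simp [hpinv]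
        _ = p j := ih
  have hpjM : ∀ t, p j ≤ M t := by
    intro t
    rw [← htrap t]
    calc ∑ k, p k * x t k ≤ ∑ k, p k * M t :=
          Finset.sum_le_sum fun k _ => mul_le_mul_of_nonneg_left (hxM t k) (hp0 k)
      _ = M t := by rw [← Finset.sum_mul, hp1, one_mul]
  have hpjL : ∀ t, L t ≤ p j := by
    intro t
    rw [← htrap t]
    calc L t = ∑ k, p k * L t := by rw [← Finset.sum_mul, hp1, one_mul]
      _ ≤ ∑ k, p k * x t k :=
          Finset.sum_le_sum fun k _ => mul_le_mul_of_nonneg_left (hxL t k) (hp0 k)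
  have hbound : ∀ t, ‖x t i - p j‖ ≤ osc t := by
    intro t
    rw [Real.norm_eq_abs, abs_le]
    constructor <;> simp only [hosc] <;>
      [linarith [hxL t i, hpjM t]; linarith [hxM t i, hpjL t]]
  have : Tendsto (fun t => x t i - p j) atTop (𝓝 0) :=
    squeeze_zero_norm hbound hosctend
  have := this.add_const (p j)
  simpa using this

lemma aux_delta_row {n : ℕ} (Q : Matrix (Fin n) (Fin n) ℝ) (s : Fin n)
    (hrow : ∀ j, Q s j = if s = j then 1 else 0) :
    ∀ t j, (Q ^ t) s j = if s = j then 1 else 0 := by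
  intro t
  induction t with
  | zero => intro j; simp [Matrix.one_apply]
  | succ t ih =>
    intro j
    rw [pow_succ', Matrix.mul_apply]
    rw [Finset.sum_eq_single s]
    · rw [hrow s, if_pos rfl, one_mul, ih]
    · intro k _ hk
      rw [hrow k, if_neg (Ne.symm hk), zero_mul]
    · simp

lemma aux_absorb {n : ℕ} (hn : 2 ≤ n) (Q : Matrix (Fin n) (Fin n) ℝ)
    (hQ0 : ∀ i j, 0 ≤ Q i j) (hQ1 : ∀ i, ∑ j, Q i j = 1)
    (S : Finset (Fin n)) (hS : S.Nonempty)
    (hrow : ∀ s ∈ S, ∀ j, Q s j = if s = j then 1 else 0)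
    (hgrow : ∀ A : Finset (Fin n), S ⊆ A → A ≠ Finset.univ →
      ∃ j, j ∉ A ∧ ∃ k ∈ A, 0 < Q j k) :
    ∀ i, ∀ l, l ∉ S → Tendsto (fun t : ℕ => (Q ^ t) i l) atTop (𝓝 0) := by
  have hne : (Finset.univ : Finset (Fin n)).Nonempty := ⟨⟨0, by omega⟩, Finset.mem_univ _⟩
  set g : ℕ → Fin n → ℝ := fun t j => ∑ s ∈ S, (Q ^ t) j s with hg
  set h : ℕ → Fin n → ℝ := fun t j => ∑ s ∈ Sᶜ, (Q ^ t) j s with hh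
  have hgh : ∀ t j, g t j + h t j = 1 := by
    intro t j
    rw [hg, hh]
    simp only []
    rw [Finset.sum_add_sum_compl]
    exact aux_pow_rowsum Q hQ1 t j
  have hg0 : ∀ t j, 0 ≤ g t j :=
    fun t j => Finset.sum_nonneg fun s _ => aux_pow_nonneg Q hQ0 t j s
  have hh0 : ∀ t j, 0 ≤ h t j :=
    fun t j => Finset.sum_nonneg fun s _ => aux_pow_nonneg Q hQ0 t j s
  have hg1 : ∀ t j, g t j ≤ 1 := fun t j => by linarith [hgh t j, hh0 t j]
  -- g (t+1) j = ∑ k, Q j k * g t k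
  have hgstep : ∀ t j, g (t+1) j = ∑ k, Q j k * g t k := by
    intro t j
    rw [hg]
    simp only [pow_succ', Matrix.mul_apply]
    rw [Finset.sum_comm]
    simp [Finset.mul_sum]
  have hgS : ∀ t s, s ∈ S → g t s = 1 := by
    intro t s hs
    rw [hg]
    simp only []
    rw [Finset.sum_eq_single s]
    · rw [aux_delta_row Q s (hrow s hs), if_pos rfl]
    · intro k hk hks
      rw [aux_delta_row Q s (hrow s hs), if_neg (Ne.symm hks)]
    · intro hns; exact absurd hs hns
  have hgmono : ∀ t j, g t j ≤ g (t+1) j := by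
    intro t
    induction t with
    | zero =>
      intro j
      by_cases hj : j ∈ S
      · rw [hgS 0 j hj, hgS 1 j hj]
      · have : g 0 j = 0 := by
          rw [hg]
          apply Finset.sum_eq_zero
          intro s hs
          have : j ≠ s := fun e => hj (e ▸ hs)
          simp [Matrix.one_apply, this]
        rw [this]; exact hg0 1 j
    | succ t ih =>
      intro j
      rw [hgstep t j, hgstep (t+1) j]
      exact Finset.sum_le_sum fun k _ => mul_le_mul_of_nonneg_left (ih k) (hQ0 j k)
  have hgmono' : ∀ s t j, s ≤ t → g s j ≤ g t j := by
    intro s t j hst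
    induction t with
    | zero => simp_all
    | succ t ih =>
      rcases Nat.lt_or_ge s (t+1) with hlt | hge
      · exact le_trans (ih (by omega)) (hgmono t j)
      · have : s = t + 1 := by omega
        simp [this]
  -- the reachability sets
  classical
  set A : ℕ → Finset (Fin n) :=
    fun t => Nat.rec S (fun _ At => At ∪ Finset.univ.filter (fun j => ∃ k ∈ At, 0 < Q j k)) t
    with hA
  have hA0 : A 0 = S := rfl
  have hAsucc : ∀ t, A (t+1) = A t ∪ Finset.univ.filter (fun j => ∃ k ∈ A t, 0 < Q j k) :=
    fun t => rfl
  have hAsub : ∀ t, S ⊆ A t := by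
    intro t
    induction t with
    | zero => exact subset_rfl
    | succ t ih => rw [hAsucc]; exact ih.trans Finset.subset_union_left
  have hApos : ∀ t j, j ∈ A t → 0 < g t j := by
    intro t
    induction t with
    | zero => intro j hj; rw [hA0] at hj; rw [hgS 0 j hj]; norm_num
    | succ t ih =>
      intro j hj
      rw [hAsucc] at hj
      rcases Finset.mem_union.1 hj with hj | hj
      · exact lt_of_lt_of_le (ih j hj) (hgmono t j)
      · obtain ⟨k, hk, hQjk⟩ := (Finset.mem_filter.1 hj).2
        rw [hgstep]
        have hterm : ∀ l ∈ Finset.univ, 0 ≤ Q j l * g t l :=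
          fun l _ => mul_nonneg (hQ0 j l) (hg0 t l)
        have := Finset.single_le_sum hterm (Finset.mem_univ k)
        have : 0 < Q j k * g t k := mul_pos hQjk (ih k hk)
        calc (0:ℝ) < Q j k * g t k := this
          _ ≤ _ := Finset.single_le_sum hterm (Finset.mem_univ k)
  have hAcard : ∀ t, A t = Finset.univ ∨ t + 1 ≤ (A t).card := by
    intro t
    induction t with
    | zero => exact Or.inr (by rw [hA0]; exact hS.card_pos)
    | succ t ih =>
      by_cases hu : A (t+1) = Finset.univ
      · exact Or.inl hu
      · right
        have hAt : A t ≠ Finset.univ := by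
          intro he
          apply hu
          apply Finset.univ_subset_iff.mp
          rw [hAsucc]
          exact he ▸ Finset.subset_union_left
        obtain ⟨j, hjn, k, hk, hQjk⟩ := hgrow (A t) (hAsub t) hAt
        have hjA : j ∈ A (t+1) := by
          rw [hAsucc]
          exact Finset.mem_union_right _ (Finset.mem_filter.2 ⟨Finset.mem_univ j, k, hk, hQjk⟩)
        have hss : A t ⊂ A (t+1) := by
          constructor
          · rw [hAsucc]; exact Finset.subset_union_left
          · intro hsub; exact hjn (hsub hjA)
        have := Finset.card_lt_card hss
        rcases ih with ih | ih
        · exact absurd ih hAt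
        · omega
  have hAuniv : A n = Finset.univ := by
    rcases hAcard n with h | h
    · exact h
    · exfalso
      have := Finset.card_le_univ (A n)
      rw [Fintype.card_fin] at this
      omega
  -- epsilon
  set ε : ℝ := Finset.univ.inf' hne (g n) with hε
  have hεpos : 0 < ε := by
    obtain ⟨a, _, ha⟩ := Finset.exists_mem_eq_inf' hne (g n)
    rw [hε, ha]
    exact hApos n a (hAuniv ▸ Finset.mem_univ a)
  have hεle : ∀ j, ε ≤ g n j := fun j => Finset.inf'_le _ (Finset.mem_univ j)
  have hε1 : ε ≤ 1 := le_trans (hεle ⟨0, by omega⟩) (hg1 n _)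
  -- h step
  have hhstep : ∀ t j, h (t + n) j ≤ (1 - ε) * h t j := by
    intro t j
    have hrep : h (t + n) j = ∑ k, (Q ^ t) j k * h n k := by
      rw [hh]
      simp only [pow_add, Matrix.mul_apply]
      rw [Finset.sum_comm]
      simp [Finset.mul_sum]
    rw [hrep]
    have hS0 : ∀ k ∈ S, (Q ^ t) j k * h n k = 0 := by
      intro k hk
      have : h n k = 0 := by linarith [hgh n k, hgS n k hk]
      rw [this, mul_zero]
    rw [← Finset.sum_add_sum_compl S (fun k => (Q ^ t) j k * h n k),
      Finset.sum_eq_zero hS0, zero_add]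
    calc ∑ k ∈ Sᶜ, (Q ^ t) j k * h n k ≤ ∑ k ∈ Sᶜ, (Q ^ t) j k * (1 - ε) := by
          apply Finset.sum_le_sum
          intro k _
          apply mul_le_mul_of_nonneg_left _ (aux_pow_nonneg Q hQ0 t j k)
          linarith [hgh n k, hεle k]
      _ = (1 - ε) * h t j := by rw [← Finset.sum_mul, hh]; ring
  have hhanti : ∀ t j, h (t+1) j ≤ h t j := by
    intro t j
    have := hgmono t j
    linarith [hgh t j, hgh (t+1) j]
  intro i l hl
  have hQtl : ∀ t, (Q ^ t) i l ≤ h t i := by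
    intro t
    rw [hh]
    exact Finset.single_le_sum (fun s _ => aux_pow_nonneg Q hQ0 t i s)
      (Finset.mem_compl.2 hl)
  have : Tendsto (fun t => h t i) atTop (𝓝 0) :=
    aux_geom_decay (fun t => h t i) (fun t => hh0 t i) (fun t => hhanti t i)
      (1 - ε) (by linarith) (by linarith) n (by omega) (fun t => hhstep t i)
  exact squeeze_zero (fun t => aux_pow_nonneg Q hQ0 t i l) hQtl this

lemma aux_pow_mono {n : ℕ} (A B : Matrix (Fin n) (Fin n) ℝ)
    (hA0 : ∀ i j, 0 ≤ A i j) (hAB : ∀ i j, A i j ≤ B i j) :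
    ∀ m i j, (A ^ m) i j ≤ (B ^ m) i j ∧ 0 ≤ (A ^ m) i j := by
  intro m
  induction m with
  | zero => intro i j; refine ⟨le_rfl, ?_⟩; by_cases h : i = j <;> simp [Matrix.one_apply, h]
  | succ m ih =>
    intro i j
    constructor
    · rw [pow_succ', pow_succ', Matrix.mul_apply, Matrix.mul_apply]
      apply Finset.sum_le_sum
      intro k _
      exact mul_le_mul (hAB i k) (ih k j).1 (ih k j).2 (le_trans (hA0 i k) (hAB i k))
    · rw [pow_succ', Matrix.mul_apply]
      exact Finset.sum_nonneg fun k _ => mul_nonneg (hA0 i k) (ih k j).2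

/-- entries of Q z -/
lemma aux_Q_apply {n : ℕ} (P : Matrix (Fin n) (Fin n) ℝ) (y : Fin n → ℝ) (i j : Fin n) :
    ((1 - Matrix.diagonal y) * P + Matrix.diagonal y) i j
      = (1 - y i) * P i j + (if i = j then y i else 0) := by
  simp only [Matrix.add_apply, Matrix.mul_apply, Matrix.sub_apply, Matrix.one_apply,
    Matrix.diagonal_apply]
  congr 1
  rw [Finset.sum_eq_single i]
  · simp
  · intro k _ hk
    simp [Ne.symm hk]
  · simp

lemma aux_Q_nonneg {n : ℕ} (P : Matrix (Fin n) (Fin n) ℝ) (hPnn : ∀ i j, 0 ≤ P i j)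
    (y : Fin n → ℝ) (hy : ∀ i, 0 ≤ y i ∧ y i ≤ 1) (i j : Fin n) :
    0 ≤ ((1 - Matrix.diagonal y) * P + Matrix.diagonal y) i j := by
  rw [aux_Q_apply]
  have := hy i
  apply add_nonneg (mul_nonneg (by linarith [this.2]) (hPnn i j))
  split <;> simp [this.1]

lemma aux_Q_rowsum {n : ℕ} (P : Matrix (Fin n) (Fin n) ℝ) (hProw : ∀ i, ∑ j, P i j = 1)
    (y : Fin n → ℝ) (i : Fin n) :
    ∑ j, ((1 - Matrix.diagonal y) * P + Matrix.diagonal y) i j = 1 := by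
  simp only [aux_Q_apply]
  rw [Finset.sum_add_distrib, ← Finset.mul_sum, hProw i, Finset.sum_ite_eq univ i fun _ => y i]
  simp

/-- main convergence for interior profiles -/
lemma aux_Hval {n : ℕ} (hn : 2 ≤ n)
    (P : Matrix (Fin n) (Fin n) ℝ)
    (hPnn : ∀ i j, 0 ≤ P i j) (hProw : ∀ i, ∑ j, P i j = 1)
    (hPprim : ∃ m : ℕ, ∀ i j, 0 < (P ^ m) i j)
    (π : Fin n → ℝ) (hπpos : ∀ i, 0 < π i)
    (hπinv : ∀ j, ∑ i, π i * P i j = π j)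
    (y : Fin n → ℝ) (hy : ∀ i, 0 ≤ y i ∧ y i < 1) :
    ∀ i j, Tendsto
      (fun t : ℕ => (((1 - Matrix.diagonal y) * P + Matrix.diagonal y) ^ t) i j)
      atTop (𝓝 ((π j / (1 - y j)) / (∑ k, π k / (1 - y k)))) := by
  have hne : (Finset.univ : Finset (Fin n)).Nonempty := ⟨⟨0, by omega⟩, Finset.mem_univ _⟩
  set Q : Matrix (Fin n) (Fin n) ℝ := (1 - Matrix.diagonal y) * P + Matrix.diagonal y with hQ
  have hQ0 : ∀ i j, 0 ≤ Q i j :=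
    aux_Q_nonneg P hPnn y (fun i => ⟨(hy i).1, le_of_lt (hy i).2⟩)
  have hQ1 : ∀ i, ∑ j, Q i j = 1 := aux_Q_rowsum P hProw y
  -- primitivity of Q
  obtain ⟨m, hm⟩ := hPprim
  have hm1 : 1 ≤ m := by
    by_contra hm0
    have : m = 0 := by omega
    subst this
    have := hm ⟨0, by omega⟩ ⟨1, by omega⟩
    have hne01 : (⟨0, by omega⟩ : Fin n) ≠ ⟨1, by omega⟩ := by
      intro h; simpa using congrArg Fin.val h
    simp [Matrix.one_apply, hne01] at this
  set δ : ℝ := Finset.univ.inf' hne (fun i => 1 - y i) with hδ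
  have hδle : ∀ i, δ ≤ 1 - y i := fun i => Finset.inf'_le _ (Finset.mem_univ i)
  have hδpos : 0 < δ := by
    obtain ⟨a, _, ha⟩ := Finset.exists_mem_eq_inf' hne (fun i => 1 - y i)
    rw [hδ, ha]; linarith [(hy a).2]
  have hcomp : ∀ i j, (δ • P) i j ≤ Q i j := by
    intro i j
    rw [hQ, aux_Q_apply, Matrix.smul_apply]
    have h1 : δ * P i j ≤ (1 - y i) * P i j :=
      mul_le_mul_of_nonneg_right (hδle i) (hPnn i j)
    have h2 : (0:ℝ) ≤ if i = j then y i else 0 := by split <;> simp [(hy i).1]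
    simp only [smul_eq_mul]
    linarith
  have hQpos : ∀ i j, 0 < (Q ^ m) i j := by
    intro i j
    have h1 := (aux_pow_mono (δ • P) Q
      (fun i j => mul_nonneg (le_of_lt hδpos) (hPnn i j)) hcomp m i j).1
    have h2 : ((δ • P) ^ m) i j = δ ^ m * (P ^ m) i j := by
      rw [smul_pow, Matrix.smul_apply, smul_eq_mul]
    have h3 : 0 < δ ^ m * (P ^ m) i j := mul_pos (pow_pos hδpos m) (hm i j)
    rw [h2] at h1
    linarith
  -- invariant vector
  set w : Fin n → ℝ := fun k => π k / (1 - y k) with hw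
  have hwpos : ∀ k, 0 < w k := fun k => div_pos (hπpos k) (by linarith [(hy k).2])
  set W : ℝ := ∑ k, w k with hW
  have hWpos : 0 < W := Finset.sum_pos (fun k _ => hwpos k) hne
  have hwmul : ∀ k, w k * (1 - y k) = π k := by
    intro k
    have h0 : (1:ℝ) - y k ≠ 0 := ne_of_gt (by linarith [(hy k).2])
    rw [hw]
    field_simp
  have hwinv : ∀ j, ∑ i, w i * Q i j = w j := by
    intro j
    have hstep : ∀ i, w i * Q i j
        = π i * P i j + (if i = j then w i * y i else 0) := by
      intro i
      rw [hQ, aux_Q_apply]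
      rw [mul_add]
      congr 1
      · rw [← mul_assoc, hwmul i]
      · split <;> ring
    simp only [hstep]
    rw [Finset.sum_add_distrib, hπinv j, Finset.sum_ite_eq' univ j fun x => w x * y x]
    simp only [Finset.mem_univ, if_pos]
    linarith [hwmul j]
  intro i j
  exact aux_conv hn Q hQ0 hQ1 m hm1 hQpos (fun k => w k / W)
    (fun k => le_of_lt (div_pos (hwpos k) hWpos))
    (by rw [← Finset.sum_div, ← hW]; exact div_self (ne_of_gt hWpos))
    (by
      intro k
      calc ∑ l, w l / W * Q l k = (∑ l, w l * Q l k) / W := by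
            rw [Finset.sum_div]; apply Finset.sum_congr rfl; intro l _; ring
        _ = w k / W := by rw [hwinv k]) i j

lemma aux_opt (a a₀ B σ C : ℝ) (ha : 0 < a) (ha0 : 0 < a₀) (hB : 0 < B) (hσ : 0 < σ)
    (hC : C = a₀ * σ * B) :
    (a₀^2 * σ + C) / (a₀ + B)^2 ≤ (a^2 * σ + C) / (a + B)^2 := by
  rw [div_le_div_iff₀ (by positivity) (by positivity)]
  subst hC
  nlinarith [sq_nonneg (a - a₀), mul_pos hB hσ, sq_nonneg (a + B), sq_nonneg (a₀ + B),
    mul_nonneg (mul_nonneg (sq_nonneg (a - a₀)) hB.le) hσ.le,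
    mul_nonneg (mul_nonneg (mul_nonneg (sq_nonneg (a - a₀)) hB.le) hσ.le) ha0.le,
    mul_nonneg (mul_nonneg (mul_nonneg (sq_nonneg (a - a₀)) hB.le) hσ.le) hB.le]

lemma aux_fwd (a B σ C : ℝ) (ha : 0 < a) (hB : 0 < B) (hσ : 0 < σ)
    (hnash : ∀ s : ℝ, 0 < s →
      (a^2 * σ + C) * (a + s + B)^2 ≤ ((a + s)^2 * σ + C) * (a + B)^2) :
    C ≤ σ * a * B := by
  by_contra hlt
  push_neg at hlt
  set γ : ℝ := C - σ * a * B with hγ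
  have hγpos : 0 < γ := by simp [hγ]; linarith
  set E : ℝ := σ * (2*a*B + B^2) - C with hE
  set s : ℝ := (a + B) * γ / (|E| + 1) with hs
  have habs : 0 ≤ |E| := abs_nonneg E
  have hspos : 0 < s := by
    apply div_pos (mul_pos (by linarith) hγpos) (by linarith)
  have hF := hnash s hspos
  have hexp : ((a + s)^2 * σ + C) * (a + B)^2 - (a^2 * σ + C) * (a + s + B)^2
      = s^2 * E + 2 * s * (a + B) * (σ * a * B - C) := by
    simp only [hE]
    ring
  have hsE : s * E < (a + B) * γ := by
    have h1 : s * E ≤ s * |E| := mul_le_mul_of_nonneg_left (le_abs_self E) hspos.le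
    have h2 : s * |E| < (a + B) * γ := by
      rw [hs]
      rw [div_mul_eq_mul_div, div_lt_iff₀ (by linarith)]
      have : (a + B) * γ * |E| < (a + B) * γ * (|E| + 1) := by
        apply mul_lt_mul_of_pos_left _ (mul_pos (by linarith) hγpos)
        linarith
      linarith [this]
    linarith
  have hneg : s^2 * E + 2 * s * (a + B) * (σ * a * B - C) < 0 := by
    have h3 : σ * a * B - C = -γ := by simp [hγ]
    rw [h3]
    have h4 : s^2 * E = s * (s * E) := by ring
    rw [h4]
    have h5 : s * (s * E) < s * ((a+B)*γ) := mul_lt_mul_of_pos_left hsE hspos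
    nlinarith [mul_pos (mul_pos hspos (by linarith : (0:ℝ) < a + B)) hγpos]
  linarith [hexp ▸ hneg, hF]

set_option maxHeartbeats 2000000 in
/-- If `σ_i² ≠ σ_j²` for every pair of distinct agents, then the set
of Nash equilibria equals `Z*`: `z ∈ [0,1]ⁿ` is a Nash equilibrium if and only if
there exists `α` with `0 < α ≤ α_* = 1/max_i(π_i σ_i²)` such that
`z_i = 1 - α π_i σ_i²` for every `i`. -/
theorem stmt_16 (n : ℕ) (hn : 2 ≤ n)
    (P : Matrix (Fin n) (Fin n) ℝ)
    (hPnn : ∀ i j, 0 ≤ P i j)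
    (hProw : ∀ i, ∑ j, P i j = 1)
    (hPdiag : ∀ i, P i i = 0)
    (hPprim : ∃ m : ℕ, ∀ i j, 0 < (P ^ m) i j)
    (π : Fin n → ℝ)
    (hπpos : ∀ i, 0 < π i)
    (hπsum : ∑ i, π i = 1)
    (hπinv : ∀ j, ∑ i, π i * P i j = π j)
    (σ2 : Fin n → ℝ) (hσ : ∀ i, 0 < σ2 i)
    (hσdist : ∀ i j : Fin n, i ≠ j → σ2 i ≠ σ2 j)
    (H : (Fin n → ℝ) → Matrix (Fin n) (Fin n) ℝ)
    (hH : ∀ z : Fin n → ℝ, (∀ i, z i ∈ Set.Icc (0 : ℝ) 1) →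
      ∀ i j, Tendsto
        (fun t : ℕ => (((1 - Matrix.diagonal z) * P + Matrix.diagonal z) ^ t) i j)
        atTop (𝓝 (H z i j)))
    (z : Fin n → ℝ) (hz : ∀ i, z i ∈ Set.Icc (0 : ℝ) 1) :
    ((∀ i : Fin n, ∀ t ∈ Set.Icc (0 : ℝ) 1,
        ∑ j, (H z i j) ^ 2 * σ2 j ≤
          ∑ j, (H (Function.update z i t) i j) ^ 2 * σ2 j)
      ↔ ∃ α : ℝ, 0 < α ∧
          α ≤ 1 / (Finset.univ.sup' ⟨⟨0, by omega⟩, Finset.mem_univ _⟩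
                    fun i => π i * σ2 i) ∧
          ∀ i, z i = 1 - α * (π i * σ2 i)) := by
  have hne : (Finset.univ : Finset (Fin n)).Nonempty := ⟨⟨0, by omega⟩, Finset.mem_univ _⟩
  -- the value of H for interior profiles
  have hval : ∀ y : Fin n → ℝ, (∀ k, 0 ≤ y k ∧ y k < 1) → ∀ i j,
      H y i j = (π j / (1 - y j)) / (∑ k, π k / (1 - y k)) := by
    intro y hy i j
    exact tendsto_nhds_unique
      (hH y (fun k => Set.mem_Icc.2 ⟨(hy k).1, (hy k).2.le⟩) i j)
      (aux_Hval hn P hPnn hProw hPprim π hπpos hπinv y hy i j)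
  have hcost : ∀ y : Fin n → ℝ, (∀ k, 0 ≤ y k ∧ y k < 1) → ∀ i,
      ∑ j, (H y i j)^2 * σ2 j
        = (∑ j, (π j / (1 - y j))^2 * σ2 j) / (∑ k, π k / (1 - y k))^2 := by
    intro y hy i
    have hterm : ∀ j, (H y i j)^2 * σ2 j
        = (π j / (1 - y j))^2 * σ2 j / (∑ k, π k / (1 - y k))^2 := by
      intro j; rw [hval y hy i j, div_pow]; ring
    rw [Finset.sum_congr rfl fun j _ => hterm j, ← Finset.sum_div]
  -- stubborn agents keep their own opinion
  have hdelta : ∀ y : Fin n → ℝ, (∀ k, y k ∈ Set.Icc (0:ℝ) 1) → ∀ i, y i = 1 →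
      ∀ j, H y i j = if i = j then 1 else 0 := by
    intro y hy i hyi j
    refine tendsto_nhds_unique (hH y hy i j) ?_
    have hrow : ∀ k, ((1 - Matrix.diagonal y) * P + Matrix.diagonal y) i k
        = if i = k then 1 else 0 := by
      intro k
      rw [aux_Q_apply, hyi]
      simp
    have hconst : (fun t : ℕ =>
        (((1 - Matrix.diagonal y) * P + Matrix.diagonal y)^t) i j)
        = fun _ => if i = j then (1:ℝ) else 0 :=
      funext fun t => aux_delta_row _ i hrow t j
    rw [hconst]
    exact tendsto_const_nhds
  have hstubcost : ∀ y : Fin n → ℝ, (∀ k, y k ∈ Set.Icc (0:ℝ) 1) → ∀ i, y i = 1 →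
      ∑ j, (H y i j)^2 * σ2 j = σ2 i := by
    intro y hy i hyi
    have hterm : ∀ j, (H y i j)^2*σ2 j = if i = j then σ2 j else 0 := by
      intro j; rw [hdelta y hy i hyi j]; split <;> norm_num
    rw [Finset.sum_congr rfl fun j _ => hterm j, Finset.sum_ite_eq univ i σ2]
    simp
  -- splitting off one agent
  have hsum_split : ∀ (i : Fin n) (f : Fin n → ℝ),
      ∑ j, f j = f i + ∑ j ∈ univ.erase i, f j :=
    fun i f => (Finset.add_sum_erase univ f (mem_univ i)).symm
  have hexne : ∀ i : Fin n, ∃ j : Fin n, j ≠ i := by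
    intro i
    by_cases h0 : i = ⟨0, by omega⟩
    · refine ⟨⟨1, by omega⟩, ?_⟩
      rw [h0]; intro he; simpa using congrArg Fin.val he
    · exact ⟨⟨0, by omega⟩, fun he => h0 he.symm⟩
  have herasene : ∀ i : Fin n, (univ.erase i).Nonempty := by
    intro i
    obtain ⟨j, hj⟩ := hexne i
    exact ⟨j, Finset.mem_erase.2 ⟨hj, mem_univ _⟩⟩
  constructor
  · -- Nash ⇒ Z*
    intro hNash
    by_cases hint : ∀ k, z k < 1
    · -- interior case
      have hzi : ∀ k, 0 ≤ z k ∧ z k < 1 := fun k => ⟨(hz k).1, hint k⟩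
      have h1z : ∀ k, (0:ℝ) < 1 - z k := fun k => by linarith [hint k]
      set w : Fin n → ℝ := fun k => π k / (1 - z k) with hw
      have hwpos : ∀ k, 0 < w k := fun k => div_pos (hπpos k) (h1z k)
      have hwge : ∀ k, π k ≤ w k := by
        intro k
        rw [hw]
        simp only []
        rw [le_div_iff₀ (h1z k)]
        nlinarith [(hz k).1, hπpos k]
      set A : ℝ := ∑ j, w j with hA
      set K : ℝ := ∑ j, (w j)^2 * σ2 j with hK
      have hApos : 0 < A := Finset.sum_pos (fun j _ => hwpos j) hne
      have hKpos : 0 < K :=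
        Finset.sum_pos (fun j _ => mul_pos (pow_pos (hwpos j) 2) (hσ j)) hne
      have hfoc : ∀ i, K ≤ (w i * σ2 i) * A := by
        intro i
        set B : ℝ := ∑ j ∈ univ.erase i, w j with hB
        set C : ℝ := ∑ j ∈ univ.erase i, (w j)^2 * σ2 j with hC
        have hBpos : 0 < B := Finset.sum_pos (fun j hj => hwpos j) (herasene i)
        have hKsplit : K = (w i)^2*σ2 i + C := by rw [hK, hC]; exact hsum_split i _
        have hAsplit : A = w i + B := by rw [hA, hB]; exact hsum_split i _
        have hcostz : ∑ j, (H z i j)^2*σ2 j = ((w i)^2*σ2 i + C)/(w i + B)^2 := by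
          rw [hcost z hzi i, hsum_split i (fun j => (π j/(1-z j))^2*σ2 j),
            hsum_split i (fun k => π k/(1-z k))]
        have hkey : C ≤ σ2 i * w i * B := by
          apply aux_fwd (w i) B (σ2 i) C (hwpos i) hBpos (hσ i)
          intro s hs
          set a : ℝ := w i + s with ha
          have hapos : 0 < a := by nlinarith [hwpos i]
          set t : ℝ := 1 - π i / a with htd
          have hπa1 : π i / a ≤ 1 := by
            rw [div_le_one hapos]
            nlinarith [hwge i]
          have hπa0 : 0 < π i / a := div_pos (hπpos i) hapos
          have htmem : t ∈ Set.Icc (0:ℝ) 1 := by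
            rw [Set.mem_Icc, htd]
            constructor <;> linarith
          have hyint : ∀ k, 0 ≤ Function.update z i t k ∧ Function.update z i t k < 1 := by
            intro k
            rw [Function.update_apply]
            split
            · rw [htd]; constructor <;> linarith
            · exact hzi k
          have hπne : π i ≠ 0 := ne_of_gt (hπpos i)
          have hane : a ≠ 0 := ne_of_gt hapos
          have h1 : π i / (1 - Function.update z i t i) = a := by
            rw [Function.update_self, htd]
            have h2 : 1 - (1 - π i / a) = π i / a := by ring
            rw [h2]
            field_simp
          have hcosty : ∑ j, (H (Function.update z i t) i j)^2*σ2 j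
              = (a^2*σ2 i + C)/(a + B)^2 := by
            rw [hcost _ hyint i,
              hsum_split i (fun j => (π j / (1 - Function.update z i t j))^2*σ2 j),
              hsum_split i (fun k => π k / (1 - Function.update z i t k))]
            have hsq : ∑ j ∈ univ.erase i,
                (π j / (1 - Function.update z i t j))^2*σ2 j = C := by
              rw [hC]
              apply Finset.sum_congr rfl
              intro j hj
              rw [Function.update_of_ne (Finset.mem_erase.1 hj).1]
            have hpl : ∑ j ∈ univ.erase i, π j / (1 - Function.update z i t j) = B := by
              rw [hB]
              apply Finset.sum_congr rfl
              intro j hj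
              rw [Function.update_of_ne (Finset.mem_erase.1 hj).1]
            rw [h1, hsq, hpl]
          have hIneq := hNash i t htmem
          rw [hcostz, hcosty] at hIneq
          rw [div_le_div_iff₀ (pow_pos (by linarith [hwpos i, hBpos] : (0:ℝ) < w i + B) 2)
            (pow_pos (by linarith [hapos, hBpos] : (0:ℝ) < a + B) 2)] at hIneq
          exact hIneq
        nlinarith [hkey, hKsplit, hAsplit]
      have hall : ∀ i, (w i * σ2 i) * A = K := by
        have h1 : ∑ i, w i * ((w i * σ2 i) * A) = K * A := by
          calc ∑ i, w i * ((w i * σ2 i) * A) = (∑ i, (w i)^2 * σ2 i) * A := by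
                rw [Finset.sum_mul]
                apply Finset.sum_congr rfl
                intro j _
                ring
            _ = K * A := by rw [← hK]
        have h2 : ∑ i, w i * K = A * K := by rw [← Finset.sum_mul, ← hA]
        have hsum0 : ∑ i, w i * ((w i * σ2 i)*A - K) = 0 := by
          calc ∑ i, w i * ((w i * σ2 i)*A - K)
              = ∑ i, (w i * ((w i*σ2 i)*A) - w i * K) := by
                apply Finset.sum_congr rfl
                intro j _
                ring
            _ = K*A - A*K := by rw [Finset.sum_sub_distrib, h1, h2]
            _ = 0 := by ring
        have hterm0 := (Finset.sum_eq_zero_iff_of_nonneg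
          (fun i _ => mul_nonneg (hwpos i).le (by linarith [hfoc i]))).1 hsum0
        intro i
        have h3 := hterm0 i (mem_univ i)
        rcases mul_eq_zero.1 h3 with h | h
        · exact absurd h (ne_of_gt (hwpos i))
        · linarith
      have hKne : K ≠ 0 := ne_of_gt hKpos
      have hcoord : ∀ k, z k = 1 - (A/K) * (π k * σ2 k) := by
        intro k
        have hπw : w k * (1 - z k) = π k := by
          rw [hw]
          simp only []
          rw [div_mul_cancel₀ _ (ne_of_gt (h1z k))]
        have hc := hall k
        have hG : A * (π k * σ2 k) = (1 - z k) * K := by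
          linear_combination (1 - z k) * hc - σ2 k * A * hπw
        have h2 : (A/K) * (π k * σ2 k) = 1 - z k := by
          rw [div_mul_eq_mul_div, hG]
          exact mul_div_cancel_right₀ _ hKne
        linarith
      refine ⟨A / K, div_pos hApos hKpos, ?_, hcoord⟩
      obtain ⟨imax, _, hmax⟩ := Finset.exists_mem_eq_sup'
        (⟨⟨0, by omega⟩, Finset.mem_univ _⟩ : (univ : Finset (Fin n)).Nonempty)
        (fun i => π i * σ2 i)
      rw [hmax]
      have hDpos : 0 < π imax * σ2 imax := mul_pos (hπpos imax) (hσ imax)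
      rw [div_le_div_iff₀ hKpos hDpos]
      have h3 : (A/K) * (π imax * σ2 imax) ≤ 1 := by
        have h4 := (hz imax).1
        rw [hcoord imax] at h4
        linarith
      calc A * (π imax * σ2 imax) = ((A/K) * (π imax*σ2 imax)) * K := by field_simp
        _ ≤ 1 * K := by nlinarith [hKpos]
        _ = 1 * K := rfl
    · -- some agent fully stubborn : contradiction
      exfalso
      push_neg at hint
      obtain ⟨k0, hk0⟩ := hint
      have hk0' : z k0 = 1 := le_antisymm (hz k0).2 hk0
      set S : Finset (Fin n) := univ.filter (fun j => z j = 1) with hS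
      have hSne : S.Nonempty := ⟨k0, Finset.mem_filter.2 ⟨mem_univ _, hk0'⟩⟩
      obtain ⟨i, hiS, hiMax⟩ := Finset.exists_max_image S σ2 hSne
      have hzi1 : z i = 1 := (Finset.mem_filter.1 hiS).2
      have hviz : ∑ j, (H z i j)^2*σ2 j = σ2 i := hstubcost z hz i hzi1
      by_cases hS2 : ∃ k ∈ S, k ≠ i
      · -- at least two stubborn agents
        obtain ⟨k1, hk1S, hk1i⟩ := hS2
        set y : Fin n → ℝ := Function.update z i 0 with hy
        have hyIcc : ∀ k, y k ∈ Set.Icc (0:ℝ) 1 := by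
          intro k
          rw [hy, Function.update_apply]
          split
          · exact Set.mem_Icc.2 ⟨le_rfl, zero_le_one⟩
          · exact hz k
        set S' : Finset (Fin n) := S.erase i with hS'
        have hS'ne : S'.Nonempty := ⟨k1, Finset.mem_erase.2 ⟨hk1i, hk1S⟩⟩
        have hS'mem : ∀ s ∈ S', z s = 1 ∧ s ≠ i := by
          intro s hs
          exact ⟨(Finset.mem_filter.1 (Finset.mem_erase.1 hs).2).2,
            (Finset.mem_erase.1 hs).1⟩
        have hys : ∀ s ∈ S', y s = 1 := by
          intro s hs
          rw [hy, Function.update_of_ne (hS'mem s hs).2]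
          exact (hS'mem s hs).1
        have hyle : ∀ j, j ∉ S' → y j < 1 := by
          intro j hj
          rw [hy]
          by_cases hji : j = i
          · rw [hji, Function.update_self]
            norm_num
          · rw [Function.update_of_ne hji]
            rcases lt_or_eq_of_le (hz j).2 with h | h
            · exact h
            · exact absurd (Finset.mem_erase.2 ⟨hji, Finset.mem_filter.2 ⟨mem_univ _, h⟩⟩) hj
        have hQy0 : ∀ a b, 0 ≤ ((1 - Matrix.diagonal y) * P + Matrix.diagonal y) a b :=
          aux_Q_nonneg P hPnn y (fun k => ⟨(hyIcc k).1, (hyIcc k).2⟩)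
        have hQy1 := aux_Q_rowsum P hProw y
        have hrows : ∀ s ∈ S', ∀ jj, ((1 - Matrix.diagonal y) * P + Matrix.diagonal y) s jj
            = if s = jj then 1 else 0 := by
          intro s hs jj
          rw [aux_Q_apply, hys s hs]
          simp
        have hgrow : ∀ A : Finset (Fin n), S' ⊆ A → A ≠ univ →
            ∃ j, j ∉ A ∧ ∃ k ∈ A, 0 < ((1 - Matrix.diagonal y) * P + Matrix.diagonal y) j k := by
          intro A hSA hAuniv
          by_contra hcon
          push_neg at hcon
          have hP0 : ∀ j k, j ∉ A → k ∈ A → P j k = 0 := by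
            intro j k hj hk
            have hjk : j ≠ k := fun e => hj (e ▸ hk)
            have h3 : ((1 - Matrix.diagonal y) * P + Matrix.diagonal y) j k = 0 :=
              le_antisymm (not_lt.1 (by simpa using hcon j hj k hk)) (hQy0 j k)
            rw [aux_Q_apply, if_neg hjk, add_zero] at h3
            have hyj : y j < 1 := hyle j (fun hjS' => hj (hSA hjS'))
            rcases mul_eq_zero.1 h3 with h | h
            · exact absurd h (ne_of_gt (by linarith))
            · exact h
          have hPt : ∀ t j k, j ∉ A → k ∈ A → (P^t) j k = 0 := by
            intro t
            induction t with
            | zero =>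
              intro j k hj hk
              have : j ≠ k := fun e => hj (e ▸ hk)
              simp [Matrix.one_apply, this]
            | succ t ih =>
              intro j k hj hk
              rw [pow_succ', Matrix.mul_apply]
              apply Finset.sum_eq_zero
              intro l _
              by_cases hl : l ∈ A
              · rw [hP0 j l hj hl, zero_mul]
              · rw [ih l k hl hk, mul_zero]
          obtain ⟨m, hm⟩ := hPprim
          obtain ⟨j0, hj0⟩ : ∃ j0, j0 ∉ A := by
            by_contra hall2
            push_neg at hall2
            exact hAuniv (Finset.eq_univ_iff_forall.2 hall2)
          obtain ⟨s0, hs0⟩ := hS'ne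
          have h5 := hm j0 s0
          rw [hPt m j0 s0 hj0 (hSA hs0)] at h5
          exact lt_irrefl 0 h5
        have habs := aux_absorb hn _ hQy0 hQy1 S' hS'ne hrows hgrow
        have hH0 : ∀ l, l ∉ S' → H y i l = 0 := by
          intro l hl
          exact tendsto_nhds_unique (hH y hyIcc i l) (habs i l hl)
        have hHnn : ∀ l, 0 ≤ H y i l := by
          intro l
          exact ge_of_tendsto' (hH y hyIcc i l) (fun t => aux_pow_nonneg _ hQy0 t i l)
        have hHrow : ∑ j, H y i j = 1 := by
          have h1 : Tendsto (fun t : ℕ =>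
              ∑ j, (((1 - Matrix.diagonal y) * P + Matrix.diagonal y)^t) i j) atTop
              (𝓝 (∑ j, H y i j)) :=
            tendsto_finset_sum _ (fun j _ => hH y hyIcc i j)
          have h2 : (fun t : ℕ =>
              ∑ j, (((1 - Matrix.diagonal y) * P + Matrix.diagonal y)^t) i j)
              = fun _ => (1:ℝ) :=
            funext fun t => aux_pow_rowsum _ hQy1 t i
          rw [h2] at h1
          exact tendsto_nhds_unique h1 tendsto_const_nhds
        have hS'sum : ∑ j ∈ S', H y i j = 1 := by
          rw [← hHrow]
          exact Finset.sum_subset (Finset.subset_univ S') (fun x _ hx => hH0 x hx)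
        have hHle1 : ∀ l, H y i l ≤ 1 := by
          intro l
          rw [← hHrow]
          exact Finset.single_le_sum (fun j _ => hHnn j) (mem_univ l)
        have hex : ∃ l ∈ S', 0 < H y i l := by
          by_contra hcon
          push_neg at hcon
          have h6 : ∑ j ∈ S', H y i j = 0 :=
            Finset.sum_eq_zero fun j hj => le_antisymm (hcon j hj) (hHnn j)
          rw [hS'sum] at h6
          norm_num at h6
        obtain ⟨l0, hl0S, hl0pos⟩ := hex
        have hσlt : ∀ l ∈ S', σ2 l < σ2 i := by
          intro l hl
          exact lt_of_le_of_ne (hiMax l (Finset.mem_erase.1 hl).2)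
            (hσdist l i (Finset.mem_erase.1 hl).1)
        have hcosty : ∑ j, (H y i j)^2*σ2 j < σ2 i := by
          have hzero : ∀ x ∈ univ, x ∉ S' → (H y i x)^2*σ2 x = 0 := by
            intro x _ hx
            rw [hH0 x hx]
            ring
          rw [← Finset.sum_subset (Finset.subset_univ S') hzero]
          have hlt : ∑ j ∈ S', (H y i j)^2*σ2 j < ∑ j ∈ S', H y i j * σ2 i := by
            apply Finset.sum_lt_sum
            · intro j hj
              have hA1 : 0 ≤ H y i j * (1 - H y i j) * σ2 j :=
                mul_nonneg (mul_nonneg (hHnn j) (by linarith [hHle1 j])) (hσ j).le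
              have hA2 : 0 ≤ H y i j * (σ2 i - σ2 j) :=
                mul_nonneg (hHnn j) (by linarith [(hσlt j hj).le])
              nlinarith [hA1, hA2]
            · refine ⟨l0, hl0S, ?_⟩
              have hA1 : 0 ≤ H y i l0 * (1 - H y i l0) * σ2 l0 :=
                mul_nonneg (mul_nonneg (hHnn l0) (by linarith [hHle1 l0])) (hσ l0).le
              have hA2 : 0 < H y i l0 * (σ2 i - σ2 l0) :=
                mul_pos hl0pos (by linarith [hσlt l0 hl0S])
              nlinarith [hA1, hA2]
          calc ∑ j ∈ S', (H y i j)^2*σ2 j < ∑ j ∈ S', H y i j * σ2 i := hlt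
            _ = σ2 i := by rw [← Finset.sum_mul, hS'sum, one_mul]
        have hcontra := hNash i 0 (Set.mem_Icc.2 ⟨le_rfl, zero_le_one⟩)
        rw [hviz] at hcontra
        have hyy : Function.update z i 0 = y := rfl
        rw [hyy] at hcontra
        linarith
      · -- exactly one stubborn agent
        push_neg at hS2
        have honly : ∀ j, j ≠ i → z j < 1 := by
          intro j hji
          rcases lt_or_eq_of_le (hz j).2 with h | h
          · exact h
          · exact absurd (hS2 j (Finset.mem_filter.2 ⟨mem_univ _, h⟩)) hji
        set B : ℝ := ∑ j ∈ univ.erase i, π j / (1 - z j) with hB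
        set C : ℝ := ∑ j ∈ univ.erase i, (π j / (1 - z j))^2 * σ2 j with hC
        have hwpos' : ∀ j ∈ univ.erase i, 0 < π j / (1 - z j) := by
          intro j hj
          exact div_pos (hπpos j) (by linarith [honly j (Finset.mem_erase.1 hj).1])
        have hBpos : 0 < B := Finset.sum_pos hwpos' (herasene i)
        have hCpos : 0 < C :=
          Finset.sum_pos (fun j hj => mul_pos (pow_pos (hwpos' j hj) 2) (hσ j)) (herasene i)
        obtain ⟨a, ha⟩ : ∃ a : ℝ, a = π i + C / (σ2 i * B) := ⟨_, rfl⟩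
        have hCσB : 0 < C / (σ2 i * B) := div_pos hCpos (mul_pos (hσ i) hBpos)
        have hapos : 0 < a := by rw [ha]; linarith [hπpos i]
        obtain ⟨t, htd⟩ : ∃ t : ℝ, t = 1 - π i / a := ⟨_, rfl⟩
        have hπa1 : π i / a ≤ 1 := by
          rw [div_le_one hapos, ha]
          linarith
        have hπa0 : 0 < π i / a := div_pos (hπpos i) hapos
        have htmem : t ∈ Set.Icc (0:ℝ) 1 := by
          rw [Set.mem_Icc, htd]
          constructor <;> linarith
        have hyint : ∀ k, 0 ≤ Function.update z i t k ∧ Function.update z i t k < 1 := by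
          intro k
          rw [Function.update_apply]
          split
          · rw [htd]; constructor <;> linarith
          · next hki =>
            have := honly k hki
            exact ⟨(hz k).1, by linarith⟩
        have hπne : π i ≠ 0 := ne_of_gt (hπpos i)
        have hane : a ≠ 0 := ne_of_gt hapos
        have h1 : π i / (1 - Function.update z i t i) = a := by
          rw [Function.update_self, htd]
          have h2 : 1 - (1 - π i / a) = π i / a := by ring
          rw [h2]
          field_simp
        have hcosty : ∑ j, (H (Function.update z i t) i j)^2*σ2 j
            = (a^2*σ2 i + C)/(a + B)^2 := by
          rw [hcost _ hyint i,
            hsum_split i (fun j => (π j / (1 - Function.update z i t j))^2*σ2 j),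
            hsum_split i (fun k => π k / (1 - Function.update z i t k))]
          have hsq : ∑ j ∈ univ.erase i,
              (π j / (1 - Function.update z i t j))^2*σ2 j = C := by
            rw [hC]
            apply Finset.sum_congr rfl
            intro j hj
            rw [Function.update_of_ne (Finset.mem_erase.1 hj).1]
          have hpl : ∑ j ∈ univ.erase i, π j / (1 - Function.update z i t j) = B := by
            rw [hB]
            apply Finset.sum_congr rfl
            intro j hj
            rw [Function.update_of_ne (Finset.mem_erase.1 hj).1]
          rw [h1, hsq, hpl]
        have hIneq := hNash i t htmem
        rw [hviz, hcosty] at hIneq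
        have hlt : (a^2*σ2 i + C)/(a + B)^2 < σ2 i := by
          rw [div_lt_iff₀ (pow_pos (by linarith : (0:ℝ) < a + B) 2)]
          have haB : a * (σ2 i * B) = π i * (σ2 i * B) + C := by
            rw [ha, add_mul, div_mul_cancel₀ C (ne_of_gt (mul_pos (hσ i) hBpos))]
          nlinarith [mul_pos (hπpos i) (mul_pos (hσ i) hBpos),
            mul_pos (hσ i) (mul_pos hBpos hBpos), hσ i, hBpos, hapos, hCpos]
        linarith
  · -- Z* ⇒ Nash
    rintro ⟨α, hα0, hαle, hzeq⟩
    intro i t ht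
    rw [Set.mem_Icc] at ht
    have hzi : ∀ k, 0 ≤ z k ∧ z k < 1 := by
      intro k
      refine ⟨(hz k).1, ?_⟩
      rw [hzeq k]
      have := mul_pos hα0 (mul_pos (hπpos k) (hσ k))
      linarith
    have h1z : ∀ k, (0:ℝ) < 1 - z k := fun k => by linarith [(hzi k).2]
    set w : Fin n → ℝ := fun k => π k / (1 - z k) with hw
    have hwpos : ∀ k, 0 < w k := fun k => div_pos (hπpos k) (h1z k)
    have hwc : ∀ k, w k * σ2 k = w i * σ2 i := by
      intro k
      have hk : 1 - z k = α * (π k * σ2 k) := by rw [hzeq k]; ring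
      have hi' : 1 - z i = α * (π i * σ2 i) := by rw [hzeq i]; ring
      rw [hw]
      simp only []
      rw [hk, hi']
      have h1 : α * (π k * σ2 k) ≠ 0 := by rw [← hk]; exact ne_of_gt (h1z k)
      have h2 : α * (π i * σ2 i) ≠ 0 := by rw [← hi']; exact ne_of_gt (h1z i)
      have h3 := (hπpos k).ne'; have h4 := (hσ k).ne'; have h5 := (hπpos i).ne'; have h6 := (hσ i).ne'
      field_simp
      try ring
    set B : ℝ := ∑ j ∈ univ.erase i, w j with hB
    set C : ℝ := ∑ j ∈ univ.erase i, (w j)^2 * σ2 j with hC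
    have hBpos : 0 < B := Finset.sum_pos (fun j _ => hwpos j) (herasene i)
    have hCeq : C = w i * σ2 i * B := by
      rw [hC, hB]
      calc ∑ j ∈ univ.erase i, (w j)^2*σ2 j
          = ∑ j ∈ univ.erase i, w j * (w i * σ2 i) := by
            apply Finset.sum_congr rfl; intro j _; rw [← hwc j]; ring
        _ = w i * σ2 i * (∑ j ∈ univ.erase i, w j) := by rw [← Finset.sum_mul]; try ring
    have hcostz : ∑ j, (H z i j)^2*σ2 j = ((w i)^2*σ2 i + C)/(w i + B)^2 := by
      rw [hcost z hzi i, hsum_split i (fun j => (π j/(1-z j))^2*σ2 j),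
        hsum_split i (fun k => π k/(1-z k))]
    rcases eq_or_lt_of_le ht.2 with ht1 | ht1
    · -- deviation to full stubbornness
      have hicc : ∀ k, Function.update z i t k ∈ Set.Icc (0:ℝ) 1 := by
        intro k
        rw [Function.update_apply]
        split
        · exact Set.mem_Icc.2 ⟨ht.1, ht.2⟩
        · exact hz k
      have hupd1 : Function.update z i t i = 1 := by
        rw [Function.update_self, ← ht1]
      rw [hstubcost (Function.update z i t) hicc i hupd1, hcostz]
      rw [div_le_iff₀ (pow_pos (by linarith [hwpos i, hBpos] : (0:ℝ) < w i + B) 2), hCeq]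
      nlinarith [hwpos i, hBpos, hσ i, mul_pos (mul_pos (hσ i) hBpos) hBpos,
        mul_pos (hσ i) (mul_pos (hwpos i) hBpos)]
    · -- interior deviation
      have hyint : ∀ k, 0 ≤ Function.update z i t k ∧ Function.update z i t k < 1 := by
        intro k
        rw [Function.update_apply]
        split
        · exact ⟨ht.1, ht1⟩
        · exact hzi k
      rw [hcostz, hcost _ hyint i,
        hsum_split i (fun j => (π j / (1 - Function.update z i t j))^2*σ2 j),
        hsum_split i (fun k => π k / (1 - Function.update z i t k))]
      have hsq : ∑ j ∈ univ.erase i, (π j / (1 - Function.update z i t j))^2*σ2 j = C := by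
        rw [hC]
        apply Finset.sum_congr rfl
        intro j hj
        rw [Function.update_of_ne (Finset.mem_erase.1 hj).1]
      have hpl : ∑ j ∈ univ.erase i, π j / (1 - Function.update z i t j) = B := by
        rw [hB]
        apply Finset.sum_congr rfl
        intro j hj
        rw [Function.update_of_ne (Finset.mem_erase.1 hj).1]
      rw [hsq, hpl, Function.update_self]
      have ha : 0 < π i / (1 - t) := div_pos (hπpos i) (by linarith)
      exact aux_opt (π i / (1 - t)) (w i) B (σ2 i) C ha (hwpos i) hBpos (hσ i) hCeq
end

section
/- Every self-confidence profile z ∈ [0,1]^n such that |S(z)| = 2 and σ_j² ≤ σ_i² for every j ∈ S(z) and every i ∈ V is a non-strict Nash equilibrium (a Nash equilibrium that is not a strict Nash equilibrium). -/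
/-!
Whenever `S(z)` is nonempty, `H(z)` has the unit vector `e_i` as the row of a stubborn agent `i`,
and each of its columns is `P`-harmonic off `S(z)`; the maximum principle for the irreducible `P`
then shows that `H(z)` depends on `S(z)` only and vanishes in the columns of non-stubborn agents.
Each row of `H(z)` is a probability vector, so `∑ⱼ H_ij² σ_j² ≤ min σ²` when `S(z)` consists of
agents of minimal variance. A non-stubborn agent therefore either leaves `H` unchanged or, by
becoming stubborn, pays `σ_i² ≥ min σ²`. A stubborn agent pays `σ_i²`; by giving up stubbornness
it copies the other stubborn agent, which has the same variance: this deviation costs exactly as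
much, so the equilibrium is not strict.
-/

open Matrix Filter Topology Finset

namespace Matrix

variable {ι : Type*} [Fintype ι] [DecidableEq ι]

theorem isClosed_rowStochastic {R : Type*} [Semiring R] [PartialOrder R] [IsOrderedRing R]
    [TopologicalSpace R] [IsTopologicalSemiring R] [OrderClosedTopology R] :
    IsClosed (rowStochastic R ι : Set (Matrix ι ι R)) := by
  have hnonneg : IsClosed {M : Matrix ι ι R | ∀ i j, 0 ≤ M i j} := by
    simp only [Set.ofPred_forall]
    exact isClosed_iInter fun i => isClosed_iInter fun j =>
      isClosed_le continuous_const ((continuous_apply j).comp (continuous_apply i))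
  have hrows : IsClosed {M : Matrix ι ι R | M *ᵥ 1 = 1} :=
    isClosed_eq (continuous_id.matrix_mulVec continuous_const) continuous_const
  exact hnonneg.inter hrows

theorem mem_rowStochastic_of_tendsto_pow {R : Type*} [Semiring R] [PartialOrder R]
    [IsOrderedRing R] [TopologicalSpace R] [IsTopologicalSemiring R] [OrderClosedTopology R]
    {Q L : Matrix ι ι R} (hQ : Q ∈ rowStochastic R ι)
    (hlim : Tendsto (fun t : ℕ => Q ^ t) atTop (𝓝 L)) : L ∈ rowStochastic R ι :=
  isClosed_rowStochastic.mem_of_tendsto hlim (Eventually.of_forall fun t => pow_mem hQ t)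

end Matrix

theorem mul_eq_of_tendsto_pow {M : Type*} [Monoid M] [TopologicalSpace M] [ContinuousMul M]
    [T2Space M] {Q L : M} (hlim : Tendsto (fun t : ℕ => Q ^ t) atTop (𝓝 L)) : Q * L = L := by
  have hshift : Tendsto (fun t : ℕ => Q * Q ^ t) atTop (𝓝 L) :=
    (hlim.comp (tendsto_add_atTop_nat 1)).congr fun t => pow_succ' Q t
  exact tendsto_nhds_unique (hlim.const_mul Q) hshift

section Harmonic

variable {ι : Type*} [Fintype ι] {P : Matrix ι ι ℝ} {S : Set ι} {d d' : ι → ℝ}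

def HarmonicOff (P : Matrix ι ι ℝ) (S : Set ι) (d : ι → ℝ) : Prop :=
  ∀ i ∉ S, (P *ᵥ d) i = d i

theorem HarmonicOff.sub (hd : HarmonicOff P S d) (hd' : HarmonicOff P S d') :
    HarmonicOff P S (d - d') := fun i hi => by
  rw [mulVec_sub, Pi.sub_apply, hd i hi, hd' i hi, Pi.sub_apply]

variable [DecidableEq ι]

theorem exists_pos_of_pow_succ_pos (hP : ∀ i j, 0 ≤ P i j) {q : ℕ} {i s : ι}
    (hpos : 0 < (P ^ (q + 1)) i s) : ∃ k, 0 < P i k ∧ 0 < (P ^ q) k s := by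
  rw [pow_succ', mul_apply] at hpos
  obtain ⟨k, -, hk⟩ := Finset.exists_lt_of_sum_lt (f := fun _ => (0 : ℝ)) (by simpa using hpos)
  exact ⟨k, (pos_and_pos_or_neg_and_neg_of_mul_pos hk).resolve_right
    fun h => (hP i k).not_gt h.1⟩

theorem eq_of_mulVec_eq_of_forall_le (hP : P ∈ rowStochastic ℝ ι) {i k : ι}
    (hmax : ∀ l, d l ≤ d i) (hi : (P *ᵥ d) i = d i) (hk : 0 < P i k) : d k = d i := by
  have hsum : ∑ l, P i l * (d i - d l) = 0 := by
    simp only [mul_sub, Finset.sum_sub_distrib, ← Finset.sum_mul,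
      sum_row_of_mem_rowStochastic hP, one_mul]
    rw [← hi]
    exact sub_self _
  have hterm := (Finset.sum_eq_zero_iff_of_nonneg fun l _ =>
    mul_nonneg (nonneg_of_mem_rowStochastic hP) (sub_nonneg.2 (hmax l))).1 hsum k (mem_univ k)
  linarith [(mul_eq_zero.1 hterm).resolve_left hk.ne']

theorem HarmonicOff.le_zero (hP : P ∈ rowStochastic ℝ ι) (hd : HarmonicOff P S d) {s : ι}
    (hs : s ∈ S) (hreach : ∀ i, ∃ m, 0 < (P ^ m) i s) (hS : ∀ i ∈ S, d i ≤ 0) (i : ι) :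
    d i ≤ 0 := by
  obtain ⟨i₀, -, hmax⟩ := Finset.exists_max_image univ d ⟨s, mem_univ s⟩
  suffices d i₀ ≤ 0 from (hmax i (mem_univ i)).trans this
  have hpath : ∀ q k, 0 < (P ^ q) k s → d k = d i₀ → d i₀ ≤ 0 := by
    intro q
    induction q with
    | zero =>
      intro k hpos hk
      obtain rfl : k = s := by
        by_contra hne
        simp [one_apply, hne] at hpos
      exact hk ▸ hS k hs
    | succ q ih =>
      intro k hpos hk
      by_cases hkS : k ∈ S
      · exact hk ▸ hS k hkS
      obtain ⟨l, hkl, hl⟩ :=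
        exists_pos_of_pow_succ_pos (fun _ _ => nonneg_of_mem_rowStochastic hP) hpos
      refine ih l hl ?_
      rw [← hk]
      exact eq_of_mulVec_eq_of_forall_le hP (fun l => hk ▸ hmax l (mem_univ l)) (hd k hkS) hkl
  obtain ⟨m, hm⟩ := hreach i₀
  exact hpath m i₀ hm rfl

theorem HarmonicOff.eq_of_eqOn (hP : P ∈ rowStochastic ℝ ι) (hd : HarmonicOff P S d)
    (hd' : HarmonicOff P S d') {s : ι} (hs : s ∈ S) (hreach : ∀ i, ∃ m, 0 < (P ^ m) i s)
    (heq : Set.EqOn d d' S) : d = d' := by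
  funext i
  have h₁ := (hd.sub hd').le_zero hP hs hreach (fun k hk => by simp [heq hk]) i
  have h₂ := (hd'.sub hd).le_zero hP hs hreach (fun k hk => by simp [heq hk]) i
  simp only [Pi.sub_apply] at h₁ h₂
  linarith

end Harmonic

section Cost

variable {ι : Type*} [Fintype ι] {x σ : ι → ℝ}

theorem sum_sq_mul_le (hx : ∀ j, 0 ≤ x j) (hx1 : ∑ j, x j = 1) (hσ : ∀ j, 0 ≤ σ j) {m : ℝ}
    (hm : ∀ j, x j ≠ 0 → σ j ≤ m) : ∑ j, x j ^ 2 * σ j ≤ m := by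
  calc ∑ j, x j ^ 2 * σ j ≤ ∑ j, x j * m := by
        refine Finset.sum_le_sum fun j _ => ?_
        rcases eq_or_ne (x j) 0 with hj | hj
        · simp [hj]
        have hxj : x j ≤ 1 := hx1 ▸ Finset.single_le_sum (fun k _ => hx k) (mem_univ j)
        calc x j ^ 2 * σ j = x j * (x j * σ j) := by ring
          _ ≤ 1 * (x j * σ j) := mul_le_mul_of_nonneg_right hxj (mul_nonneg (hx j) (hσ j))
          _ ≤ x j * m := by rw [one_mul]; exact mul_le_mul_of_nonneg_left (hm j hj) (hx j)
    _ = m := by rw [← Finset.sum_mul, hx1, one_mul]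

theorem sum_sq_mul_eq_of_eq_zero {c : ι} (hx1 : ∑ j, x j = 1) (hx : ∀ j, j ≠ c → x j = 0) :
    ∑ j, x j ^ 2 * σ j = σ c := by
  have hxc : x c = 1 := by rwa [Finset.sum_eq_single c (fun j _ hj => hx j hj) (by simp)] at hx1
  rw [Finset.sum_eq_single c (fun j _ hj => by simp [hx j hj]) (by simp), hxc]
  ring

end Cost

section Confidence

variable {ι : Type*} [Fintype ι] {P : Matrix ι ι ℝ} {z : ι → ℝ}

noncomputable def stubbornSet (z : ι → ℝ) : Finset ι := univ.filter fun i => z i = 1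

@[simp]
theorem mem_stubbornSet {i : ι} : i ∈ stubbornSet z ↔ z i = 1 := by
  simp [stubbornSet]

variable [DecidableEq ι]

def confidenceMatrix (P : Matrix ι ι ℝ) (z : ι → ℝ) : Matrix ι ι ℝ :=
  (1 - diagonal z) * P + diagonal z

theorem stubbornSet_update {i : ι} {t : ℝ} (ht : t ≠ 1) :
    stubbornSet (Function.update z i t) = (stubbornSet z).erase i := by
  ext k
  rcases eq_or_ne k i with rfl | hk <;> simp [*]

theorem exists_stubbornSet_update_eq_singleton (hcard : (stubbornSet z).card = 2) {i : ι}
    (hi : z i = 1) {t : ℝ} (ht : t ≠ 1) :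
    ∃ c, z c = 1 ∧ stubbornSet (Function.update z i t) = {c} := by
  obtain ⟨c, hc⟩ := card_eq_one.1 (show ((stubbornSet z).erase i).card = 1 by
    rw [card_erase_of_mem (mem_stubbornSet.2 hi), hcard])
  exact ⟨c, mem_stubbornSet.1 (mem_of_mem_erase (hc ▸ mem_singleton_self c)),
    (stubbornSet_update ht).trans hc⟩

theorem confidenceMatrix_mul_apply (M : Matrix ι ι ℝ) (i j : ι) :
    (confidenceMatrix P z * M) i j = (1 - z i) * (P * M) i j + z i * M i j := by
  simp only [confidenceMatrix, add_mul, sub_mul, one_mul, Matrix.mul_assoc,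
    Matrix.add_apply, Matrix.sub_apply, diagonal_mul]

theorem confidenceMatrix_mem_rowStochastic (hP : P ∈ rowStochastic ℝ ι)
    (hz : ∀ i, z i ∈ Set.Icc (0 : ℝ) 1) : confidenceMatrix P z ∈ rowStochastic ℝ ι := by
  have happly : ∀ i k,
      confidenceMatrix P z i k = (1 - z i) * P i k + z i * (1 : Matrix ι ι ℝ) i k :=
    fun i k => by simpa using confidenceMatrix_mul_apply (P := P) (z := z) 1 i k
  refine mem_rowStochastic_iff_sum.2 ⟨fun i k => ?_, fun i => ?_⟩
  · rw [happly]
    exact add_nonneg (mul_nonneg (sub_nonneg.2 (hz i).2) (nonneg_of_mem_rowStochastic hP))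
      (mul_nonneg (hz i).1 (nonneg_of_mem_rowStochastic (one_mem _)))
  · simp only [happly, Finset.sum_add_distrib, ← Finset.mul_sum, sum_row_of_mem_rowStochastic hP,
      one_apply, Finset.sum_ite_eq, mem_univ, if_true]
    ring

theorem confidenceMatrix_pow_apply_of_eq_one {i : ι} (hi : z i = 1) (t : ℕ) (j : ι) :
    (confidenceMatrix P z ^ t) i j = (1 : Matrix ι ι ℝ) i j := by
  induction t with
  | zero => rfl
  | succ t ih => rw [pow_succ', confidenceMatrix_mul_apply, hi, ih]; ring

variable {L L' : Matrix ι ι ℝ}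
  (hlim : Tendsto (fun t : ℕ => confidenceMatrix P z ^ t) atTop (𝓝 L))
include hlim

theorem limit_apply_of_eq_one {i : ι} (hi : z i = 1) (j : ι) :
    L i j = (1 : Matrix ι ι ℝ) i j := by
  have hentry := (hlim.apply_nhds i).apply_nhds j
  simp only [confidenceMatrix_pow_apply_of_eq_one hi] at hentry
  exact tendsto_nhds_unique hentry tendsto_const_nhds

theorem harmonicOff_limit_col (j : ι) :
    HarmonicOff P (stubbornSet z) fun k => L k j := by
  intro i hi
  have hQL : confidenceMatrix P z * L = L := mul_eq_of_tendsto_pow hlim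
  have hfix := congrFun₂ hQL i j
  rw [confidenceMatrix_mul_apply] at hfix
  have hzi : 1 - z i ≠ 0 := sub_ne_zero.2 (Ne.symm (by simpa using hi))
  have : (1 - z i) * ((P * L) i j - L i j) = 0 := by linarith
  exact sub_eq_zero.1 ((mul_eq_zero.1 this).resolve_left hzi)

theorem limit_apply_eq_zero (hP : P ∈ rowStochastic ℝ ι) (hirr : ∀ i j, ∃ m, 0 < (P ^ m) i j)
    (hS : (stubbornSet z).Nonempty) {j : ι} (hj : z j ≠ 1) (i : ι) : L i j = 0 := by
  obtain ⟨s, hs⟩ := hS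
  have hzero : HarmonicOff P (stubbornSet z) 0 := fun k _ => by simp
  refine congrFun ((harmonicOff_limit_col hlim j).eq_of_eqOn hP hzero hs (hirr · s) ?_) i
  intro k hk
  dsimp only
  rw [limit_apply_of_eq_one hlim (mem_stubbornSet.1 hk), one_apply_ne, Pi.zero_apply]
  rintro rfl
  exact hj (mem_stubbornSet.1 hk)

theorem limit_eq_of_stubbornSet_eq {z' : ι → ℝ}
    (hlim' : Tendsto (fun t : ℕ => confidenceMatrix P z' ^ t) atTop (𝓝 L'))
    (hP : P ∈ rowStochastic ℝ ι) (hirr : ∀ i j, ∃ m, 0 < (P ^ m) i j)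
    (hS : (stubbornSet z).Nonempty) (hzz' : stubbornSet z = stubbornSet z') : L = L' := by
  obtain ⟨s, hs⟩ := hS
  ext i j
  refine congrFun ((harmonicOff_limit_col hlim j).eq_of_eqOn (d' := fun k => L' k j) hP ?_ hs
    (hirr · s) ?_) i
  · exact hzz' ▸ harmonicOff_limit_col hlim' j
  · intro k hk
    dsimp only
    rw [limit_apply_of_eq_one hlim (mem_stubbornSet.1 hk),
      limit_apply_of_eq_one hlim' (mem_stubbornSet.1 (hzz' ▸ hk))]

theorem sum_limit_sq_mul_of_eq_one (σ : ι → ℝ) {i : ι} (hi : z i = 1) :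
    ∑ j, L i j ^ 2 * σ j = σ i :=
  sum_sq_mul_eq_of_eq_zero (by simp [limit_apply_of_eq_one hlim hi, one_apply])
    fun j hj => by rw [limit_apply_of_eq_one hlim hi, one_apply_ne hj.symm]

theorem sum_limit_sq_mul_of_stubbornSet_eq_singleton (hP : P ∈ rowStochastic ℝ ι)
    (hz : ∀ i, z i ∈ Set.Icc (0 : ℝ) 1) (hirr : ∀ i j, ∃ m, 0 < (P ^ m) i j) (σ : ι → ℝ)
    {c : ι} (hc : stubbornSet z = {c}) (i : ι) : ∑ j, L i j ^ 2 * σ j = σ c := by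
  have hL := mem_rowStochastic_of_tendsto_pow (confidenceMatrix_mem_rowStochastic hP hz) hlim
  refine sum_sq_mul_eq_of_eq_zero (sum_row_of_mem_rowStochastic hL i) fun j hj => ?_
  refine limit_apply_eq_zero hlim hP hirr (hc ▸ singleton_nonempty c) (fun hzj => hj ?_) i
  simpa [hc] using mem_stubbornSet.2 hzj

theorem sum_limit_sq_mul_le (hP : P ∈ rowStochastic ℝ ι) (hz : ∀ i, z i ∈ Set.Icc (0 : ℝ) 1)
    (hirr : ∀ i j, ∃ m, 0 < (P ^ m) i j) (hS : (stubbornSet z).Nonempty) {σ : ι → ℝ}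
    (hσ : ∀ j, 0 ≤ σ j) {m : ℝ} (hm : ∀ j ∈ stubbornSet z, σ j ≤ m) (i : ι) :
    ∑ j, L i j ^ 2 * σ j ≤ m := by
  have hL := mem_rowStochastic_of_tendsto_pow (confidenceMatrix_mem_rowStochastic hP hz) hlim
  refine sum_sq_mul_le (fun j => nonneg_of_mem_rowStochastic hL)
    (sum_row_of_mem_rowStochastic hL i) hσ fun j hj => hm j (mem_stubbornSet.2 ?_)
  by_contra hzj
  exact hj (limit_apply_eq_zero hlim hP hirr hS hzj i)

end Confidence

theorem stmt_18_general (n : ℕ)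
    (P : Matrix (Fin n) (Fin n) ℝ)
    (hPnn : ∀ i j, 0 ≤ P i j)
    (hProw : ∀ i, ∑ j, P i j = 1)
    (hPprim : ∃ m : ℕ, ∀ i j, 0 < (P ^ m) i j)
    (σ2 : Fin n → ℝ) (hσ : ∀ i, 0 < σ2 i)
    (H : (Fin n → ℝ) → Matrix (Fin n) (Fin n) ℝ)
    (hH : ∀ z : Fin n → ℝ, (∀ i, z i ∈ Set.Icc (0 : ℝ) 1) →
      ∀ i j, Tendsto
        (fun t : ℕ => (((1 - Matrix.diagonal z) * P + Matrix.diagonal z) ^ t) i j)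
        atTop (𝓝 (H z i j)))
    (z : Fin n → ℝ) (hz : ∀ i, z i ∈ Set.Icc (0 : ℝ) 1)
    (hcard : (Finset.univ.filter fun i => z i = 1).card = 2)
    (hmin : ∀ j, z j = 1 → ∀ i, σ2 j ≤ σ2 i) :
    (∀ i : Fin n, ∀ t ∈ Set.Icc (0 : ℝ) 1,
      ∑ j, (H z i j) ^ 2 * σ2 j ≤
        ∑ j, (H (Function.update z i t) i j) ^ 2 * σ2 j) ∧
    ¬ (∀ i : Fin n, ∀ t ∈ Set.Icc (0 : ℝ) 1, t ≠ z i →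
      ∑ j, (H z i j) ^ 2 * σ2 j <
        ∑ j, (H (Function.update z i t) i j) ^ 2 * σ2 j) := by
  have hP : P ∈ rowStochastic ℝ (Fin n) := mem_rowStochastic_iff_sum.2 ⟨hPnn, hProw⟩
  have hirr : ∀ i j, ∃ m, 0 < (P ^ m) i j := fun i j => hPprim.imp fun m hm => hm i j
  have hlim : ∀ w : Fin n → ℝ, (∀ i, w i ∈ Set.Icc (0 : ℝ) 1) →
      Tendsto (fun t : ℕ => confidenceMatrix P w ^ t) atTop (𝓝 (H w)) :=
    fun w hw => tendsto_pi_nhds.2 fun i => tendsto_pi_nhds.2 (hH w hw i)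
  have hupd : ∀ i, ∀ t ∈ Set.Icc (0 : ℝ) 1, ∀ k, Function.update z i t k ∈ Set.Icc (0 : ℝ) 1 :=
    fun i t ht k => by rcases eq_or_ne k i with rfl | hk <;> simp [*]
  have hS : (stubbornSet z).Nonempty := card_pos.1 (hcard.symm ▸ two_pos)
  -- the other stubborn agent becomes the only one, and its variance equals that of `i`
  have hrelease : ∀ i, z i = 1 → ∀ t ∈ Set.Icc (0 : ℝ) 1, t ≠ 1 →
      ∑ j, (H (Function.update z i t) i j) ^ 2 * σ2 j = ∑ j, (H z i j) ^ 2 * σ2 j := by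
    intro i hi t ht ht1
    obtain ⟨c, hc, hSc⟩ := exists_stubbornSet_update_eq_singleton hcard hi ht1
    rw [sum_limit_sq_mul_of_eq_one (hlim z hz) σ2 hi, sum_limit_sq_mul_of_stubbornSet_eq_singleton
      (hlim _ (hupd i t ht)) hP (hupd i t ht) hirr σ2 hSc]
    exact le_antisymm (hmin c hc i) (hmin i hi c)
  refine ⟨fun i t ht => ?_, fun hstrict => ?_⟩
  · rcases eq_or_ne t 1 with rfl | ht1
    · rw [sum_limit_sq_mul_of_eq_one (hlim _ (hupd i 1 ht)) σ2 (Function.update_self i 1 z)]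
      exact sum_limit_sq_mul_le (hlim z hz) hP hz hirr hS (fun j => (hσ j).le)
        (fun j hj => hmin j (mem_stubbornSet.1 hj) i) i
    by_cases hi : z i = 1
    · exact (hrelease i hi t ht ht1).ge
    · rw [limit_eq_of_stubbornSet_eq (hlim z hz) (hlim _ (hupd i t ht)) hP hirr hS
        (by rw [stubbornSet_update ht1, erase_eq_of_notMem (by simpa using hi)])]
  · obtain ⟨a, ha⟩ := hS
    exact (hstrict a 0 ⟨le_rfl, zero_le_one⟩ (by simp [mem_stubbornSet.1 ha])).ne'
      (hrelease a (mem_stubbornSet.1 ha) 0 ⟨le_rfl, zero_le_one⟩ zero_ne_one)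

/-- Every self-confidence profile `z ∈ [0,1]ⁿ` with `|S(z)| = 2` and
`σ_j² ≤ σ_i²` for every `j ∈ S(z)` and every agent `i` is a non-strict Nash
equilibrium (a Nash equilibrium that is not a strict Nash equilibrium). -/
theorem stmt_18 (n : ℕ) (hn : 2 ≤ n)
    (P : Matrix (Fin n) (Fin n) ℝ)
    (hPnn : ∀ i j, 0 ≤ P i j)
    (hProw : ∀ i, ∑ j, P i j = 1)
    (hPdiag : ∀ i, P i i = 0)
    (hPprim : ∃ m : ℕ, ∀ i j, 0 < (P ^ m) i j)
    (σ2 : Fin n → ℝ) (hσ : ∀ i, 0 < σ2 i)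
    (H : (Fin n → ℝ) → Matrix (Fin n) (Fin n) ℝ)
    (hH : ∀ z : Fin n → ℝ, (∀ i, z i ∈ Set.Icc (0 : ℝ) 1) →
      ∀ i j, Tendsto
        (fun t : ℕ => (((1 - Matrix.diagonal z) * P + Matrix.diagonal z) ^ t) i j)
        atTop (𝓝 (H z i j)))
    (z : Fin n → ℝ) (hz : ∀ i, z i ∈ Set.Icc (0 : ℝ) 1)
    (hcard : (Finset.univ.filter fun i => z i = 1).card = 2)
    (hmin : ∀ j, z j = 1 → ∀ i, σ2 j ≤ σ2 i) :
    (∀ i : Fin n, ∀ t ∈ Set.Icc (0 : ℝ) 1,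
      ∑ j, (H z i j) ^ 2 * σ2 j ≤
        ∑ j, (H (Function.update z i t) i j) ^ 2 * σ2 j) ∧
    ¬ (∀ i : Fin n, ∀ t ∈ Set.Icc (0 : ℝ) 1, t ≠ z i →
      ∑ j, (H z i j) ^ 2 * σ2 j <
        ∑ j, (H (Function.update z i t) i j) ^ 2 * σ2 j) :=
  stmt_18_general n P hPnn hProw hPprim σ2 hσ H hH z hz hcard hmin
end
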